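/- arXiv:2109.06690 — 6 statements merged into one kernel-verified Lean document; each statement's English description precedes it below -/
import Mathlib

section
/- For any three distinct points z₁, z₂, z₃ in the complex plane, the sum over all six permutations σ of {1,2,3} of 1/((z_{σ(2)}−z_{σ(1)}) · conj(z_{σ(3)}−z_{σ(1)})) equals 1/R(z₁,z₂,z₃)², where R(z₁,z₂,z₃) denotes the circumradius of the triangle with vertices z₁, z₂, z₃ (with R = ∞, i.e. the sum equal to 0, when the points are collinear). In particular this sum is a nonnegative real number. -/
set_option maxHeartbeats 1000000

open Complex

noncomputable def mengerCurvature (z₁ z₂ z₃ : ℂ) : ℝ :=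
  4 * (|((z₂ - z₁) * (starRingEnd ℂ) (z₃ - z₁)).im| / 2) /
    (dist z₁ z₂ * dist z₂ z₃ * dist z₃ z₁)

lemma melnikov_aux (a b u v : ℂ) (ha : a ≠ 0) (hb : b ≠ 0) (hab : a - b ≠ 0)
    (hu : u ≠ 0) (hv : v ≠ 0) (huv : u - v ≠ 0) :
    1 / (a * v) + 1 / (b * u) + 1 / (-a * (v - u)) + 1 / ((b - a) * -u) +
      1 / (-b * (u - v)) + 1 / ((a - b) * -v) =
      4 * (-(a * v - u * b) ^ 2 / 4) / (-a * -u * ((a - b) * (u - v)) * (b * v)) := by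
  have hba : b - a ≠ 0 := fun h => hab (by linear_combination -h)
  have hvu : v - u ≠ 0 := fun h => huv (by linear_combination -h)
  have n1 : a * v ≠ 0 := mul_ne_zero ha hv
  have n2 : b * u ≠ 0 := mul_ne_zero hb hu
  have n3 : -a * (v - u) ≠ 0 := mul_ne_zero (neg_ne_zero.mpr ha) hvu
  have n4 : (b - a) * -u ≠ 0 := mul_ne_zero hba (neg_ne_zero.mpr hu)
  have n5 : -b * (u - v) ≠ 0 := mul_ne_zero (neg_ne_zero.mpr hb) huv
  have n6 : (a - b) * -v ≠ 0 := mul_ne_zero hab (neg_ne_zero.mpr hv)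
  have nR : -a * -u * ((a - b) * (u - v)) * (b * v) ≠ 0 :=
    mul_ne_zero (mul_ne_zero (mul_ne_zero (neg_ne_zero.mpr ha) (neg_ne_zero.mpr hu))
      (mul_ne_zero hab huv)) (mul_ne_zero hb hv)
  rw [div_add_div _ _ n1 n2, div_add_div _ _ (mul_ne_zero n1 n2) n3,
    div_add_div _ _ (mul_ne_zero (mul_ne_zero n1 n2) n3) n4,
    div_add_div _ _ (mul_ne_zero (mul_ne_zero (mul_ne_zero n1 n2) n3) n4) n5,
    div_add_div _ _ (mul_ne_zero (mul_ne_zero (mul_ne_zero (mul_ne_zero n1 n2) n3) n4) n5) n6,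
    (by ring : (4:ℂ) * (-(a * v - u * b) ^ 2 / 4) = -(a * v - u * b) ^ 2),
    div_eq_div_iff (mul_ne_zero (mul_ne_zero (mul_ne_zero (mul_ne_zero (mul_ne_zero n1 n2) n3) n4) n5) n6) nR]
  ring

/-- Melnikov's identity: the sum over all six permutations σ of {1,2,3} of
`1/((z_{σ(2)}−z_{σ(1)})·conj(z_{σ(3)}−z_{σ(1)}))` equals `1/R(z₁,z₂,z₃)²`;
in particular this sum is a nonnegative real number. -/
theorem melnikov_identity (z₁ z₂ z₃ : ℂ)
    (h₁₂ : z₁ ≠ z₂) (h₁₃ : z₁ ≠ z₃) (h₂₃ : z₂ ≠ z₃) :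
    1 / ((z₂ - z₁) * (starRingEnd ℂ) (z₃ - z₁)) +
    1 / ((z₃ - z₁) * (starRingEnd ℂ) (z₂ - z₁)) +
    1 / ((z₁ - z₂) * (starRingEnd ℂ) (z₃ - z₂)) +
    1 / ((z₃ - z₂) * (starRingEnd ℂ) (z₁ - z₂)) +
    1 / ((z₁ - z₃) * (starRingEnd ℂ) (z₂ - z₃)) +
    1 / ((z₂ - z₃) * (starRingEnd ℂ) (z₁ - z₃)) =
      ((mengerCurvature z₁ z₂ z₃ ^ 2 : ℝ) : ℂ) := by
  have h12 : z₂ - z₁ ≠ 0 := sub_ne_zero.mpr h₁₂.symm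
  have h13 : z₃ - z₁ ≠ 0 := sub_ne_zero.mpr h₁₃.symm
  have h23 : z₂ - z₃ ≠ 0 := sub_ne_zero.mpr h₂₃
  have hd : ∀ z w : ℂ, dist z w ^ 2 = Complex.normSq (z - w) := fun z w => by
    rw [Complex.dist_eq, Complex.sq_norm]
  have key : (mengerCurvature z₁ z₂ z₃) ^ 2 =
      4 * (((z₂ - z₁) * (starRingEnd ℂ) (z₃ - z₁)).im) ^ 2 /
        (Complex.normSq (z₁ - z₂) * Complex.normSq (z₂ - z₃) * Complex.normSq (z₃ - z₁)) := by
    rw [mengerCurvature, div_pow, mul_pow, mul_pow, div_pow, mul_pow, _root_.sq_abs,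
      hd, hd, hd]
    ring
  rw [key]
  push_cast [← Complex.mul_conj]
  have him : (((((z₂ - z₁) * (starRingEnd ℂ) (z₃ - z₁)).im : ℝ)) : ℂ) ^ 2 =
      -((z₂ - z₁) * (starRingEnd ℂ) (z₃ - z₁) -
        (starRingEnd ℂ) (z₂ - z₁) * (z₃ - z₁)) ^ 2 / 4 := by
    have := Complex.sub_conj ((z₂ - z₁) * (starRingEnd ℂ) (z₃ - z₁))
    simp only [map_mul, Complex.conj_conj] at this
    have h2 : (((((z₂ - z₁) * (starRingEnd ℂ) (z₃ - z₁)).im : ℝ)) : ℂ) =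
        ((z₂ - z₁) * (starRingEnd ℂ) (z₃ - z₁) - (starRingEnd ℂ) (z₂ - z₁) * (z₃ - z₁)) / (2 * I) := by
      rw [this]
      have : (2 * I : ℂ) ≠ 0 := by simp [Complex.I_ne_zero]
      field_simp
      push_cast
      ring
    rw [h2, div_pow]
    rw [mul_pow, Complex.I_sq]
    ring
  rw [him]
  have e21 : z₁ - z₂ = -(z₂ - z₁) := by ring
  have e31 : z₁ - z₃ = -(z₃ - z₁) := by ring
  have e32 : z₃ - z₂ = (z₃ - z₁) - (z₂ - z₁) := by ring
  have e23 : z₂ - z₃ = (z₂ - z₁) - (z₃ - z₁) := by ring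
  rw [e21, e31, e32, e23]
  have hab : z₂ - z₁ - (z₃ - z₁) ≠ 0 := fun h => h23 (by linear_combination h)
  clear e21 e31 e32 e23 key him hd h23 h₁₂ h₁₃ h₂₃
  generalize hA : z₂ - z₁ = a at h12 hab ⊢
  generalize hB : z₃ - z₁ = b at h13 hab ⊢
  simp only [map_neg, map_sub]
  set u := (starRingEnd ℂ) a with hu'
  set v := (starRingEnd ℂ) b with hv'
  have hu : u ≠ 0 := (map_ne_zero _).mpr h12
  have hv : v ≠ 0 := (map_ne_zero _).mpr h13
  have huv : u - v ≠ 0 := by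
    rw [hu', hv', ← map_sub]; exact (map_ne_zero _).mpr hab
  clear_value u v
  linear_combination melnikov_aux a b u v h12 h13 hab hu hv huv
end

section
/- Let A : ℝ → ℝ with kernel K(x,y) = (A(y)−A(x))/(y−x)² for x ≠ y. Then for distinct reals x, y, z, the symmetrization S(x,y,z) = K(x,y)K(x,z) + K(y,x)K(y,z) + K(z,y)K(z,x) equals (((A(y)−A(x))/(y−x) − (A(z)−A(x))/(z−x))/(z−y))². In particular S(x,y,z) ≥ 0. -/
/-!
Writing `K(a,b) = slope A a b / (b - a)` with the symmetric first divided difference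
`slope A a b`, the symmetrization becomes a rational function of the three slopes of `A`
at `x, y, z`. These satisfy one linear relation, `slope A x z` being an affine combination of
`slope A x y` and `slope A y z`; eliminating `slope A x z` turns `S(x,y,z)` into the square of
the second divided difference `[x,y,z]A = (slope A x z - slope A x y) / (z - y)`.
-/

/-- Kernel of Calderón's first commutator: `K(x,y) = (A(y)−A(x))/(y−x)²`. -/
noncomputable def commKernel (A : ℝ → ℝ) (x y : ℝ) : ℝ := (A y - A x) / (y - x) ^ 2

theorem slope_symmetrization_eq_sq {𝕜 : Type*} [Field 𝕜] (f : 𝕜 → 𝕜) {x y z : 𝕜}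
    (hxy : x ≠ y) (hxz : x ≠ z) (hyz : y ≠ z) :
    slope f x y / (y - x) * (slope f x z / (z - x)) +
        slope f y x / (x - y) * (slope f y z / (z - y)) +
        slope f z y / (y - z) * (slope f z x / (x - z)) =
      ((slope f x y - slope f x z) / (z - y)) ^ 2 := by
  rw [slope_comm f y x, slope_comm f z y, slope_comm f z x,
    ← sub_div_sub_smul_slope_add_sub_div_sub_smul_slope f x y z, smul_eq_mul, smul_eq_mul]
  field_simp
  ring

theorem commKernel_eq_slope_div (A : ℝ → ℝ) (x y : ℝ) :
    commKernel A x y = slope A x y / (y - x) := by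
  rw [commKernel, slope_def_field, div_div, sq]

/-- The symmetrization `S(x,y,z) = K(x,y)K(x,z)+K(y,x)K(y,z)+K(z,y)K(z,x)` of the
first-commutator kernel equals the square of a divided difference; in particular it
is nonnegative. -/
theorem symmetrization_first_commutator (A : ℝ → ℝ) (x y z : ℝ)
    (hxy : x ≠ y) (hxz : x ≠ z) (hyz : y ≠ z) :
    commKernel A x y * commKernel A x z + commKernel A y x * commKernel A y z +
      commKernel A z y * commKernel A z x =
      (((A y - A x) / (y - x) - (A z - A x) / (z - x)) / (z - y)) ^ 2 ∧
    0 ≤ commKernel A x y * commKernel A x z + commKernel A y x * commKernel A y z +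
      commKernel A z y * commKernel A z x := by
  have key : commKernel A x y * commKernel A x z + commKernel A y x * commKernel A y z +
      commKernel A z y * commKernel A z x =
      (((A y - A x) / (y - x) - (A z - A x) / (z - x)) / (z - y)) ^ 2 := by
    simp only [commKernel_eq_slope_div, ← slope_def_field]
    exact slope_symmetrization_eq_sq A hxy hxz hyz
  exact ⟨key, key ▸ sq_nonneg _⟩
end

section
/- Let A : ℝ → ℝ be Lipschitz and let γ(x) = x + i·A(x) parametrize its graph. Then for pairwise distinct reals x, y, z, the inverse circumradius of the points γ(x), γ(y), γ(z) satisfies 1/R(γ(x),γ(y),γ(z)) ≤ 4·|((A(y)−A(x))/(y−x) − (A(z)−A(x))/(z−x))/(z−y)|, i.e., the Menger curvature of three points on a Lipschitz graph is controlled by the first-commutator symmetrized kernel. -/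
open Complex

/-- The parametrization `γ(x) = x + i·A(x)` of the graph of `A`. -/
noncomputable def graphMap (A : ℝ → ℝ) (x : ℝ) : ℂ := (x : ℂ) + Complex.I * (A x : ℂ)

/-- The Menger curvature of three points on a Lipschitz graph is controlled by the
symmetrized kernel of the first Calderón commutator. -/
theorem menger_le_commutator (A : ℝ → ℝ) (L : NNReal) (hA : LipschitzWith L A)
    (x y z : ℝ) (hxy : x ≠ y) (hxz : x ≠ z) (hyz : y ≠ z) :
    mengerCurvature (graphMap A x) (graphMap A y) (graphMap A z) ≤
      4 * |((A y - A x) / (y - x) - (A z - A x) / (z - x)) / (z - y)| := by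
  have hyx : y - x ≠ 0 := sub_ne_zero.2 (Ne.symm hxy)
  have hzx : z - x ≠ 0 := sub_ne_zero.2 (Ne.symm hxz)
  have hzy : z - y ≠ 0 := sub_ne_zero.2 (Ne.symm hyz)
  set M : ℝ := (A y - A x) * (z - x) - (y - x) * (A z - A x) with hM
  have hIm : ((graphMap A y - graphMap A x) *
      (starRingEnd ℂ) (graphMap A z - graphMap A x)).im = M := by
    simp [graphMap, Complex.mul_im, Complex.sub_im, Complex.sub_re, Complex.add_im,
      Complex.add_re, Complex.mul_re, hM]
    ring
  have hRHS : ((A y - A x) / (y - x) - (A z - A x) / (z - x)) / (z - y)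
      = M / ((y - x) * (z - x) * (z - y)) := by
    field_simp
    exact hM.symm
  have hd : ∀ a b : ℝ, |a - b| ≤ dist (graphMap A a) (graphMap A b) := by
    intro a b
    rw [Complex.dist_eq]
    have h : (graphMap A a - graphMap A b).re = a - b := by simp [graphMap]
    calc |a - b| = |(graphMap A a - graphMap A b).re| := by rw [h]
      _ ≤ ‖graphMap A a - graphMap A b‖ := Complex.abs_re_le_norm _
  have h1 : |x - y| ≤ dist (graphMap A x) (graphMap A y) := hd x y
  have h2 : |y - z| ≤ dist (graphMap A y) (graphMap A z) := hd y z
  have h3 : |z - x| ≤ dist (graphMap A z) (graphMap A x) := hd z x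
  have p1 : (0:ℝ) < |x - y| := abs_pos.2 (sub_ne_zero.2 hxy)
  have p2 : (0:ℝ) < |y - z| := abs_pos.2 (sub_ne_zero.2 hyz)
  have p3 : (0:ℝ) < |z - x| := abs_pos.2 hzx
  have hdpos : (0:ℝ) < |y - x| * |z - x| * |z - y| := by
    rw [abs_sub_comm y x, abs_sub_comm z y]
    exact mul_pos (mul_pos p1 p3) p2
  have hDd : |y - x| * |z - x| * |z - y| ≤
      dist (graphMap A x) (graphMap A y) * dist (graphMap A y) (graphMap A z) *
        dist (graphMap A z) (graphMap A x) := by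
    rw [abs_sub_comm y x, abs_sub_comm z y]
    calc |x - y| * |z - x| * |y - z| = |x - y| * |y - z| * |z - x| := by ring
      _ ≤ _ := by
        apply mul_le_mul (mul_le_mul h1 h2 (le_of_lt p2) dist_nonneg) h3 (le_of_lt p3)
        positivity
  unfold mengerCurvature
  rw [hIm, hRHS, abs_div, abs_mul, abs_mul]
  calc 4 * (|M| / 2) /
      (dist (graphMap A x) (graphMap A y) * dist (graphMap A y) (graphMap A z) *
        dist (graphMap A z) (graphMap A x))
      = 2 * |M| / (dist (graphMap A x) (graphMap A y) * dist (graphMap A y) (graphMap A z) *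
        dist (graphMap A z) (graphMap A x)) := by ring
    _ ≤ 2 * |M| / (|y - x| * |z - x| * |z - y|) := by
        apply div_le_div_of_nonneg_left _ hdpos hDd
        positivity
    _ ≤ 4 * |M| / (|y - x| * |z - x| * |z - y|) := by
        exact (div_le_div_iff_of_pos_right hdpos).2 (by nlinarith [abs_nonneg M])
    _ = 4 * (|M| / (|y - x| * |z - x| * |z - y|)) := by ring
end

section
/- Let E be the corner-quarters Cantor set in the unit square, with μ the natural probability measure assigning mass 4⁻ⁿ to each of the 4ⁿ generation-n squares of side 4⁻ⁿ. Then the Menger curvature of μ is infinite: ∭ 1/R(z,w,ζ)² dμ(z)dμ(w)dμ(ζ) = ∞. -/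
open Complex MeasureTheory
open scoped ENNReal

/-- The four contractions generating the corner-quarters Cantor set: each maps the
unit square onto one of its four corner squares of one-quarter side length. -/
noncomputable def cornerMap (i : Fin 4) (z : ℂ) : ℂ :=
  ![(0 : ℂ), (3/4 : ℂ), (3/4 : ℝ) * Complex.I, (3/4 : ℂ) + (3/4 : ℝ) * Complex.I] i + z / 4

/-- The closed unit square `[0,1] × [0,1]` in ℂ. -/
def unitSquare : Set ℂ := {z : ℂ | z.re ∈ Set.Icc (0 : ℝ) 1 ∧ z.im ∈ Set.Icc (0 : ℝ) 1}

/-- The generation-`n` squares of the corner-quarters Cantor construction, indexed by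
words of length `n` in four letters. -/
noncomputable def cantorSquare : List (Fin 4) → Set ℂ
  | [] => unitSquare
  | i :: w => cornerMap i '' cantorSquare w

noncomputable def cMap (w : List (Fin 4)) : ℂ → ℂ := w.foldr (fun i f => cornerMap i ∘ f) id |>.comp id

lemma cMap_nil : cMap [] = id := rfl
lemma cMap_cons (i : Fin 4) (w : List (Fin 4)) : cMap (i :: w) = cornerMap i ∘ cMap w := rfl

lemma cantorSquare_eq (w : List (Fin 4)) : cantorSquare w = cMap w '' unitSquare := by
  induction w with
  | nil => simp [cantorSquare, cMap_nil]
  | cons i w ih => rw [cantorSquare, ih, cMap_cons, Set.image_comp]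

lemma cantorSquare_append (w u : List (Fin 4)) :
    cantorSquare (w ++ u) = cMap w '' cantorSquare u := by
  induction w with
  | nil => simp [cMap_nil]
  | cons i w ih =>
    show cornerMap i '' cantorSquare (w ++ u) = _
    rw [ih, cMap_cons, Set.image_comp]

lemma cornerMap_mem_unitSquare {i : Fin 4} {z : ℂ} (hz : z ∈ unitSquare) :
    cornerMap i z ∈ unitSquare := by
  obtain ⟨⟨h1, h2⟩, h3, h4⟩ := hz
  fin_cases i <;>
    simp [cornerMap, unitSquare, Set.mem_Icc, Complex.add_re, Complex.add_im,
      Complex.div_re, Complex.div_im, Complex.normSq] <;>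
    constructor <;> constructor <;> nlinarith

lemma cantorSquare_subset_unit (w : List (Fin 4)) : cantorSquare w ⊆ unitSquare := by
  induction w with
  | nil => exact subset_rfl
  | cons i w ih =>
    rintro z ⟨y, hy, rfl⟩
    exact cornerMap_mem_unitSquare (ih hy)

lemma cantorSquare_append_subset (w u : List (Fin 4)) :
    cantorSquare (w ++ u) ⊆ cantorSquare w := by
  rw [cantorSquare_append, cantorSquare_eq w]
  exact Set.image_mono (cantorSquare_subset_unit u)

lemma cMap_affine (w : List (Fin 4)) : ∃ b : ℂ, ∀ z, cMap w z = b + z / (4 : ℝ) ^ w.length := by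
  induction w with
  | nil => exact ⟨0, by simp [cMap_nil]⟩
  | cons i w ih =>
    obtain ⟨b, hb⟩ := ih
    refine ⟨cornerMap i b, fun z => ?_⟩
    simp only [cMap_cons, Function.comp_apply, hb, cornerMap, List.length_cons]
    push_cast
    ring

noncomputable def cornerRe : Fin 4 → ℝ := ![0, 3/4, 0, 3/4]
noncomputable def cornerIm : Fin 4 → ℝ := ![0, 0, 3/4, 3/4]

lemma cornerMap_bounds {i : Fin 4} {y : ℂ} (hy : y ∈ unitSquare) :
    (cornerMap i y).re ∈ Set.Icc (cornerRe i) (cornerRe i + 1/4) ∧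
    (cornerMap i y).im ∈ Set.Icc (cornerIm i) (cornerIm i + 1/4) := by
  obtain ⟨⟨h1, h2⟩, h3, h4⟩ := hy
  fin_cases i <;>
    simp [cornerMap, cornerRe, cornerIm, unitSquare, Set.mem_Icc, Complex.add_re,
      Complex.add_im, Complex.div_re, Complex.div_im, Complex.normSq] <;>
    constructor <;> constructor <;> nlinarith

lemma corner_disjoint {i j : Fin 4} (hij : i ≠ j) {z : ℂ}
    (hi : z ∈ cornerMap i '' unitSquare) (hj : z ∈ cornerMap j '' unitSquare) : False := by
  obtain ⟨y, hy, rfl⟩ := hi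
  obtain ⟨x, hx, hxz⟩ := hj
  have Bi := cornerMap_bounds (i := i) hy
  have Bj := cornerMap_bounds (i := j) hx
  rw [hxz] at Bj
  obtain ⟨⟨a1, a2⟩, a3, a4⟩ := Bi
  obtain ⟨⟨b1, b2⟩, b3, b4⟩ := Bj
  fin_cases i <;> fin_cases j <;>
    simp_all [cornerRe, cornerIm] <;> linarith

lemma menger_base {z₁ z₂ z₃ : ℂ}
    (h1 : z₁ ∈ cornerMap 0 '' unitSquare) (h2 : z₂ ∈ cornerMap 1 '' unitSquare)
    (h3 : z₃ ∈ cornerMap 2 '' unitSquare) : 1/32 ≤ mengerCurvature z₁ z₂ z₃ := by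
  obtain ⟨y1, hy1, rfl⟩ := h1
  obtain ⟨y2, hy2, rfl⟩ := h2
  obtain ⟨y3, hy3, rfl⟩ := h3
  obtain ⟨⟨a1, a2⟩, a3, a4⟩ := cornerMap_bounds (i := 0) hy1
  obtain ⟨⟨b1, b2⟩, b3, b4⟩ := cornerMap_bounds (i := 1) hy2
  obtain ⟨⟨c1, c2⟩, c3, c4⟩ := cornerMap_bounds (i := 2) hy3
  simp only [cornerRe, cornerIm, Matrix.cons_val_zero, Matrix.cons_val_one, Matrix.head_cons,
    Matrix.cons_val_two, Matrix.tail_cons] at a1 a2 a3 a4 b1 b2 b3 b4 c1 c2 c3 c4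
  set p := cornerMap 0 y1
  set q := cornerMap 1 y2
  set r := cornerMap 2 y3
  have him : ((q - p) * (starRingEnd ℂ) (r - p)).im
      = (q.im - p.im) * (r.re - p.re) - (q.re - p.re) * (r.im - p.im) := by
    simp [Complex.mul_im, Complex.sub_re, Complex.sub_im]
    ring
  have hN : 3/16 ≤ |((q - p) * (starRingEnd ℂ) (r - p)).im| := by
    rw [him, abs_sub_comm, le_abs]
    left
    nlinarith
  have dub : ∀ u v : ℂ, |u.re - v.re| ≤ 1 → |u.im - v.im| ≤ 1 → dist u v ≤ 2 := by
    intro u v h h'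
    rw [Complex.dist_eq]
    calc ‖u - v‖ ≤ |(u-v).re| + |(u-v).im| := Complex.norm_le_abs_re_add_abs_im _
    _ ≤ 2 := by simp only [Complex.sub_re, Complex.sub_im]; linarith
  have dlbre : ∀ u v : ℂ, 1/2 ≤ |u.re - v.re| → 1/2 ≤ dist u v := by
    intro u v h
    rw [Complex.dist_eq]
    exact h.trans ((Complex.abs_re_le_norm _).trans_eq' (by simp [Complex.sub_re]))
  have dlbim : ∀ u v : ℂ, 1/2 ≤ |u.im - v.im| → 1/2 ≤ dist u v := by
    intro u v h
    rw [Complex.dist_eq]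
    exact h.trans ((Complex.abs_im_le_norm _).trans_eq' (by simp [Complex.sub_im]))
  have d12 : dist p q ≤ 2 := dub p q (by rw [abs_le]; constructor <;> linarith)
    (by rw [abs_le]; constructor <;> linarith)
  have d23 : dist q r ≤ 2 := dub q r (by rw [abs_le]; constructor <;> linarith)
    (by rw [abs_le]; constructor <;> linarith)
  have d31 : dist r p ≤ 2 := dub r p (by rw [abs_le]; constructor <;> linarith)
    (by rw [abs_le]; constructor <;> linarith)
  have e12 : 1/2 ≤ dist p q := dlbre p q (by rw [le_abs]; right; linarith)
  have e23 : 1/2 ≤ dist q r := dlbre q r (by rw [le_abs]; left; linarith)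
  have e31 : 1/2 ≤ dist r p := dlbim r p (by rw [le_abs]; left; linarith)
  have hDpos : 0 < dist p q * dist q r * dist r p := by positivity
  have hD8 : dist p q * dist q r * dist r p ≤ 8 := by
    have h4 := mul_le_mul d12 d23 dist_nonneg (by norm_num)
    have h8 := mul_le_mul h4 d31 dist_nonneg (by norm_num)
    linarith
  rw [mengerCurvature, le_div_iff₀ hDpos]
  nlinarith [abs_nonneg ((q - p) * (starRingEnd ℂ) (r - p)).im]

lemma menger_scale (b z₁ z₂ z₃ : ℂ) {r : ℝ} (hr : 0 < r) :
    mengerCurvature (b + z₁ / (r:ℂ)) (b + z₂ / (r:ℂ)) (b + z₃ / (r:ℂ))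
      = r * mengerCurvature z₁ z₂ z₃ := by
  have hd : ∀ u v : ℂ, dist (b + u / (r:ℂ)) (b + v / (r:ℂ)) = dist u v / r := by
    intro u v
    rw [Complex.dist_eq, Complex.dist_eq, show b + u/(r:ℂ) - (b + v/(r:ℂ)) = (u - v)/(r:ℂ) by ring,
      norm_div, Complex.norm_of_nonneg hr.le]
  have hnum : ((b + z₂/(r:ℂ)) - (b + z₁/(r:ℂ))) * (starRingEnd ℂ) ((b + z₃/(r:ℂ)) - (b + z₁/(r:ℂ)))
      = ((z₂ - z₁) * (starRingEnd ℂ) (z₃ - z₁)) / ((r:ℂ)*(r:ℂ)) := by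
    rw [show (b + z₂/(r:ℂ)) - (b + z₁/(r:ℂ)) = (z₂ - z₁)/(r:ℂ) by ring,
      show (b + z₃/(r:ℂ)) - (b + z₁/(r:ℂ)) = (z₃ - z₁)/(r:ℂ) by ring, map_div₀]
    simp [Complex.conj_ofReal]
    ring
  rw [mengerCurvature, mengerCurvature, hd, hd, hd, hnum]
  have him : (((z₂ - z₁) * (starRingEnd ℂ) (z₃ - z₁)) / ((r:ℂ)*(r:ℂ))).im
      = ((z₂ - z₁) * (starRingEnd ℂ) (z₃ - z₁)).im / (r*r) := by
    rw [show ((r:ℂ)*(r:ℂ)) = ((r*r : ℝ):ℂ) by push_cast; ring, Complex.div_ofReal_im]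
  rw [him, abs_div, abs_of_pos (by positivity : (0:ℝ) < r*r)]
  have hden : dist z₁ z₂ / r * (dist z₂ z₃ / r) * (dist z₃ z₁ / r)
      = dist z₁ z₂ * dist z₂ z₃ * dist z₃ z₁ / r^3 := by ring
  rw [hden]
  rcases eq_or_ne (dist z₁ z₂ * dist z₂ z₃ * dist z₃ z₁) 0 with h | h
  · rw [h]; simp
  · have hr' : r ≠ 0 := ne_of_gt hr
    field_simp

lemma unitSquare_compact : IsCompact unitSquare := by
  have hcl : IsClosed unitSquare := by
    have : unitSquare = Complex.re ⁻¹' Set.Icc 0 1 ∩ Complex.im ⁻¹' Set.Icc 0 1 := rfl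
    rw [this]
    exact (isClosed_Icc.preimage Complex.continuous_re).inter
      (isClosed_Icc.preimage Complex.continuous_im)
  refine Metric.isCompact_of_isClosed_isBounded hcl ?_
  refine (Metric.isBounded_iff_subset_closedBall 0).2 ⟨2, fun z hz => ?_⟩
  obtain ⟨⟨h1, h2⟩, h3, h4⟩ := hz
  simp only [Metric.mem_closedBall, Complex.dist_eq, sub_zero]
  calc ‖z‖ ≤ |z.re| + |z.im| := Complex.norm_le_abs_re_add_abs_im _
  _ ≤ 2 := by rw [_root_.abs_of_nonneg h1, _root_.abs_of_nonneg h3]; linarith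

lemma continuous_cornerMap (i : Fin 4) : Continuous (cornerMap i) := by
  unfold cornerMap; fun_prop

lemma cantorSquare_compact (w : List (Fin 4)) : IsCompact (cantorSquare w) := by
  induction w with
  | nil => exact unitSquare_compact
  | cons i w ih => exact ih.image (continuous_cornerMap i)

lemma cantorSquare_measurable (w : List (Fin 4)) : MeasurableSet (cantorSquare w) :=
  (cantorSquare_compact w).isClosed.measurableSet

lemma cMap_injective (w : List (Fin 4)) : Function.Injective (cMap w) := by
  obtain ⟨b, hb⟩ := cMap_affine w
  intro x y hxy
  rw [hb, hb] at hxy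
  have h4 : ((4:ℝ)^w.length : ℂ) ≠ 0 := by
    norm_cast
    positivity
  field_simp at hxy
  exact add_left_cancel hxy

lemma sibling_disjoint {w : List (Fin 4)} {i j : Fin 4} (hij : i ≠ j) {z : ℂ}
    (hi : z ∈ cantorSquare (w ++ [i])) (hj : z ∈ cantorSquare (w ++ [j])) : False := by
  rw [cantorSquare_append] at hi hj
  obtain ⟨x, hx, hxz⟩ := hi
  obtain ⟨y, hy, hyz⟩ := hj
  have : x = y := cMap_injective w (hxz.trans hyz.symm)
  subst this
  exact corner_disjoint hij hx hy

lemma list_split {α : Type*} [DecidableEq α] : ∀ (a b : List α), ¬ a <+: b → ¬ b <+: a →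
    ∃ (p : List α) (i j : α) (ta tb : List α), i ≠ j ∧ a = p ++ i :: ta ∧ b = p ++ j :: tb := by
  intro a
  induction a with
  | nil => intro b ha _; exact absurd (List.nil_prefix) ha
  | cons x a' ih =>
    intro b ha hb
    cases b with
    | nil => exact absurd (List.nil_prefix) hb
    | cons y b' =>
      by_cases hxy : x = y
      · subst hxy
        obtain ⟨p, i, j, ta, tb, hij, hA, hB⟩ :=
          ih b' (fun h => ha (List.cons_prefix_cons.2 ⟨rfl, h⟩))
            (fun h => hb (List.cons_prefix_cons.2 ⟨rfl, h⟩))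
        exact ⟨x :: p, i, j, ta, tb, hij, by simp [hA], by simp [hB]⟩
      · exact ⟨[], x, y, a', b', hxy, rfl, rfl⟩

lemma subset_sibling (p : List (Fin 4)) (i : Fin 4) (v : List (Fin 4)) :
    cantorSquare ((p ++ i :: v)) ⊆ cantorSquare (p ++ [i]) := by
  have : p ++ i :: v = (p ++ [i]) ++ v := by simp
  rw [this]
  exact cantorSquare_append_subset _ _

lemma regions_disjoint {a b : List (Fin 4)} (hab : a ≠ b) {z w ζ : ℂ}
    (ha0 : z ∈ cantorSquare (a ++ [0])) (ha1 : w ∈ cantorSquare (a ++ [1]))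
    (ha2 : ζ ∈ cantorSquare (a ++ [2]))
    (hb0 : z ∈ cantorSquare (b ++ [0])) (hb1 : w ∈ cantorSquare (b ++ [1]))
    (hb2 : ζ ∈ cantorSquare (b ++ [2])) : False := by
  by_cases hpre : a <+: b
  · obtain ⟨t, rfl⟩ := hpre
    cases t with
    | nil => simp at hab
    | cons i u =>
      by_cases hi : i = 0
      · subst hi
        have h1 : w ∈ cantorSquare (a ++ [0]) := by
          have := subset_sibling a 0 (u ++ [1])
          simp only [List.append_assoc] at hb1 ⊢
          exact this (by simpa using hb1)
        exact sibling_disjoint (show (1 : Fin 4) ≠ 0 by decide) ha1 h1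
      · have h1 : z ∈ cantorSquare (a ++ [i]) := by
          have := subset_sibling a i (u ++ [0])
          simp only [List.append_assoc] at hb0 ⊢
          exact this (by simpa using hb0)
        exact sibling_disjoint (show (0 : Fin 4) ≠ i from fun h => hi h.symm) ha0 h1
  · by_cases hpre' : b <+: a
    · obtain ⟨t, rfl⟩ := hpre'
      cases t with
      | nil => simp at hab
      | cons i u =>
        by_cases hi : i = 0
        · subst hi
          have h1 : w ∈ cantorSquare (b ++ [0]) := by
            have := subset_sibling b 0 (u ++ [1])
            simp only [List.append_assoc] at ha1 ⊢
            exact this (by simpa using ha1)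
          exact sibling_disjoint (show (1 : Fin 4) ≠ 0 by decide) hb1 h1
        · have h1 : z ∈ cantorSquare (b ++ [i]) := by
            have := subset_sibling b i (u ++ [0])
            simp only [List.append_assoc] at ha0 ⊢
            exact this (by simpa using ha0)
          exact sibling_disjoint (show (0 : Fin 4) ≠ i from fun h => hi h.symm) hb0 h1
    · obtain ⟨p, i, j, ta, tb, hij, rfl, rfl⟩ := list_split a b hpre hpre'
      have h1 : z ∈ cantorSquare (p ++ [i]) :=
        subset_sibling p i (ta ++ [0]) (by simpa [List.append_assoc] using ha0)
      have h2 : z ∈ cantorSquare (p ++ [j]) :=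
        subset_sibling p j (tb ++ [0]) (by simpa [List.append_assoc] using hb0)
      exact sibling_disjoint hij h1 h2

lemma tsum_le_of_single {ι : Type*} (f : ι → ENNReal) (g : ENNReal)
    (h1 : ∀ i, f i ≤ g) (h2 : ∀ i j, i ≠ j → f i = 0 ∨ f j = 0) : ∑' i, f i ≤ g := by
  by_cases hex : ∃ i, f i ≠ 0
  · obtain ⟨i₀, hi₀⟩ := hex
    have : ∀ j, j ≠ i₀ → f j = 0 := fun j hj => (h2 j i₀ hj).resolve_right hi₀
    rw [tsum_eq_single i₀ this]
    exact h1 i₀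
  · push_neg at hex
    simp [hex]

lemma cantorSquare_single (i : Fin 4) : cantorSquare [i] = cornerMap i '' unitSquare := by
  show cornerMap i '' cantorSquare [] = _
  rfl

lemma menger_lower {s : List (Fin 4)} {z w ζ : ℂ}
    (h0 : z ∈ cantorSquare (s ++ [0])) (h1 : w ∈ cantorSquare (s ++ [1]))
    (h2 : ζ ∈ cantorSquare (s ++ [2])) :
    (4:ℝ) ^ s.length / 32 ≤ mengerCurvature z w ζ := by
  rw [cantorSquare_append] at h0 h1 h2
  obtain ⟨z₀, hz₀, rfl⟩ := h0
  obtain ⟨w₀, hw₀, rfl⟩ := h1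
  obtain ⟨ζ₀, hζ₀, rfl⟩ := h2
  obtain ⟨b, hb⟩ := cMap_affine s
  rw [cantorSquare_single] at hz₀ hw₀ hζ₀
  have hr : (0:ℝ) < 4 ^ s.length := by positivity
  have hb' : ∀ z : ℂ, cMap s z = b + z / (((4:ℝ) ^ s.length : ℝ) : ℂ) := by
    intro z; rw [hb]; push_cast; ring
  rw [hb', hb', hb', menger_scale b z₀ w₀ ζ₀ hr]
  have hbase := menger_base hz₀ hw₀ hζ₀
  calc (4:ℝ)^s.length / 32 = 4^s.length * (1/32) := by ring
    _ ≤ 4^s.length * mengerCurvature z₀ w₀ ζ₀ := by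
        apply mul_le_mul_of_nonneg_left _ hr.le
        simpa using hbase

lemma ofReal_menger_bound (n : ℕ) {x : ℝ} (hx : (4:ℝ)^n/32 ≤ x) :
    (16:ℝ≥0∞)^n / 1024 ≤ ENNReal.ofReal (x^2) := by
  have h0 : ((4:ℝ)^n/32)^2 ≤ x^2 := by
    apply pow_le_pow_left₀ (by positivity) hx
  have he : ((4:ℝ)^n/32)^2 = 16^n/1024 := by
    rw [div_pow, ← pow_mul, show n*2 = 2*n by ring, pow_mul]
    norm_num
  have : (16:ℝ≥0∞)^n/1024 = ENNReal.ofReal ((16:ℝ)^n/1024) := by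
    rw [ENNReal.ofReal_div_of_pos (by norm_num), ENNReal.ofReal_pow (by norm_num)]
    norm_num
  rw [this]
  exact ENNReal.ofReal_le_ofReal (by linarith)

lemma gen_sum (n : ℕ) :
    ((4:ℝ≥0∞))^n * ((16:ℝ≥0∞)^n / 1024 * ((1/4 : ℝ≥0∞)^(n+1))^3) = 1/65536 := by
  have h4 : (ENNReal.ofReal (1/4) : ℝ≥0∞) = 1/4 := by
    rw [ENNReal.ofReal_div_of_pos (by norm_num)]
    norm_num
  have hq : ((1/4 : ℝ≥0∞))^(n+1) = ENNReal.ofReal ((1/4:ℝ)^(n+1)) := by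
    rw [ENNReal.ofReal_pow (by norm_num), h4]
  have h16 : ((16:ℝ≥0∞))^n = ENNReal.ofReal ((16:ℝ)^n) := by
    rw [ENNReal.ofReal_pow (by norm_num)]; norm_num
  have hfour : ((4:ℝ≥0∞))^n = ENNReal.ofReal ((4:ℝ)^n) := by
    rw [ENNReal.ofReal_pow (by norm_num)]; norm_num
  have h1024 : ((1024:ℝ≥0∞)) = ENNReal.ofReal ((1024:ℝ)) := by norm_num
  rw [hq, h16, hfour, h1024, ← ENNReal.ofReal_pow (by positivity),
    ← ENNReal.ofReal_div_of_pos (by norm_num), ← ENNReal.ofReal_mul (by positivity),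
    ← ENNReal.ofReal_mul (by positivity)]
  have : (4:ℝ)^n * ((16:ℝ)^n/1024 * ((1/4:ℝ)^(n+1))^3) = 1/65536 := by
    have e1 : (((1/4:ℝ))^(n+1))^3 = (1/64:ℝ)^n * (1/64) := by
      rw [← pow_mul, show (n+1)*3 = 3*n+3 by ring, pow_add, pow_mul]
      norm_num
    have e2 : (4:ℝ)^n * 16^n = 64^n := by rw [← mul_pow]; norm_num
    have e3 : (64:ℝ)^n * (1/64)^n = 1 := by rw [← mul_pow]; norm_num
    calc (4:ℝ)^n * ((16:ℝ)^n/1024 * ((1/4:ℝ)^(n+1))^3)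
        = ((4:ℝ)^n * 16^n) * ((1/64)^n * (1/64)) / 1024 := by rw [e1]; ring
      _ = ((64:ℝ)^n * (1/64)^n) * (1/64) / 1024 := by rw [e2]; ring
      _ = 1/65536 := by rw [e3]; norm_num
  rw [this]
  rw [ENNReal.ofReal_div_of_pos (by norm_num)]
  norm_num


/-- The Menger curvature of the natural probability measure on the corner-quarters
Cantor set (assigning mass `4⁻ⁿ` to each generation-`n` square) is infinite. -/
theorem cantor_menger_infinite (μ : Measure ℂ) (hprob : IsProbabilityMeasure μ)
    (hμ : ∀ w : List (Fin 4), μ (cantorSquare w) = (1/4 : ENNReal) ^ w.length) :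
    ∫⁻ z, ∫⁻ w, ∫⁻ ζ, ENNReal.ofReal (mengerCurvature z w ζ ^ 2) ∂μ ∂μ ∂μ = ⊤ := by
  classical
  set k : List (Fin 4) → ℝ≥0∞ := fun s => (16:ℝ≥0∞)^s.length / 1024 with hk
  set A : List (Fin 4) → Set ℂ := fun s => cantorSquare (s ++ [0]) with hA
  set B : List (Fin 4) → Set ℂ := fun s => cantorSquare (s ++ [1]) with hB
  set C : List (Fin 4) → Set ℂ := fun s => cantorSquare (s ++ [2]) with hC
  set g : List (Fin 4) → ℂ → ℂ → ℂ → ℝ≥0∞ := fun s z w ζ =>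
    (A s).indicator 1 z * (B s).indicator 1 w * (C s).indicator (fun _ => k s) ζ with hg
  have mA : ∀ s, MeasurableSet (A s) := fun s => cantorSquare_measurable _
  have mB : ∀ s, MeasurableSet (B s) := fun s => cantorSquare_measurable _
  have mC : ∀ s, MeasurableSet (C s) := fun s => cantorSquare_measurable _
  -- pointwise bound
  have key : ∀ z w ζ : ℂ, ∑' s, g s z w ζ ≤ ENNReal.ofReal (mengerCurvature z w ζ ^ 2) := by
    intro z w ζ
    apply tsum_le_of_single
    · intro s
      by_cases h0 : z ∈ A s
      · by_cases h1 : w ∈ B s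
        · by_cases h2 : ζ ∈ C s
          · rw [hg]
            simp only [Set.indicator_of_mem h0, Set.indicator_of_mem h1,
              Set.indicator_of_mem h2, Pi.one_apply, one_mul]
            exact ofReal_menger_bound s.length (menger_lower h0 h1 h2)
          · simp [hg, Set.indicator_of_notMem h2]
        · simp [hg, Set.indicator_of_notMem h1]
      · simp [hg, Set.indicator_of_notMem h0]
    · intro s t hst
      by_contra hcon
      push_neg at hcon
      obtain ⟨hs, ht⟩ := hcon
      have hz : z ∈ A s := by
        by_contra h; exact hs (by simp [hg, Set.indicator_of_notMem h])
      have hw : w ∈ B s := by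
        by_contra h; exact hs (by simp [hg, Set.indicator_of_notMem h])
      have hζ : ζ ∈ C s := by
        by_contra h; exact hs (by simp [hg, Set.indicator_of_notMem h])
      have hz' : z ∈ A t := by
        by_contra h; exact ht (by simp [hg, Set.indicator_of_notMem h])
      have hw' : w ∈ B t := by
        by_contra h; exact ht (by simp [hg, Set.indicator_of_notMem h])
      have hζ' : ζ ∈ C t := by
        by_contra h; exact ht (by simp [hg, Set.indicator_of_notMem h])
      exact regions_disjoint hst hz hw hζ hz' hw' hζ'
  -- integrate step by step
  have measCk : ∀ s, Measurable fun ζ => (C s).indicator (fun _ => k s) ζ :=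
    fun s => measurable_const.indicator (mC s)
  have stepA : ∀ z w : ℂ, ∫⁻ ζ, ∑' s, g s z w ζ ∂μ
      = ∑' s, (A s).indicator 1 z * (B s).indicator 1 w * (k s * μ (C s)) := by
    intro z w
    rw [lintegral_tsum (fun s => (((measCk s).const_mul _)).aemeasurable)]
    refine tsum_congr fun s => ?_
    rw [lintegral_const_mul _ (measCk s), lintegral_indicator_const (mC s)]
  have measB1 : ∀ s, Measurable fun w => (B s).indicator (1 : ℂ → ℝ≥0∞) w :=
    fun s => measurable_const.indicator (mB s)
  have stepB : ∀ z : ℂ, ∫⁻ w, ∑' s, (A s).indicator 1 z * (B s).indicator 1 w * (k s * μ (C s)) ∂μ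
      = ∑' s, (A s).indicator 1 z * μ (B s) * (k s * μ (C s)) := by
    intro z
    have meas : ∀ s, Measurable fun w =>
        (A s).indicator 1 z * (B s).indicator 1 w * (k s * μ (C s)) :=
      fun s => (((measB1 s).const_mul _).mul_const _)
    rw [lintegral_tsum (fun s => (meas s).aemeasurable)]
    refine tsum_congr fun s => ?_
    rw [lintegral_mul_const _ ((measB1 s).const_mul _),
      lintegral_const_mul _ (measB1 s), lintegral_indicator_one (mB s)]
  have measA1 : ∀ s, Measurable ((A s).indicator (1 : ℂ → ℝ≥0∞)) :=
    fun s => measurable_const.indicator (mA s)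
  have stepC : ∫⁻ z, ∑' s, (A s).indicator 1 z * μ (B s) * (k s * μ (C s)) ∂μ
      = ∑' s, μ (A s) * μ (B s) * (k s * μ (C s)) := by
    have meas : ∀ s, Measurable fun z =>
        (A s).indicator (1 : ℂ → ℝ≥0∞) z * μ (B s) * (k s * μ (C s)) :=
      fun s => ((measA1 s).mul_const _).mul_const _
    rw [lintegral_tsum (fun s => (meas s).aemeasurable)]
    refine tsum_congr fun s => ?_
    rw [lintegral_mul_const _ ((measA1 s).mul_const _),
      lintegral_mul_const _ (measA1 s),
      lintegral_indicator_one (mA s)]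
  -- the sum is infinite
  have hsum : (⊤ : ℝ≥0∞) ≤ ∑' s, μ (A s) * μ (B s) * (k s * μ (C s)) := by
    have hval : ∀ s : List (Fin 4), μ (A s) * μ (B s) * (k s * μ (C s))
        = (16:ℝ≥0∞)^s.length / 1024 * ((1/4 : ℝ≥0∞)^(s.length+1))^3 := by
      intro s
      have lA : (s ++ [(0 : Fin 4)]).length = s.length + 1 := by simp
      have lB : (s ++ [(1 : Fin 4)]).length = s.length + 1 := by simp
      have lC : (s ++ [(2 : Fin 4)]).length = s.length + 1 := by simp
      rw [hA, hB, hC, hμ, hμ, hμ, lA, lB, lC, hk]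
      ring
    calc (⊤ : ℝ≥0∞) = ∑' _ : ℕ, (1/65536 : ℝ≥0∞) :=
          (ENNReal.tsum_const_eq_top_of_ne_zero (by norm_num)).symm
      _ = ∑' n : ℕ, ∑' _ : Fin n → Fin 4,
            (16:ℝ≥0∞)^n / 1024 * ((1/4 : ℝ≥0∞)^(n+1))^3 := by
          refine tsum_congr fun n => ?_
          rw [tsum_fintype, Finset.sum_const, Finset.card_univ, Fintype.card_fun,
            Fintype.card_fin, Fintype.card_fin, nsmul_eq_mul]
          rw [show (((4^n : ℕ)) : ℝ≥0∞) = (4:ℝ≥0∞)^n by push_cast; ring, gen_sum n]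
      _ = ∑' p : Σ n : ℕ, (Fin n → Fin 4),
            (16:ℝ≥0∞)^(List.ofFn p.2).length / 1024
              * ((1/4 : ℝ≥0∞)^((List.ofFn p.2).length+1))^3 := by
          rw [ENNReal.tsum_sigma']
          exact tsum_congr fun n => tsum_congr fun f => by rw [List.length_ofFn]
      _ ≤ ∑' s : List (Fin 4), (16:ℝ≥0∞)^s.length / 1024 * ((1/4 : ℝ≥0∞)^(s.length+1))^3 := by
          apply ENNReal.tsum_comp_le_tsum_of_injective
          rintro ⟨n, f⟩ ⟨m, e⟩ h
          simp only at h
          have hnm : n = m := by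
            have := congrArg List.length h
            simpa using this
          subst hnm
          simp only [List.ofFn_inj] at h
          simp [h]
      _ = ∑' s, μ (A s) * μ (B s) * (k s * μ (C s)) := by
          exact (tsum_congr hval).symm
  refine top_le_iff.1 ?_
  calc (⊤ : ℝ≥0∞) ≤ ∑' s, μ (A s) * μ (B s) * (k s * μ (C s)) := hsum
    _ = ∫⁻ z, ∫⁻ w, ∫⁻ ζ, ∑' s, g s z w ζ ∂μ ∂μ ∂μ := by
        rw [← stepC]
        refine lintegral_congr fun z => ?_
        rw [← stepB z]
        exact lintegral_congr fun w => by rw [stepA z w]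
    _ ≤ ∫⁻ z, ∫⁻ w, ∫⁻ ζ, ENNReal.ofReal (mengerCurvature z w ζ ^ 2) ∂μ ∂μ ∂μ :=
        lintegral_mono fun z => lintegral_mono fun w => lintegral_mono fun ζ => key z w ζ
end

section
/- Fix an interval I ⊂ ℝ and ε > 0, and let K(x,y) = (A(y)−A(x))/(y−x)² for a Lipschitz A : ℝ → ℝ. Then ∫_I C_{1,ε}(χ_I)²(x) dx = (1/3)∭_{S_ε} S(x,y,z) dx dy dz + O(|I|), where C_{1,ε}(f)(x) = ∫_{y∈I, |y−x|>ε} K(x,y)f(y) dy, S_ε = {(x,y,z) ∈ I³ : |y−x|>ε, |z−x|>ε, |z−y|>ε}, S(x,y,z) = K(x,y)K(x,z)+K(y,x)K(y,z)+K(z,y)K(z,x), and the O(|I|) error is bounded by a constant (depending only on ‖A‖_Lip) times |I|. -/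
open MeasureTheory Set

set_option linter.unusedVariables false
open scoped Classical

namespace CommSym

lemma measurable_K {A : ℝ → ℝ} (hA : Continuous A) :
    Measurable fun p : ℝ × ℝ => commKernel A p.1 p.2 := by
  unfold commKernel
  exact (((hA.comp continuous_snd).sub (hA.comp continuous_fst)).measurable).div
    ((continuous_snd.sub continuous_fst).pow 2).measurable

lemma abs_K_le {L : NNReal} {A : ℝ → ℝ} (hA : LipschitzWith L A) (x y : ℝ) :
    |commKernel A x y| ≤ L / |y - x| := by
  rcases eq_or_ne y x with rfl | h
  · simp [commKernel]
  · have h0 : (0:ℝ) < |y - x| := abs_pos.mpr (sub_ne_zero.mpr h)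
    have h1 : |A y - A x| ≤ L * |y - x| := by
      have := hA.dist_le_mul y x
      simpa [Real.dist_eq] using this
    have h2 : |commKernel A x y| = |A y - A x| / |y - x| ^ 2 := by
      rw [commKernel, abs_div, abs_of_nonneg (sq_nonneg (y - x)), ← sq_abs]
    rw [h2, div_le_div_iff₀ (by positivity) h0]
    calc |A y - A x| * |y - x| ≤ (L * |y - x|) * |y - x| :=
          mul_le_mul_of_nonneg_right h1 (abs_nonneg _)
      _ = L * |y - x| ^ 2 := by ring

lemma vol_Icc_lt_top (a b : ℝ) : volume (Icc a b) < ⊤ := by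
  simp [Real.volume_Icc]

lemma integrable_box {a b M : ℝ} {f : ℝ → ℝ} (hm : AEStronglyMeasurable f volume)
    (h0 : ∀ x, x ∉ Icc a b → f x = 0) (hb : ∀ x, |f x| ≤ M) : Integrable f := by
  refine Integrable.mono' (g := (Icc a b).indicator fun _ => M) ?_ hm (ae_of_all _ fun x => ?_)
  · exact (integrableOn_const (vol_Icc_lt_top a b).ne).integrable_indicator
      measurableSet_Icc
  · by_cases hx : x ∈ Icc a b
    · simpa [Real.norm_eq_abs, indicator_of_mem hx] using hb x
    · simp [Real.norm_eq_abs, indicator_of_notMem hx, h0 x hx]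

lemma integrable_box2 {a b M : ℝ} {f : ℝ × ℝ → ℝ} (hm : AEStronglyMeasurable f volume)
    (h0 : ∀ p : ℝ × ℝ, p ∉ Icc a b ×ˢ Icc a b → f p = 0) (hb : ∀ p, |f p| ≤ M) :
    Integrable f := by
  have hvol : volume (Icc a b ×ˢ Icc a b) < ⊤ := by
    rw [Measure.volume_eq_prod, Measure.prod_prod]
    exact ENNReal.mul_lt_top (vol_Icc_lt_top a b) (vol_Icc_lt_top a b)
  refine Integrable.mono' (g := (Icc a b ×ˢ Icc a b).indicator fun _ => M) ?_ hm
    (ae_of_all _ fun p => ?_)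
  · exact (integrableOn_const hvol.ne).integrable_indicator
      (measurableSet_Icc.prod measurableSet_Icc)
  · by_cases hp : p ∈ Icc a b ×ˢ Icc a b
    · rw [Real.norm_eq_abs, indicator_of_mem hp]
      exact hb p
    · rw [Real.norm_eq_abs, indicator_of_notMem hp, h0 p hp]
      simp

lemma abs_integral_le_box {a b M : ℝ} (hab : a ≤ b) {h : ℝ → ℝ}
    (h0 : ∀ z, z ∉ Icc a b → h z = 0) (hb : ∀ z, |h z| ≤ M) :
    |∫ z, h z| ≤ M * (b - a) := by
  have heq : (fun z => h z) = (Icc a b).indicator h := by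
    funext z
    by_cases hz : z ∈ Icc a b
    · simp [indicator_of_mem hz]
    · simp [indicator_of_notMem hz, h0 z hz]
  have : ∫ z, h z = ∫ z in Icc a b, h z := by
    conv_lhs => rw [heq]
    exact integral_indicator measurableSet_Icc
  rw [this]
  have := norm_setIntegral_le_of_norm_le_const_ae (μ := volume) (s := Icc a b)
    (f := h) (C := M) (vol_Icc_lt_top a b) (ae_of_all _ fun z => by
      simpa [Real.norm_eq_abs] using hb z)
  rw [Real.volume_real_Icc_of_le hab] at this
  simpa [Real.norm_eq_abs] using this

lemma integrableOn_of_bound {a b M : ℝ} {f : ℝ → ℝ} {s : Set ℝ} (hm : MeasurableSet s)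
    (hsub : s ⊆ Icc a b) (hfm : AEStronglyMeasurable f volume)
    (hb : ∀ z ∈ s, |f z| ≤ M) : IntegrableOn f s := by
  have hvol : volume s < ⊤ := lt_of_le_of_lt (measure_mono hsub) (vol_Icc_lt_top a b)
  refine Integrable.mono' (g := fun _ => M) (integrableOn_const hvol.ne)
    (hfm.restrict) ?_
  exact (ae_restrict_iff' hm).mpr (ae_of_all _ fun z hz => by
    simpa [Real.norm_eq_abs] using hb z hz)

lemma hasDeriv_negInv (c t : ℝ) (ht : t ≠ c) :
    HasDerivAt (fun s => -(s - c)⁻¹) (((t - c) ^ 2)⁻¹) t := by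
  have h1 : HasDerivAt (fun s : ℝ => s - c) 1 t := (hasDerivAt_id t).sub_const c
  have h2 := (h1.inv (sub_ne_zero.mpr ht)).neg
  exact h2.congr_deriv (by ring)

lemma continuousOn_inv_sq {c : ℝ} {s : Set ℝ} (hs : ∀ t ∈ s, t ≠ c) :
    ContinuousOn (fun y : ℝ => ((y - c) ^ 2)⁻¹) s := by
  refine ContinuousOn.inv₀ ((continuousOn_id.sub continuousOn_const).pow 2) ?_
  exact fun t ht => pow_ne_zero 2 (sub_ne_zero.mpr (hs t ht))

lemma integral_Icc_inv_sq {c u v : ℝ} (hne : ∀ t ∈ uIcc u v, t ≠ c) (huv : u ≤ v) :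
    ∫ y in Icc u v, ((y - c) ^ 2)⁻¹ = (u - c)⁻¹ - (v - c)⁻¹ := by
  have hint : IntervalIntegrable (fun y => ((y - c) ^ 2)⁻¹) volume u v :=
    (continuousOn_inv_sq hne).intervalIntegrable
  have h := intervalIntegral.integral_eq_sub_of_hasDerivAt
    (f := fun s => -(s - c)⁻¹) (fun t ht => hasDeriv_negInv c t (hne t ht)) hint
  rw [integral_Icc_eq_integral_Ioc, ← intervalIntegral.integral_of_le huv, h]
  ring

lemma tail_bound {a b ε : ℝ} (hε : 0 < ε) (hab : a ≤ b) {x : ℝ} (hx : x ∈ Icc a b) :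
    IntegrableOn (fun y => ((y - x) ^ 2)⁻¹) {y | y ∈ Icc a b ∧ ε < |y - x|} ∧
    ∫ y in {y | y ∈ Icc a b ∧ ε < |y - x|}, ((y - x) ^ 2)⁻¹ ≤ 2 / ε := by
  set R := b - a + ε with hRdef
  have hR : ε ≤ R := by simp only [hRdef]; linarith
  have hRpos : 0 < R := lt_of_lt_of_le hε hR
  have hU : {y | y ∈ Icc a b ∧ ε < |y - x|} ⊆
      Icc (x - R) (x - ε) ∪ Icc (x + ε) (x + R) := by
    rintro y ⟨hyI, hyd⟩
    simp only [mem_Icc] at hyI hx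
    rcases le_total x y with hxy | hxy
    · right
      rw [abs_of_nonneg (by linarith)] at hyd
      simp only [mem_Icc]
      constructor <;> [linarith; linarith]
    · left
      rw [abs_of_nonpos (by linarith)] at hyd
      simp only [mem_Icc]
      constructor <;> [linarith; linarith]
  have hnel : ∀ t ∈ uIcc (x - R) (x - ε), t ≠ x := by
    intro t ht
    rw [uIcc_of_le (by linarith)] at ht
    simp only [mem_Icc] at ht
    intro h; rw [h] at ht; linarith [ht.2]
  have hner : ∀ t ∈ uIcc (x + ε) (x + R), t ≠ x := by
    intro t ht
    rw [uIcc_of_le (by linarith)] at ht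
    simp only [mem_Icc] at ht
    intro h; rw [h] at ht; linarith [ht.1]
  have hIl : IntegrableOn (fun y => ((y - x) ^ 2)⁻¹) (Icc (x - R) (x - ε)) := by
    refine ContinuousOn.integrableOn_compact isCompact_Icc ?_
    exact continuousOn_inv_sq (fun t ht => hnel t (by rwa [uIcc_of_le (by linarith)]))
  have hIr : IntegrableOn (fun y => ((y - x) ^ 2)⁻¹) (Icc (x + ε) (x + R)) := by
    refine ContinuousOn.integrableOn_compact isCompact_Icc ?_
    exact continuousOn_inv_sq (fun t ht => hner t (by rwa [uIcc_of_le (by linarith)]))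
  have hdisj : Disjoint (Icc (x - R) (x - ε)) (Icc (x + ε) (x + R)) := by
    rw [Set.disjoint_left]
    intro y hy1 hy2
    simp only [mem_Icc] at hy1 hy2
    linarith [hy1.2, hy2.1]
  have hIU : IntegrableOn (fun y => ((y - x) ^ 2)⁻¹)
      (Icc (x - R) (x - ε) ∪ Icc (x + ε) (x + R)) := hIl.union hIr
  have hIs : IntegrableOn (fun y => ((y - x) ^ 2)⁻¹) {y | y ∈ Icc a b ∧ ε < |y - x|} :=
    hIU.mono_set hU
  refine ⟨hIs, ?_⟩
  have h1 : ∫ y in {y | y ∈ Icc a b ∧ ε < |y - x|}, ((y - x) ^ 2)⁻¹ ≤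
      ∫ y in Icc (x - R) (x - ε) ∪ Icc (x + ε) (x + R), ((y - x) ^ 2)⁻¹ :=
    setIntegral_mono_set hIU (ae_of_all _ fun y => by positivity)
      (HasSubset.Subset.eventuallyLE hU)
  have h2 : ∫ y in Icc (x - R) (x - ε) ∪ Icc (x + ε) (x + R), ((y - x) ^ 2)⁻¹ =
      (∫ y in Icc (x - R) (x - ε), ((y - x) ^ 2)⁻¹) +
      ∫ y in Icc (x + ε) (x + R), ((y - x) ^ 2)⁻¹ :=
    setIntegral_union hdisj measurableSet_Icc hIl hIr
  rw [h2, integral_Icc_inv_sq hnel (by linarith), integral_Icc_inv_sq hner (by linarith)] at h1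
  have hval : (x - R - x)⁻¹ - (x - ε - x)⁻¹ + ((x + ε - x)⁻¹ - (x + R - x)⁻¹)
      = 2 / ε - 2 / R := by
    have : x - R - x = -R := by ring
    rw [this]
    have : x - ε - x = -ε := by ring
    rw [this]
    have : x + ε - x = ε := by ring
    rw [this]
    have : x + R - x = R := by ring
    rw [this, inv_neg, inv_neg, div_eq_mul_inv, div_eq_mul_inv]
    ring
  rw [hval] at h1
  have : 0 < 2 / R := by positivity
  linarith

lemma sD_const_bound {a b ε x y c : ℝ} (hε : 0 < ε) (hc : 0 ≤ c) :
    ∫ _z in {z | z ∈ Icc a b ∧ ε < |z - x| ∧ ¬ ε < |z - y|}, c ≤ 2 * ε * c := by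
  rw [setIntegral_const]
  have hsub : {z | z ∈ Icc a b ∧ ε < |z - x| ∧ ¬ ε < |z - y|} ⊆ Icc (y - ε) (y + ε) := by
    rintro z ⟨_, _, hz⟩
    have := abs_le.mp (not_lt.mp hz)
    simp only [mem_Icc]
    constructor <;> linarith [this.1, this.2]
  have hv : volume {z | z ∈ Icc a b ∧ ε < |z - x| ∧ ¬ ε < |z - y|} ≤ ENNReal.ofReal (2 * ε) :=
    le_trans (measure_mono hsub) (by rw [Real.volume_Icc]; apply le_of_eq; congr 1; ring)
  have ht : (volume {z | z ∈ Icc a b ∧ ε < |z - x| ∧ ¬ ε < |z - y|}).toReal ≤ 2 * ε :=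
    ENNReal.toReal_le_of_le_ofReal (by positivity) hv
  rw [smul_eq_mul]
  exact mul_le_mul_of_nonneg_right ht hc

lemma inv_sq_le {ε t : ℝ} (hε : 0 < ε) (h : ε < |t|) : (t ^ 2)⁻¹ ≤ (ε ^ 2)⁻¹ := by
  have h1 : ε ^ 2 ≤ t ^ 2 := by
    rw [← sq_abs t]
    exact pow_le_pow_left₀ hε.le h.le 2
  exact inv_anti₀ (by positivity) h1

lemma conv2 {P : ℝ → Prop} {Q : ℝ → ℝ → Prop} (hP : MeasurableSet {y | P y})
    (hQ : ∀ y, MeasurableSet {z | Q y z}) (W : ℝ → ℝ → ℝ) :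
    ∫ y in {y | P y}, ∫ z in {z | Q y z}, W y z
      = ∫ y, ∫ z, if P y ∧ Q y z then W y z else 0 := by
  rw [← integral_indicator hP]
  congr 1
  funext y
  by_cases hy : P y
  · rw [indicator_of_mem (show y ∈ {y | P y} from hy), ← integral_indicator (hQ y)]
    congr 1
    funext z
    by_cases hz : Q y z
    · rw [indicator_of_mem (show z ∈ {z | Q y z} from hz), if_pos ⟨hy, hz⟩]
    · rw [indicator_of_notMem (show z ∉ {z | Q y z} from hz), if_neg (fun h => hz h.2)]
  · rw [indicator_of_notMem (show y ∉ {y | P y} from hy)]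
    have h0 : (fun z => if P y ∧ Q y z then W y z else 0) = fun _ => (0:ℝ) := by
      funext z; exact if_neg (fun h => hy h.1)
    rw [h0, integral_zero]

lemma conv3 {P : ℝ → Prop} {Q : ℝ → ℝ → Prop} {Rr : ℝ → ℝ → ℝ → Prop}
    (hP : MeasurableSet {x | P x}) (hQ : ∀ x, MeasurableSet {y | Q x y})
    (hR : ∀ x y, MeasurableSet {z | Rr x y z}) (W : ℝ → ℝ → ℝ → ℝ) :
    ∫ x in {x | P x}, ∫ y in {y | Q x y}, ∫ z in {z | Rr x y z}, W x y z
      = ∫ x, ∫ y, ∫ z, if P x ∧ Q x y ∧ Rr x y z then W x y z else 0 := by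
  rw [← integral_indicator hP]
  congr 1
  funext x
  by_cases hx : P x
  · rw [indicator_of_mem (show x ∈ {x | P x} from hx), conv2 (hQ x) (hR x) (W x)]
    congr 1
    funext y
    congr 1
    funext z
    by_cases h : Q x y ∧ Rr x y z
    · rw [if_pos h, if_pos ⟨hx, h⟩]
    · rw [if_neg h, if_neg (fun hh => h hh.2)]
  · rw [indicator_of_notMem (show x ∉ {x | P x} from hx)]
    have h0 : ∀ y, (fun z => if P x ∧ Q x y ∧ Rr x y z then W x y z else 0)
        = fun _ => (0:ℝ) := fun y => funext fun z => if_neg fun h => hx h.1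
    symm
    have h1 : (fun y => ∫ z, if P x ∧ Q x y ∧ Rr x y z then W x y z else 0)
        = fun _ => (0:ℝ) := by
      funext y; rw [h0 y, integral_zero]
    rw [h1, integral_zero]

lemma swap12 (u : ℝ → ℝ → ℝ → ℝ)
    (h : Integrable (fun p : ℝ × ℝ => ∫ z, u p.1 p.2 z)
      ((volume : Measure ℝ).prod volume)) :
    (∫ x, ∫ y, ∫ z, u x y z) = ∫ x, ∫ y, ∫ z, u y x z :=
  integral_integral_swap h

lemma swap23 (u : ℝ → ℝ → ℝ → ℝ)
    (h : ∀ x, Integrable (fun p : ℝ × ℝ => u x p.1 p.2)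
      ((volume : Measure ℝ).prod volume)) :
    (∫ x, ∫ y, ∫ z, u x y z) = ∫ x, ∫ y, ∫ z, u x z y := by
  have h1 : ∀ x, (∫ y, ∫ z, u x y z) = ∫ y, ∫ z, u x z y :=
    fun x => integral_integral_swap (h x)
  exact congrArg (fun F => ∫ x, F x) (funext h1)

lemma swap2 (u : ℝ → ℝ → ℝ)
    (h : Integrable (fun p : ℝ × ℝ => u p.1 p.2) ((volume : Measure ℝ).prod volume)) :
    (∫ y, ∫ z, u y z) = ∫ y, ∫ z, u z y :=
  integral_integral_swap h

lemma meas_int {f : ℝ × ℝ → ℝ} (hf : Measurable f) :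
    Measurable fun x => ∫ y, f (x, y) :=
  hf.stronglyMeasurable.integral_prod_right'.measurable

lemma meas_int2 {f : (ℝ × ℝ) × ℝ → ℝ} (hf : Measurable f) :
    Measurable fun p : ℝ × ℝ => ∫ z, f (p, z) :=
  hf.stronglyMeasurable.integral_prod_right'.measurable

lemma amgm {p q : ℝ} (hp : 0 < p) (hq : 0 < q) :
    (p * q)⁻¹ ≤ 1 / 2 * ((p ^ 2)⁻¹ + (q ^ 2)⁻¹) := by
  rw [mul_inv, ← inv_pow, ← inv_pow]
  nlinarith [sq_nonneg (p⁻¹ - q⁻¹), inv_pos.mpr hp, inv_pos.mpr hq]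

lemma prod_bound {L : NNReal} {A : ℝ → ℝ} (hA : LipschitzWith L A) {ε x y z : ℝ}
    (hε : 0 < ε) (hy : ε < |y - x|) (hz : ε < |z - x|) :
    |commKernel A x y * commKernel A x z| ≤
      (L : ℝ) ^ 2 / 2 * (((y - x) ^ 2)⁻¹ + ((z - x) ^ 2)⁻¹) := by
  have hyp : (0:ℝ) < |y - x| := lt_trans hε hy
  have hzp : (0:ℝ) < |z - x| := lt_trans hε hz
  have h1 := abs_K_le hA x y
  have h2 := abs_K_le hA x z
  rw [abs_mul]
  calc |commKernel A x y| * |commKernel A x z|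
      ≤ (L / |y - x|) * (L / |z - x|) :=
        mul_le_mul h1 h2 (abs_nonneg _) (by positivity)
    _ = (L : ℝ) ^ 2 * (|y - x| * |z - x|)⁻¹ := by
        rw [div_mul_div_comm, div_eq_mul_inv]; ring_nf
    _ ≤ (L : ℝ) ^ 2 * (1 / 2 * ((|y - x| ^ 2)⁻¹ + (|z - x| ^ 2)⁻¹)) :=
        mul_le_mul_of_nonneg_left (amgm hyp hzp) (by positivity)
    _ = (L : ℝ) ^ 2 / 2 * (((y - x) ^ 2)⁻¹ + ((z - x) ^ 2)⁻¹) := by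
        rw [sq_abs, sq_abs]; ring

lemma abs_K_le' {L : NNReal} {A : ℝ → ℝ} (hA : LipschitzWith L A) {ε x y : ℝ}
    (hε : 0 < ε) (hy : ε < |y - x|) : |commKernel A x y| ≤ L / ε := by
  refine le_trans (abs_K_le hA x y) ?_
  exact div_le_div_of_nonneg_left (by positivity) hε hy.le |>.trans_eq rfl

lemma not_mem_prod {p : ℝ × ℝ} {s t : Set ℝ} (hp : p ∉ s ×ˢ t) : p.1 ∉ s ∨ p.2 ∉ t := by
  by_contra h
  push_neg at h
  exact hp (Set.mem_prod.mpr ⟨h.1, h.2⟩)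

lemma conv1 {Q : ℝ → Prop} (hQ : MeasurableSet {z | Q z}) (W : ℝ → ℝ) :
    ∫ z in {z | Q z}, W z = ∫ z, if Q z then W z else 0 := by
  rw [← integral_indicator hQ]
  refine congrArg (fun F : ℝ → ℝ => ∫ z, F z) (funext fun z => ?_)
  by_cases h : Q z
  · rw [indicator_of_mem (show z ∈ {z | Q z} from h), if_pos h]
  · rw [indicator_of_notMem (show z ∉ {z | Q z} from h), if_neg h]

lemma abs_setIntegral_le {a b M : ℝ} (hab : a ≤ b) (hM : 0 ≤ M) {s : Set ℝ}
    (hsub : s ⊆ Icc a b) (hsm : MeasurableSet s) {f : ℝ → ℝ}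
    (hb : ∀ z ∈ s, |f z| ≤ M) : |∫ z in s, f z| ≤ M * (b - a) := by
  have hs : volume s < ⊤ := lt_of_le_of_lt (measure_mono hsub) (vol_Icc_lt_top a b)
  have h := norm_setIntegral_le_of_norm_le_const (μ := volume) hs
    (fun z hz => le_trans (le_of_eq (Real.norm_eq_abs (f z))) (hb z hz))
  rw [Real.norm_eq_abs] at h
  refine le_trans h (mul_le_mul_of_nonneg_left ?_ hM)
  have h2 : (volume s).toReal ≤ (volume (Icc a b)).toReal :=
    ENNReal.toReal_mono (vol_Icc_lt_top a b).ne (measure_mono hsub)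
  rwa [Real.volume_Icc, ENNReal.toReal_ofReal (sub_nonneg.mpr hab)] at h2

lemma msetP {α : Type*} [MeasurableSpace α] [TopologicalSpace α] [OpensMeasurableSpace α]
    {f : α → ℝ} (hf : Continuous f) (ε : ℝ) : MeasurableSet {p | ε < |f p|} :=
  (isOpen_lt continuous_const hf.abs).measurableSet

lemma msetP' {α : Type*} [MeasurableSpace α] [TopologicalSpace α] [OpensMeasurableSpace α]
    {f : α → ℝ} (hf : Continuous f) (ε : ℝ) : MeasurableSet {p | ¬ ε < |f p|} :=
  (msetP hf ε).compl

section Nice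

variable {a b M : ℝ} {g : ℝ → ℝ → ℝ → ℝ}

lemma nice_int_z (hm : Measurable fun q : (ℝ × ℝ) × ℝ => g q.1.1 q.1.2 q.2)
    (h0 : ∀ x y z, x ∉ Icc a b ∨ y ∉ Icc a b ∨ z ∉ Icc a b → g x y z = 0)
    (hb : ∀ x y z, |g x y z| ≤ M) (x y : ℝ) : Integrable (fun z => g x y z) := by
  refine integrable_box (a := a) (b := b) ?_ (fun z hz => h0 x y z (Or.inr (Or.inr hz)))
    (fun z => hb x y z)
  exact (hm.comp ((measurable_const.prodMk measurable_const).prodMk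
    measurable_id)).aestronglyMeasurable

lemma nice_abs_intz_le (hab : a ≤ b)
    (h0 : ∀ x y z, x ∉ Icc a b ∨ y ∉ Icc a b ∨ z ∉ Icc a b → g x y z = 0)
    (hb : ∀ x y z, |g x y z| ≤ M) (x y : ℝ) : |∫ z, g x y z| ≤ M * (b - a) :=
  abs_integral_le_box hab (fun z hz => h0 x y z (Or.inr (Or.inr hz))) (fun z => hb x y z)

lemma nice_int_yz (hm : Measurable fun q : (ℝ × ℝ) × ℝ => g q.1.1 q.1.2 q.2)
    (h0 : ∀ x y z, x ∉ Icc a b ∨ y ∉ Icc a b ∨ z ∉ Icc a b → g x y z = 0)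
    (hb : ∀ x y z, |g x y z| ≤ M) (x : ℝ) :
    Integrable (fun p : ℝ × ℝ => g x p.1 p.2) ((volume : Measure ℝ).prod volume) := by
  refine integrable_box2 (a := a) (b := b) ?_ (fun p hp => ?_) (fun p => hb x p.1 p.2)
  · exact (hm.comp (((measurable_const.prodMk measurable_fst)).prodMk
      measurable_snd)).aestronglyMeasurable
  · rcases not_mem_prod hp with h | h
    · exact h0 x p.1 p.2 (Or.inr (Or.inl h))
    · exact h0 x p.1 p.2 (Or.inr (Or.inr h))

lemma nice_int_xz (hm : Measurable fun q : (ℝ × ℝ) × ℝ => g q.1.1 q.1.2 q.2)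
    (h0 : ∀ x y z, x ∉ Icc a b ∨ y ∉ Icc a b ∨ z ∉ Icc a b → g x y z = 0)
    (hb : ∀ x y z, |g x y z| ≤ M) (y : ℝ) :
    Integrable (fun p : ℝ × ℝ => g p.1 y p.2) ((volume : Measure ℝ).prod volume) := by
  refine integrable_box2 (a := a) (b := b) ?_ (fun p hp => ?_) (fun p => hb p.1 y p.2)
  · exact (hm.comp (((measurable_fst.prodMk measurable_const)).prodMk
      measurable_snd)).aestronglyMeasurable
  · rcases not_mem_prod hp with h | h
    · exact h0 p.1 y p.2 (Or.inl h)
    · exact h0 p.1 y p.2 (Or.inr (Or.inr h))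

lemma nice_int_pair (hab : a ≤ b) (hm : Measurable fun q : (ℝ × ℝ) × ℝ => g q.1.1 q.1.2 q.2)
    (h0 : ∀ x y z, x ∉ Icc a b ∨ y ∉ Icc a b ∨ z ∉ Icc a b → g x y z = 0)
    (hb : ∀ x y z, |g x y z| ≤ M) :
    Integrable (fun p : ℝ × ℝ => ∫ z, g p.1 p.2 z) ((volume : Measure ℝ).prod volume) := by
  have hM : 0 ≤ M := le_trans (abs_nonneg _) (hb 0 0 0)
  refine integrable_box2 (a := a) (b := b) (meas_int2 hm).aestronglyMeasurable
    (fun p hp => ?_) (fun p => nice_abs_intz_le hab h0 hb p.1 p.2)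
  have hz : ∀ z, g p.1 p.2 z = 0 := by
    intro z
    rcases not_mem_prod hp with h | h
    · exact h0 p.1 p.2 z (Or.inl h)
    · exact h0 p.1 p.2 z (Or.inr (Or.inl h))
  simp only [hz, integral_zero]

lemma nice_int_first (hab : a ≤ b) (hm : Measurable fun q : (ℝ × ℝ) × ℝ => g q.1.1 q.1.2 q.2)
    (h0 : ∀ x y z, x ∉ Icc a b ∨ y ∉ Icc a b ∨ z ∉ Icc a b → g x y z = 0)
    (hb : ∀ x y z, |g x y z| ≤ M) :
    Integrable (fun p : ℝ × ℝ => ∫ t, g t p.1 p.2) ((volume : Measure ℝ).prod volume) := by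
  have hm' : Measurable fun q : (ℝ × ℝ) × ℝ => g q.2 q.1.1 q.1.2 :=
    hm.comp ((measurable_snd.prodMk (measurable_fst.comp measurable_fst)).prodMk
      ((measurable_snd.comp measurable_fst)))
  refine integrable_box2 (a := a) (b := b) (M := M * (b - a))
    (meas_int2 hm').aestronglyMeasurable (fun p hp => ?_) (fun p => ?_)
  · have hz : ∀ t, g t p.1 p.2 = 0 := by
      intro t
      rcases not_mem_prod hp with h | h
      · exact h0 t p.1 p.2 (Or.inr (Or.inl h))
      · exact h0 t p.1 p.2 (Or.inr (Or.inr h))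
    simp only [hz, integral_zero]
  · exact abs_integral_le_box hab (fun t ht => h0 t p.1 p.2 (Or.inl ht)) (fun t => hb t p.1 p.2)

lemma nice_int_y (hab : a ≤ b) (hm : Measurable fun q : (ℝ × ℝ) × ℝ => g q.1.1 q.1.2 q.2)
    (h0 : ∀ x y z, x ∉ Icc a b ∨ y ∉ Icc a b ∨ z ∉ Icc a b → g x y z = 0)
    (hb : ∀ x y z, |g x y z| ≤ M) (x : ℝ) : Integrable (fun y => ∫ z, g x y z) := by
  refine integrable_box (a := a) (b := b) ?_ (fun y hy => ?_)
    (fun y => nice_abs_intz_le hab h0 hb x y)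
  · exact ((meas_int2 hm).comp (measurable_const.prodMk measurable_id)).aestronglyMeasurable
  · have hz : ∀ z, g x y z = 0 := fun z => h0 x y z (Or.inr (Or.inl hy))
    simp only [hz, integral_zero]

lemma nice_int_x (hab : a ≤ b) (hm : Measurable fun q : (ℝ × ℝ) × ℝ => g q.1.1 q.1.2 q.2)
    (h0 : ∀ x y z, x ∉ Icc a b ∨ y ∉ Icc a b ∨ z ∉ Icc a b → g x y z = 0)
    (hb : ∀ x y z, |g x y z| ≤ M) : Integrable (fun x => ∫ y, ∫ z, g x y z) := by
  have hM : 0 ≤ M := le_trans (abs_nonneg _) (hb 0 0 0)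
  refine integrable_box (a := a) (b := b) (M := M * (b - a) * (b - a)) ?_
    (fun x hx => ?_) (fun x => ?_)
  · exact (meas_int (f := fun p : ℝ × ℝ => ∫ z, g p.1 p.2 z)
      (meas_int2 hm)).aestronglyMeasurable
  · have hz : ∀ y z, g x y z = 0 := fun y z => h0 x y z (Or.inl hx)
    simp only [hz, integral_zero]
  · exact abs_integral_le_box hab
      (fun y hy => by
        have hz : ∀ z, g x y z = 0 := fun z => h0 x y z (Or.inr (Or.inl hy))
        simp only [hz, integral_zero])
      (fun y => nice_abs_intz_le hab h0 hb x y)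

lemma nice_triple_eq_swap12 (hab : a ≤ b)
    (hm : Measurable fun q : (ℝ × ℝ) × ℝ => g q.1.1 q.1.2 q.2)
    (h0 : ∀ x y z, x ∉ Icc a b ∨ y ∉ Icc a b ∨ z ∉ Icc a b → g x y z = 0)
    (hb : ∀ x y z, |g x y z| ≤ M) :
    (∫ x, ∫ y, ∫ z, g x y z) = ∫ x, ∫ y, ∫ z, g y x z :=
  swap12 g (nice_int_pair hab hm h0 hb)

end Nice

noncomputable def ind (c : Prop) (r : ℝ) : ℝ := if c then r else 0

lemma ind_pos {c : Prop} (h : c) (r : ℝ) : ind c r = r := by rw [ind, if_pos h]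

lemma ind_neg {c : Prop} (h : ¬ c) (r : ℝ) : ind c r = 0 := by rw [ind, if_neg h]

lemma measurable_ind {α : Type*} [MeasurableSpace α] {p : α → Prop}
    (hp : MeasurableSet {a | p a}) {f : α → ℝ} (hf : Measurable f) :
    Measurable fun a => ind (p a) (f a) :=
  Measurable.ite hp hf measurable_const

lemma abs_ind_le {c : Prop} {r M : ℝ} (hM : 0 ≤ M) (h : c → |r| ≤ M) :
    |ind c r| ≤ M := by
  by_cases hc : c
  · rw [ind_pos hc]; exact h hc
  · rw [ind_neg hc, abs_zero]; exact hM

lemma conv3' (sP : Set ℝ) (sQ : ℝ → Set ℝ) (sR : ℝ → ℝ → Set ℝ)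
    (hP : MeasurableSet sP) (hQ : ∀ x, MeasurableSet (sQ x))
    (hR : ∀ x y, MeasurableSet (sR x y)) (W : ℝ → ℝ → ℝ → ℝ) :
    ∫ x in sP, ∫ y in sQ x, ∫ z in sR x y, W x y z
      = ∫ x, ∫ y, ∫ z, ind (x ∈ sP ∧ y ∈ sQ x ∧ z ∈ sR x y) (W x y z) := by
  rw [← integral_indicator hP]
  refine congrArg (fun F : ℝ → ℝ => ∫ x, F x) (funext fun x => ?_)
  by_cases hx : x ∈ sP
  · rw [indicator_of_mem hx, ← integral_indicator (hQ x)]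
    refine congrArg (fun F : ℝ → ℝ => ∫ y, F y) (funext fun y => ?_)
    by_cases hy : y ∈ sQ x
    · rw [indicator_of_mem hy, ← integral_indicator (hR x y)]
      refine congrArg (fun F : ℝ → ℝ => ∫ z, F z) (funext fun z => ?_)
      by_cases hz : z ∈ sR x y
      · rw [indicator_of_mem hz, ind_pos ⟨hx, hy, hz⟩]
      · rw [indicator_of_notMem hz, ind_neg (fun h => hz h.2.2)]
    · rw [indicator_of_notMem hy]
      have h0 : (fun z => ind (x ∈ sP ∧ y ∈ sQ x ∧ z ∈ sR x y) (W x y z))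
          = fun _ => (0:ℝ) := funext fun z => ind_neg (fun h => hy h.2.1) _
      rw [h0, integral_zero]
  · rw [indicator_of_notMem hx]
    have h0 : (fun y => ∫ z, ind (x ∈ sP ∧ y ∈ sQ x ∧ z ∈ sR x y) (W x y z))
        = fun _ => (0:ℝ) := by
      funext y
      have h1 : (fun z => ind (x ∈ sP ∧ y ∈ sQ x ∧ z ∈ sR x y) (W x y z))
          = fun _ => (0:ℝ) := funext fun z => ind_neg (fun h => hx h.1) _
      rw [h1, integral_zero]
    rw [h0, integral_zero]

lemma conv2'' (sP : Set ℝ) (sQ : ℝ → Set ℝ)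
    (hP : MeasurableSet sP) (hQ : ∀ y, MeasurableSet (sQ y)) (W : ℝ → ℝ → ℝ) :
    ∫ y in sP, ∫ z in sQ y, W y z
      = ∫ y, ∫ z, ind (y ∈ sP ∧ z ∈ sQ y) (W y z) := by
  rw [← integral_indicator hP]
  refine congrArg (fun F : ℝ → ℝ => ∫ y, F y) (funext fun y => ?_)
  by_cases hy : y ∈ sP
  · rw [indicator_of_mem hy, ← integral_indicator (hQ y)]
    refine congrArg (fun F : ℝ → ℝ => ∫ z, F z) (funext fun z => ?_)
    by_cases hz : z ∈ sQ y
    · rw [indicator_of_mem hz, ind_pos ⟨hy, hz⟩]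
    · rw [indicator_of_notMem hz, ind_neg (fun h => hz h.2)]
  · rw [indicator_of_notMem hy]
    have h0 : (fun z => ind (y ∈ sP ∧ z ∈ sQ y) (W y z)) = fun _ => (0:ℝ) :=
      funext fun z => ind_neg (fun h => hy h.1) _
    rw [h0, integral_zero]

lemma conv1' (sQ : Set ℝ) (hQ : MeasurableSet sQ) (W : ℝ → ℝ) :
    ∫ z in sQ, W z = ∫ z, ind (z ∈ sQ) (W z) := by
  rw [← integral_indicator hQ]
  refine congrArg (fun F : ℝ → ℝ => ∫ z, F z) (funext fun z => ?_)
  by_cases h : z ∈ sQ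
  · rw [indicator_of_mem h, ind_pos h]
  · rw [indicator_of_notMem h, ind_neg h]

lemma tic {u v : ℝ → ℝ → ℝ → ℝ} (h : ∀ x y z, u x y z = v x y z) :
    (∫ x, ∫ y, ∫ z, u x y z) = ∫ x, ∫ y, ∫ z, v x y z := by simp only [h]

lemma int_congr {u v : ℝ → ℝ} (h : ∀ x, u x = v x) : (∫ x, u x) = ∫ x, v x := by
  simp only [h]

lemma sym3 {L : NNReal} {A : ℝ → ℝ} (hA : LipschitzWith L A) {a b ε : ℝ}
    (hab : a ≤ b) (hε : 0 < ε) :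
    (∫ x in Icc a b, ∫ y in {y : ℝ | y ∈ Icc a b ∧ ε < |y - x|},
        ∫ z in {z : ℝ | z ∈ Icc a b ∧ ε < |z - x| ∧ ε < |z - y|},
          (commKernel A x y * commKernel A x z + commKernel A y x * commKernel A y z +
            commKernel A z y * commKernel A z x))
      = 3 * ∫ x in Icc a b, ∫ y in {y : ℝ | y ∈ Icc a b ∧ ε < |y - x|},
          ∫ z in {z : ℝ | z ∈ Icc a b ∧ ε < |z - x| ∧ ε < |z - y|},
            commKernel A x y * commKernel A x z := by
  have hKm : Measurable fun p : ℝ × ℝ => commKernel A p.1 p.2 := measurable_K hA.continuous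
  have hQ : ∀ x : ℝ, MeasurableSet {y : ℝ | y ∈ Icc a b ∧ ε < |y - x|} := fun x =>
    measurableSet_Icc.inter (msetP (continuous_id.sub continuous_const) ε)
  have hR : ∀ x y : ℝ, MeasurableSet {z : ℝ | z ∈ Icc a b ∧ ε < |z - x| ∧ ε < |z - y|} :=
    fun x y => measurableSet_Icc.inter ((msetP (continuous_id.sub continuous_const) ε).inter
      (msetP (continuous_id.sub continuous_const) ε))
  have c11 : Continuous fun q : (ℝ × ℝ) × ℝ => q.1.1 := continuous_fst.comp continuous_fst
  have c12 : Continuous fun q : (ℝ × ℝ) × ℝ => q.1.2 := continuous_snd.comp continuous_fst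
  have c2 : Continuous fun q : (ℝ × ℝ) × ℝ => q.2 := continuous_snd
  have hCset : MeasurableSet {q : (ℝ × ℝ) × ℝ | q.1.1 ∈ Icc a b ∧ (q.1.2 ∈ Icc a b ∧ ε < |q.1.2 - q.1.1|) ∧ (q.2 ∈ Icc a b ∧ ε < |q.2 - q.1.1| ∧ ε < |q.2 - q.1.2|)} :=
    (c11.measurable measurableSet_Icc).inter
      (((c12.measurable measurableSet_Icc).inter (msetP (c12.sub c11) ε)).inter
        ((c2.measurable measurableSet_Icc).inter
          ((msetP (c2.sub c11) ε).inter (msetP (c2.sub c12) ε))))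
  have mK : ∀ f g : (ℝ × ℝ) × ℝ → ℝ, Measurable f → Measurable g →
      Measurable fun q => commKernel A (f q) (g q) := fun f g hf hg =>
    hKm.comp (hf.prodMk hg)
  have hsupp : ∀ x y z : ℝ, (x ∉ Icc a b ∨ y ∉ Icc a b ∨ z ∉ Icc a b) →
      ¬ (x ∈ Icc a b ∧ (y ∈ Icc a b ∧ ε < |y - x|) ∧ (z ∈ Icc a b ∧ ε < |z - x| ∧ ε < |z - y|)) := by
    rintro x y z (h | h | h) hc
    exacts [h hc.1, h hc.2.1.1, h hc.2.2.1]
  have hm1 : Measurable fun q : (ℝ × ℝ) × ℝ =>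
      ind (q.1.1 ∈ Icc a b ∧ (q.1.2 ∈ Icc a b ∧ ε < |q.1.2 - q.1.1|) ∧ (q.2 ∈ Icc a b ∧ ε < |q.2 - q.1.1| ∧ ε < |q.2 - q.1.2|)) (commKernel A q.1.1 q.1.2 * commKernel A q.1.1 q.2) :=
    measurable_ind hCset ((mK _ _ c11.measurable c12.measurable).mul
      (mK _ _ c11.measurable c2.measurable))
  have hm2 : Measurable fun q : (ℝ × ℝ) × ℝ =>
      ind (q.1.1 ∈ Icc a b ∧ (q.1.2 ∈ Icc a b ∧ ε < |q.1.2 - q.1.1|) ∧ (q.2 ∈ Icc a b ∧ ε < |q.2 - q.1.1| ∧ ε < |q.2 - q.1.2|)) (commKernel A q.1.2 q.1.1 * commKernel A q.1.2 q.2) :=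
    measurable_ind hCset ((mK _ _ c12.measurable c11.measurable).mul
      (mK _ _ c12.measurable c2.measurable))
  have hm3 : Measurable fun q : (ℝ × ℝ) × ℝ =>
      ind (q.1.1 ∈ Icc a b ∧ (q.1.2 ∈ Icc a b ∧ ε < |q.1.2 - q.1.1|) ∧ (q.2 ∈ Icc a b ∧ ε < |q.2 - q.1.1| ∧ ε < |q.2 - q.1.2|)) (commKernel A q.2 q.1.2 * commKernel A q.2 q.1.1) :=
    measurable_ind hCset ((mK _ _ c2.measurable c12.measurable).mul
      (mK _ _ c2.measurable c11.measurable))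
  have hMb : (0:ℝ) ≤ ((L:ℝ)/ε)^2 := by positivity
  have hb1 : ∀ x y z : ℝ, |ind (x ∈ Icc a b ∧ (y ∈ Icc a b ∧ ε < |y - x|) ∧ (z ∈ Icc a b ∧ ε < |z - x| ∧ ε < |z - y|)) (commKernel A x y * commKernel A x z)| ≤ ((L:ℝ)/ε)^2 := fun x y z =>
    abs_ind_le hMb fun h => by
      rw [abs_mul, sq]
      exact mul_le_mul (abs_K_le' hA hε h.2.1.2) (abs_K_le' hA hε h.2.2.2.1)
        (abs_nonneg _) (by positivity)
  have hb2 : ∀ x y z : ℝ, |ind (x ∈ Icc a b ∧ (y ∈ Icc a b ∧ ε < |y - x|) ∧ (z ∈ Icc a b ∧ ε < |z - x| ∧ ε < |z - y|)) (commKernel A y x * commKernel A y z)| ≤ ((L:ℝ)/ε)^2 := fun x y z =>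
    abs_ind_le hMb fun h => by
      rw [abs_mul, sq]
      exact mul_le_mul (abs_K_le' hA hε (by rw [abs_sub_comm]; exact h.2.1.2))
        (abs_K_le' hA hε h.2.2.2.2) (abs_nonneg _) (by positivity)
  have hb3 : ∀ x y z : ℝ, |ind (x ∈ Icc a b ∧ (y ∈ Icc a b ∧ ε < |y - x|) ∧ (z ∈ Icc a b ∧ ε < |z - x| ∧ ε < |z - y|)) (commKernel A z y * commKernel A z x)| ≤ ((L:ℝ)/ε)^2 := fun x y z =>
    abs_ind_le hMb fun h => by
      rw [abs_mul, sq]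
      exact mul_le_mul (abs_K_le' hA hε (by rw [abs_sub_comm]; exact h.2.2.2.2))
        (abs_K_le' hA hε (by rw [abs_sub_comm]; exact h.2.2.2.1)) (abs_nonneg _)
        (by positivity)
  have h01 : ∀ x y z : ℝ, (x ∉ Icc a b ∨ y ∉ Icc a b ∨ z ∉ Icc a b) →
      ind (x ∈ Icc a b ∧ (y ∈ Icc a b ∧ ε < |y - x|) ∧ (z ∈ Icc a b ∧ ε < |z - x| ∧ ε < |z - y|)) (commKernel A x y * commKernel A x z) = 0 := fun x y z h => ind_neg (hsupp x y z h) _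
  have h02 : ∀ x y z : ℝ, (x ∉ Icc a b ∨ y ∉ Icc a b ∨ z ∉ Icc a b) →
      ind (x ∈ Icc a b ∧ (y ∈ Icc a b ∧ ε < |y - x|) ∧ (z ∈ Icc a b ∧ ε < |z - x| ∧ ε < |z - y|)) (commKernel A y x * commKernel A y z) = 0 := fun x y z h => ind_neg (hsupp x y z h) _
  have h03 : ∀ x y z : ℝ, (x ∉ Icc a b ∨ y ∉ Icc a b ∨ z ∉ Icc a b) →
      ind (x ∈ Icc a b ∧ (y ∈ Icc a b ∧ ε < |y - x|) ∧ (z ∈ Icc a b ∧ ε < |z - x| ∧ ε < |z - y|)) (commKernel A z y * commKernel A z x) = 0 := fun x y z h => ind_neg (hsupp x y z h) _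
  have hcL : (∫ x in Icc a b, ∫ y in {y : ℝ | y ∈ Icc a b ∧ ε < |y - x|},
      ∫ z in {z : ℝ | z ∈ Icc a b ∧ ε < |z - x| ∧ ε < |z - y|}, (commKernel A x y * commKernel A x z + commKernel A y x * commKernel A y z + commKernel A z y * commKernel A z x))
      = ∫ x, ∫ y, ∫ z, ind (x ∈ Icc a b ∧ (y ∈ Icc a b ∧ ε < |y - x|) ∧ (z ∈ Icc a b ∧ ε < |z - x| ∧ ε < |z - y|)) ((commKernel A x y * commKernel A x z + commKernel A y x * commKernel A y z + commKernel A z y * commKernel A z x)) :=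
    conv3' (Icc a b) (fun x => {y : ℝ | y ∈ Icc a b ∧ ε < |y - x|})
      (fun x y => {z : ℝ | z ∈ Icc a b ∧ ε < |z - x| ∧ ε < |z - y|})
      measurableSet_Icc hQ hR (fun x y z => (commKernel A x y * commKernel A x z + commKernel A y x * commKernel A y z + commKernel A z y * commKernel A z x))
  have hcR : (∫ x in Icc a b, ∫ y in {y : ℝ | y ∈ Icc a b ∧ ε < |y - x|},
      ∫ z in {z : ℝ | z ∈ Icc a b ∧ ε < |z - x| ∧ ε < |z - y|}, commKernel A x y * commKernel A x z)
      = ∫ x, ∫ y, ∫ z, ind (x ∈ Icc a b ∧ (y ∈ Icc a b ∧ ε < |y - x|) ∧ (z ∈ Icc a b ∧ ε < |z - x| ∧ ε < |z - y|)) (commKernel A x y * commKernel A x z) :=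
    conv3' (Icc a b) (fun x => {y : ℝ | y ∈ Icc a b ∧ ε < |y - x|})
      (fun x y => {z : ℝ | z ∈ Icc a b ∧ ε < |z - x| ∧ ε < |z - y|})
      measurableSet_Icc hQ hR (fun x y z => commKernel A x y * commKernel A x z)
  have hsplit : ∀ x y z : ℝ, ind (x ∈ Icc a b ∧ (y ∈ Icc a b ∧ ε < |y - x|) ∧ (z ∈ Icc a b ∧ ε < |z - x| ∧ ε < |z - y|)) ((commKernel A x y * commKernel A x z + commKernel A y x * commKernel A y z + commKernel A z y * commKernel A z x))
      = ind (x ∈ Icc a b ∧ (y ∈ Icc a b ∧ ε < |y - x|) ∧ (z ∈ Icc a b ∧ ε < |z - x| ∧ ε < |z - y|)) (commKernel A x y * commKernel A x z) + ind (x ∈ Icc a b ∧ (y ∈ Icc a b ∧ ε < |y - x|) ∧ (z ∈ Icc a b ∧ ε < |z - x| ∧ ε < |z - y|)) (commKernel A y x * commKernel A y z) + ind (x ∈ Icc a b ∧ (y ∈ Icc a b ∧ ε < |y - x|) ∧ (z ∈ Icc a b ∧ ε < |z - x| ∧ ε < |z - y|)) (commKernel A z y * commKernel A z x) := by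
    intro x y z
    by_cases h : x ∈ Icc a b ∧ (y ∈ Icc a b ∧ ε < |y - x|) ∧ (z ∈ Icc a b ∧ ε < |z - x| ∧ ε < |z - y|)
    · rw [ind_pos h, ind_pos h, ind_pos h, ind_pos h]
    · rw [ind_neg h, ind_neg h, ind_neg h, ind_neg h]; ring
  have hz1 := fun x y => nice_int_z (a := a) (b := b) (g := (fun x y z : ℝ => ind (x ∈ Icc a b ∧ (y ∈ Icc a b ∧ ε < |y - x|) ∧ (z ∈ Icc a b ∧ ε < |z - x| ∧ ε < |z - y|)) (commKernel A x y * commKernel A x z))) hm1 h01 hb1 x y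
  have hz2 := fun x y => nice_int_z (a := a) (b := b) (g := (fun x y z : ℝ => ind (x ∈ Icc a b ∧ (y ∈ Icc a b ∧ ε < |y - x|) ∧ (z ∈ Icc a b ∧ ε < |z - x| ∧ ε < |z - y|)) (commKernel A y x * commKernel A y z))) hm2 h02 hb2 x y
  have hz3 := fun x y => nice_int_z (a := a) (b := b) (g := (fun x y z : ℝ => ind (x ∈ Icc a b ∧ (y ∈ Icc a b ∧ ε < |y - x|) ∧ (z ∈ Icc a b ∧ ε < |z - x| ∧ ε < |z - y|)) (commKernel A z y * commKernel A z x))) hm3 h03 hb3 x y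
  have hy1 : ∀ x : ℝ, Integrable (fun y => ∫ z, ind (x ∈ Icc a b ∧ (y ∈ Icc a b ∧ ε < |y - x|) ∧ (z ∈ Icc a b ∧ ε < |z - x| ∧ ε < |z - y|)) (commKernel A x y * commKernel A x z)) volume :=
    nice_int_y (g := (fun x y z : ℝ => ind (x ∈ Icc a b ∧ (y ∈ Icc a b ∧ ε < |y - x|) ∧ (z ∈ Icc a b ∧ ε < |z - x| ∧ ε < |z - y|)) (commKernel A x y * commKernel A x z))) hab hm1 h01 hb1
  have hy2 : ∀ x : ℝ, Integrable (fun y => ∫ z, ind (x ∈ Icc a b ∧ (y ∈ Icc a b ∧ ε < |y - x|) ∧ (z ∈ Icc a b ∧ ε < |z - x| ∧ ε < |z - y|)) (commKernel A y x * commKernel A y z)) volume :=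
    nice_int_y (g := (fun x y z : ℝ => ind (x ∈ Icc a b ∧ (y ∈ Icc a b ∧ ε < |y - x|) ∧ (z ∈ Icc a b ∧ ε < |z - x| ∧ ε < |z - y|)) (commKernel A y x * commKernel A y z))) hab hm2 h02 hb2
  have hy3 : ∀ x : ℝ, Integrable (fun y => ∫ z, ind (x ∈ Icc a b ∧ (y ∈ Icc a b ∧ ε < |y - x|) ∧ (z ∈ Icc a b ∧ ε < |z - x| ∧ ε < |z - y|)) (commKernel A z y * commKernel A z x)) volume :=
    nice_int_y (g := (fun x y z : ℝ => ind (x ∈ Icc a b ∧ (y ∈ Icc a b ∧ ε < |y - x|) ∧ (z ∈ Icc a b ∧ ε < |z - x| ∧ ε < |z - y|)) (commKernel A z y * commKernel A z x))) hab hm3 h03 hb3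
  have hx1 : Integrable (fun x => ∫ y, ∫ z, ind (x ∈ Icc a b ∧ (y ∈ Icc a b ∧ ε < |y - x|) ∧ (z ∈ Icc a b ∧ ε < |z - x| ∧ ε < |z - y|)) (commKernel A x y * commKernel A x z)) volume :=
    nice_int_x (g := (fun x y z : ℝ => ind (x ∈ Icc a b ∧ (y ∈ Icc a b ∧ ε < |y - x|) ∧ (z ∈ Icc a b ∧ ε < |z - x| ∧ ε < |z - y|)) (commKernel A x y * commKernel A x z))) hab hm1 h01 hb1
  have hx2 : Integrable (fun x => ∫ y, ∫ z, ind (x ∈ Icc a b ∧ (y ∈ Icc a b ∧ ε < |y - x|) ∧ (z ∈ Icc a b ∧ ε < |z - x| ∧ ε < |z - y|)) (commKernel A y x * commKernel A y z)) volume :=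
    nice_int_x (g := (fun x y z : ℝ => ind (x ∈ Icc a b ∧ (y ∈ Icc a b ∧ ε < |y - x|) ∧ (z ∈ Icc a b ∧ ε < |z - x| ∧ ε < |z - y|)) (commKernel A y x * commKernel A y z))) hab hm2 h02 hb2
  have hx3 : Integrable (fun x => ∫ y, ∫ z, ind (x ∈ Icc a b ∧ (y ∈ Icc a b ∧ ε < |y - x|) ∧ (z ∈ Icc a b ∧ ε < |z - x| ∧ ε < |z - y|)) (commKernel A z y * commKernel A z x)) volume :=
    nice_int_x (g := (fun x y z : ℝ => ind (x ∈ Icc a b ∧ (y ∈ Icc a b ∧ ε < |y - x|) ∧ (z ∈ Icc a b ∧ ε < |z - x| ∧ ε < |z - y|)) (commKernel A z y * commKernel A z x))) hab hm3 h03 hb3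
  have hsym2 : (∫ x, ∫ y, ∫ z, ind (x ∈ Icc a b ∧ (y ∈ Icc a b ∧ ε < |y - x|) ∧ (z ∈ Icc a b ∧ ε < |z - x| ∧ ε < |z - y|)) (commKernel A y x * commKernel A y z)) = ∫ x, ∫ y, ∫ z, ind (x ∈ Icc a b ∧ (y ∈ Icc a b ∧ ε < |y - x|) ∧ (z ∈ Icc a b ∧ ε < |z - x| ∧ ε < |z - y|)) (commKernel A x y * commKernel A x z) := by
    have hs := swap12 (fun x y z : ℝ => ind (x ∈ Icc a b ∧ (y ∈ Icc a b ∧ ε < |y - x|) ∧ (z ∈ Icc a b ∧ ε < |z - x| ∧ ε < |z - y|)) (commKernel A y x * commKernel A y z)) (nice_int_pair (g := (fun x y z : ℝ => ind (x ∈ Icc a b ∧ (y ∈ Icc a b ∧ ε < |y - x|) ∧ (z ∈ Icc a b ∧ ε < |z - x| ∧ ε < |z - y|)) (commKernel A y x * commKernel A y z))) hab hm2 h02 hb2)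
    refine Eq.trans hs (tic fun x y z => ?_)
    show ind (y ∈ Icc a b ∧ (x ∈ Icc a b ∧ ε < |x - y|) ∧ (z ∈ Icc a b ∧ ε < |z - y| ∧ ε < |z - x|)) (commKernel A x y * commKernel A x z) = ind (x ∈ Icc a b ∧ (y ∈ Icc a b ∧ ε < |y - x|) ∧ (z ∈ Icc a b ∧ ε < |z - x| ∧ ε < |z - y|)) (commKernel A x y * commKernel A x z)
    refine congrArg (fun c : Prop => ind c (commKernel A x y * commKernel A x z)) (propext ?_)
    constructor <;> rintro ⟨h1, ⟨h2, h3⟩, h4, h5, h6⟩ <;>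
      exact ⟨h2, ⟨h1, by rwa [abs_sub_comm]⟩, h4, h6, h5⟩
  have hsym3 : (∫ x, ∫ y, ∫ z, ind (x ∈ Icc a b ∧ (y ∈ Icc a b ∧ ε < |y - x|) ∧ (z ∈ Icc a b ∧ ε < |z - x| ∧ ε < |z - y|)) (commKernel A z y * commKernel A z x)) = ∫ x, ∫ y, ∫ z, ind (x ∈ Icc a b ∧ (y ∈ Icc a b ∧ ε < |y - x|) ∧ (z ∈ Icc a b ∧ ε < |z - x| ∧ ε < |z - y|)) (commKernel A x y * commKernel A x z) := by
    have hstep1 : (∫ x, ∫ y, ∫ z, ind (x ∈ Icc a b ∧ (y ∈ Icc a b ∧ ε < |y - x|) ∧ (z ∈ Icc a b ∧ ε < |z - x| ∧ ε < |z - y|)) (commKernel A z y * commKernel A z x))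
        = ∫ x, ∫ y, ∫ z, ind (y ∈ Icc a b ∧ (x ∈ Icc a b ∧ ε < |x - y|) ∧ (z ∈ Icc a b ∧ ε < |z - y| ∧ ε < |z - x|)) (commKernel A z x * commKernel A z y) :=
      swap12 (fun x y z : ℝ => ind (x ∈ Icc a b ∧ (y ∈ Icc a b ∧ ε < |y - x|) ∧ (z ∈ Icc a b ∧ ε < |z - x| ∧ ε < |z - y|)) (commKernel A z y * commKernel A z x)) (nice_int_pair (g := (fun x y z : ℝ => ind (x ∈ Icc a b ∧ (y ∈ Icc a b ∧ ε < |y - x|) ∧ (z ∈ Icc a b ∧ ε < |z - x| ∧ ε < |z - y|)) (commKernel A z y * commKernel A z x))) hab hm3 h03 hb3)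
    have hstep2 : (∫ x, ∫ y, ∫ z, ind (y ∈ Icc a b ∧ (x ∈ Icc a b ∧ ε < |x - y|) ∧ (z ∈ Icc a b ∧ ε < |z - y| ∧ ε < |z - x|)) (commKernel A z x * commKernel A z y))
        = ∫ x, ∫ y, ∫ z, ind (z ∈ Icc a b ∧ (x ∈ Icc a b ∧ ε < |x - z|) ∧ (y ∈ Icc a b ∧ ε < |y - z| ∧ ε < |y - x|)) (commKernel A y x * commKernel A y z) :=
      swap23 (fun x y z : ℝ => ind (y ∈ Icc a b ∧ (x ∈ Icc a b ∧ ε < |x - y|) ∧ (z ∈ Icc a b ∧ ε < |z - y| ∧ ε < |z - x|)) (commKernel A z x * commKernel A z y))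
        (fun x => nice_int_xz (g := (fun x y z : ℝ => ind (x ∈ Icc a b ∧ (y ∈ Icc a b ∧ ε < |y - x|) ∧ (z ∈ Icc a b ∧ ε < |z - x| ∧ ε < |z - y|)) (commKernel A z y * commKernel A z x))) hm3 h03 hb3 x)
    have hstep3 : (∫ x, ∫ y, ∫ z, ind (z ∈ Icc a b ∧ (x ∈ Icc a b ∧ ε < |x - z|) ∧ (y ∈ Icc a b ∧ ε < |y - z| ∧ ε < |y - x|)) (commKernel A y x * commKernel A y z))
        = ∫ x, ∫ y, ∫ z, ind (z ∈ Icc a b ∧ (y ∈ Icc a b ∧ ε < |y - z|) ∧ (x ∈ Icc a b ∧ ε < |x - z| ∧ ε < |x - y|)) (commKernel A x y * commKernel A x z) :=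
      swap12 (fun x y z : ℝ => ind (z ∈ Icc a b ∧ (x ∈ Icc a b ∧ ε < |x - z|) ∧ (y ∈ Icc a b ∧ ε < |y - z| ∧ ε < |y - x|)) (commKernel A y x * commKernel A y z))
        (nice_int_first (g := (fun x y z : ℝ => ind (x ∈ Icc a b ∧ (y ∈ Icc a b ∧ ε < |y - x|) ∧ (z ∈ Icc a b ∧ ε < |z - x| ∧ ε < |z - y|)) (commKernel A z y * commKernel A z x))) hab hm3 h03 hb3)
    refine ((hstep1.trans hstep2).trans hstep3).trans (tic fun x y z => ?_)
    refine congrArg (fun c : Prop => ind c (commKernel A x y * commKernel A x z)) (propext ?_)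
    constructor <;> rintro ⟨h1, ⟨h2, h3⟩, h4, h5, h6⟩ <;>
      exact ⟨h4, ⟨h2, by rwa [abs_sub_comm]⟩, h1, by rwa [abs_sub_comm],
        by rwa [abs_sub_comm]⟩
  rw [hcL, hcR]
  calc (∫ x, ∫ y, ∫ z, ind (x ∈ Icc a b ∧ (y ∈ Icc a b ∧ ε < |y - x|) ∧ (z ∈ Icc a b ∧ ε < |z - x| ∧ ε < |z - y|)) ((commKernel A x y * commKernel A x z + commKernel A y x * commKernel A y z + commKernel A z y * commKernel A z x)))
      = ∫ x, ∫ y, ∫ z, (ind (x ∈ Icc a b ∧ (y ∈ Icc a b ∧ ε < |y - x|) ∧ (z ∈ Icc a b ∧ ε < |z - x| ∧ ε < |z - y|)) (commKernel A x y * commKernel A x z) + ind (x ∈ Icc a b ∧ (y ∈ Icc a b ∧ ε < |y - x|) ∧ (z ∈ Icc a b ∧ ε < |z - x| ∧ ε < |z - y|)) (commKernel A y x * commKernel A y z)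
          + ind (x ∈ Icc a b ∧ (y ∈ Icc a b ∧ ε < |y - x|) ∧ (z ∈ Icc a b ∧ ε < |z - x| ∧ ε < |z - y|)) (commKernel A z y * commKernel A z x)) := tic hsplit
    _ = ∫ x, ∫ y, ((∫ z, ind (x ∈ Icc a b ∧ (y ∈ Icc a b ∧ ε < |y - x|) ∧ (z ∈ Icc a b ∧ ε < |z - x| ∧ ε < |z - y|)) (commKernel A x y * commKernel A x z)) + (∫ z, ind (x ∈ Icc a b ∧ (y ∈ Icc a b ∧ ε < |y - x|) ∧ (z ∈ Icc a b ∧ ε < |z - x| ∧ ε < |z - y|)) (commKernel A y x * commKernel A y z))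
          + ∫ z, ind (x ∈ Icc a b ∧ (y ∈ Icc a b ∧ ε < |y - x|) ∧ (z ∈ Icc a b ∧ ε < |z - x| ∧ ε < |z - y|)) (commKernel A z y * commKernel A z x)) :=
        int_congr fun x => int_congr fun y => by
          have h12 : Integrable (fun z => ind (x ∈ Icc a b ∧ (y ∈ Icc a b ∧ ε < |y - x|) ∧ (z ∈ Icc a b ∧ ε < |z - x| ∧ ε < |z - y|)) (commKernel A x y * commKernel A x z)
              + ind (x ∈ Icc a b ∧ (y ∈ Icc a b ∧ ε < |y - x|) ∧ (z ∈ Icc a b ∧ ε < |z - x| ∧ ε < |z - y|)) (commKernel A y x * commKernel A y z)) volume := (hz1 x y).add (hz2 x y)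
          exact (integral_add h12 (hz3 x y)).trans
            (by rw [integral_add (hz1 x y) (hz2 x y)])
    _ = ∫ x, ((∫ y, ∫ z, ind (x ∈ Icc a b ∧ (y ∈ Icc a b ∧ ε < |y - x|) ∧ (z ∈ Icc a b ∧ ε < |z - x| ∧ ε < |z - y|)) (commKernel A x y * commKernel A x z)) + (∫ y, ∫ z, ind (x ∈ Icc a b ∧ (y ∈ Icc a b ∧ ε < |y - x|) ∧ (z ∈ Icc a b ∧ ε < |z - x| ∧ ε < |z - y|)) (commKernel A y x * commKernel A y z))
          + ∫ y, ∫ z, ind (x ∈ Icc a b ∧ (y ∈ Icc a b ∧ ε < |y - x|) ∧ (z ∈ Icc a b ∧ ε < |z - x| ∧ ε < |z - y|)) (commKernel A z y * commKernel A z x)) :=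
        int_congr fun x => by
          have h12 : Integrable (fun y => (∫ z, ind (x ∈ Icc a b ∧ (y ∈ Icc a b ∧ ε < |y - x|) ∧ (z ∈ Icc a b ∧ ε < |z - x| ∧ ε < |z - y|)) (commKernel A x y * commKernel A x z))
              + ∫ z, ind (x ∈ Icc a b ∧ (y ∈ Icc a b ∧ ε < |y - x|) ∧ (z ∈ Icc a b ∧ ε < |z - x| ∧ ε < |z - y|)) (commKernel A y x * commKernel A y z)) volume := (hy1 x).add (hy2 x)
          exact (integral_add h12 (hy3 x)).trans
            (by rw [integral_add (hy1 x) (hy2 x)])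
    _ = (∫ x, ∫ y, ∫ z, ind (x ∈ Icc a b ∧ (y ∈ Icc a b ∧ ε < |y - x|) ∧ (z ∈ Icc a b ∧ ε < |z - x| ∧ ε < |z - y|)) (commKernel A x y * commKernel A x z)) + (∫ x, ∫ y, ∫ z, ind (x ∈ Icc a b ∧ (y ∈ Icc a b ∧ ε < |y - x|) ∧ (z ∈ Icc a b ∧ ε < |z - x| ∧ ε < |z - y|)) (commKernel A y x * commKernel A y z))
          + (∫ x, ∫ y, ∫ z, ind (x ∈ Icc a b ∧ (y ∈ Icc a b ∧ ε < |y - x|) ∧ (z ∈ Icc a b ∧ ε < |z - x| ∧ ε < |z - y|)) (commKernel A z y * commKernel A z x)) := by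
          have h12 : Integrable (fun x => (∫ y, ∫ z, ind (x ∈ Icc a b ∧ (y ∈ Icc a b ∧ ε < |y - x|) ∧ (z ∈ Icc a b ∧ ε < |z - x| ∧ ε < |z - y|)) (commKernel A x y * commKernel A x z))
              + ∫ y, ∫ z, ind (x ∈ Icc a b ∧ (y ∈ Icc a b ∧ ε < |y - x|) ∧ (z ∈ Icc a b ∧ ε < |z - x| ∧ ε < |z - y|)) (commKernel A y x * commKernel A y z)) volume := hx1.add hx2
          exact (integral_add h12 hx3).trans (by rw [integral_add hx1 hx2])
    _ = 3 * (∫ x, ∫ y, ∫ z, ind (x ∈ Icc a b ∧ (y ∈ Icc a b ∧ ε < |y - x|) ∧ (z ∈ Icc a b ∧ ε < |z - x| ∧ ε < |z - y|)) (commKernel A x y * commKernel A x z)) := by rw [hsym2, hsym3]; ring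

section PerX

variable {L : NNReal} {A : ℝ → ℝ} {a b ε : ℝ}

lemma hmY' (a b ε : ℝ) : ∀ x : ℝ, MeasurableSet {y : ℝ | y ∈ Icc a b ∧ ε < |y - x|} := fun x =>
  measurableSet_Icc.inter (msetP (continuous_id.sub continuous_const) ε)

lemma hmZ' (a b ε : ℝ) : ∀ x y : ℝ, MeasurableSet {z : ℝ | z ∈ Icc a b ∧ ε < |z - x| ∧ ε < |z - y|} := fun x y =>
  measurableSet_Icc.inter ((msetP (continuous_id.sub continuous_const) ε).inter
    (msetP (continuous_id.sub continuous_const) ε))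

lemma hmD' (a b ε : ℝ) : ∀ x y : ℝ, MeasurableSet {z : ℝ | z ∈ Icc a b ∧ ε < |z - x| ∧ ¬ ε < |z - y|} := fun x y =>
  measurableSet_Icc.inter ((msetP (continuous_id.sub continuous_const) ε).inter
    (msetP' (continuous_id.sub continuous_const) ε))

lemma hIKz' (hA : LipschitzWith L A) (hab : a ≤ b) (hε : 0 < ε) (x : ℝ) :
    IntegrableOn (fun z => commKernel A x z) {t : ℝ | t ∈ Icc a b ∧ ε < |t - x|} := by
  refine integrableOn_of_bound (a := a) (b := b) (hmY' a b ε x) (fun z hz => hz.1) ?_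
    (fun z hz => abs_K_le' hA hε hz.2)
  exact ((measurable_K hA.continuous).comp
    (measurable_const.prodMk measurable_id)).aestronglyMeasurable

lemma hIP' (hA : LipschitzWith L A) (hab : a ≤ b) (hε : 0 < ε) (x : ℝ) :
    IntegrableOn (fun y => ∫ z in {z : ℝ | z ∈ Icc a b ∧ ε < |z - x| ∧ ε < |z - y|}, commKernel A x y * commKernel A x z) {y : ℝ | y ∈ Icc a b ∧ ε < |y - x|} := by
  have hKm := measurable_K hA.continuous
  have hconv : ∀ y : ℝ, (∫ z in {z : ℝ | z ∈ Icc a b ∧ ε < |z - x| ∧ ε < |z - y|}, commKernel A x y * commKernel A x z)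
      = ∫ z, ind (z ∈ Icc a b ∧ ε < |z - x| ∧ ε < |z - y|) (commKernel A x y * commKernel A x z) := fun y => conv1' _ (hmZ' a b ε x y) _
  refine integrableOn_of_bound (a := a) (b := b) (M := ((L:ℝ)/ε)^2 * (b - a))
    (hmY' a b ε x) (fun y hy => hy.1) ?_ (fun y hy => ?_)
  · rw [show (fun y => ∫ z in {z : ℝ | z ∈ Icc a b ∧ ε < |z - x| ∧ ε < |z - y|}, commKernel A x y * commKernel A x z) = fun y => ∫ z, ind (z ∈ Icc a b ∧ ε < |z - x| ∧ ε < |z - y|) (commKernel A x y * commKernel A x z)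
      from funext hconv]
    refine (meas_int (f := fun p : ℝ × ℝ => ind (p.2 ∈ Icc a b ∧ ε < |p.2 - x| ∧ ε < |p.2 - p.1|) (commKernel A x p.1 * commKernel A x p.2)) (measurable_ind ?_ ?_)).aestronglyMeasurable
    · exact (measurable_snd measurableSet_Icc).inter
        ((msetP (continuous_snd.sub continuous_const) ε).inter
          (msetP (continuous_snd.sub continuous_fst) ε))
    · exact (hKm.comp (measurable_const.prodMk measurable_fst)).mul
        (hKm.comp (measurable_const.prodMk measurable_snd))
  · refine abs_setIntegral_le hab (by positivity) (fun z hz => hz.1) (hmZ' a b ε x y)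
      (fun z hz => ?_)
    rw [abs_mul, sq]
    exact mul_le_mul (abs_K_le' hA hε hy.2) (abs_K_le' hA hε hz.2.1) (abs_nonneg _)
      (by positivity)

lemma hID' (hA : LipschitzWith L A) (hab : a ≤ b) (hε : 0 < ε) (x : ℝ) :
    IntegrableOn (fun y => ∫ z in {z : ℝ | z ∈ Icc a b ∧ ε < |z - x| ∧ ¬ ε < |z - y|}, commKernel A x y * commKernel A x z) {y : ℝ | y ∈ Icc a b ∧ ε < |y - x|} := by
  have hKm := measurable_K hA.continuous
  have hconv : ∀ y : ℝ, (∫ z in {z : ℝ | z ∈ Icc a b ∧ ε < |z - x| ∧ ¬ ε < |z - y|}, commKernel A x y * commKernel A x z)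
      = ∫ z, ind (z ∈ Icc a b ∧ ε < |z - x| ∧ ¬ ε < |z - y|) (commKernel A x y * commKernel A x z) := fun y => conv1' _ (hmD' a b ε x y) _
  refine integrableOn_of_bound (a := a) (b := b) (M := ((L:ℝ)/ε)^2 * (b - a))
    (hmY' a b ε x) (fun y hy => hy.1) ?_ (fun y hy => ?_)
  · rw [show (fun y => ∫ z in {z : ℝ | z ∈ Icc a b ∧ ε < |z - x| ∧ ¬ ε < |z - y|}, commKernel A x y * commKernel A x z) = fun y => ∫ z, ind (z ∈ Icc a b ∧ ε < |z - x| ∧ ¬ ε < |z - y|) (commKernel A x y * commKernel A x z)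
      from funext hconv]
    refine (meas_int (f := fun p : ℝ × ℝ => ind (p.2 ∈ Icc a b ∧ ε < |p.2 - x| ∧ ¬ ε < |p.2 - p.1|) (commKernel A x p.1 * commKernel A x p.2)) (measurable_ind ?_ ?_)).aestronglyMeasurable
    · exact (measurable_snd measurableSet_Icc).inter
        ((msetP (continuous_snd.sub continuous_const) ε).inter
          (msetP' (continuous_snd.sub continuous_fst) ε))
    · exact (hKm.comp (measurable_const.prodMk measurable_fst)).mul
        (hKm.comp (measurable_const.prodMk measurable_snd))
  · refine abs_setIntegral_le hab (by positivity) (fun z hz => hz.1) (hmD' a b ε x y)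
      (fun z hz => ?_)
    rw [abs_mul, sq]
    exact mul_le_mul (abs_K_le' hA hε hy.2) (abs_K_le' hA hε hz.2.1) (abs_nonneg _)
      (by positivity)

lemma perx_split (hA : LipschitzWith L A) (hab : a ≤ b) (hε : 0 < ε) (x : ℝ) :
    (∫ y in {y : ℝ | y ∈ Icc a b ∧ ε < |y - x|}, commKernel A x y) ^ 2
      = (∫ y in {y : ℝ | y ∈ Icc a b ∧ ε < |y - x|}, ∫ z in {z : ℝ | z ∈ Icc a b ∧ ε < |z - x| ∧ ε < |z - y|}, commKernel A x y * commKernel A x z) + ∫ y in {y : ℝ | y ∈ Icc a b ∧ ε < |y - x|}, ∫ z in {z : ℝ | z ∈ Icc a b ∧ ε < |z - x| ∧ ¬ ε < |z - y|}, commKernel A x y * commKernel A x z := by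
  have hmt : ∀ y : ℝ, MeasurableSet {z : ℝ | ε < |z - y|} := fun y =>
    msetP (continuous_id.sub continuous_const) ε
  have hsplitz : ∀ y : ℝ, (∫ z in {t : ℝ | t ∈ Icc a b ∧ ε < |t - x|}, commKernel A x y * commKernel A x z) = (∫ z in {z : ℝ | z ∈ Icc a b ∧ ε < |z - x| ∧ ε < |z - y|}, commKernel A x y * commKernel A x z) + ∫ z in {z : ℝ | z ∈ Icc a b ∧ ε < |z - x| ∧ ¬ ε < |z - y|}, commKernel A x y * commKernel A x z := by
    intro y
    have hIK : IntegrableOn (fun z => commKernel A x y * commKernel A x z) {t : ℝ | t ∈ Icc a b ∧ ε < |t - x|} :=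
      (hIKz' hA hab hε x).const_mul _
    have h := integral_inter_add_diff (hmt y) hIK
    have hint : {t : ℝ | t ∈ Icc a b ∧ ε < |t - x|} ∩ {z : ℝ | ε < |z - y|} = {z : ℝ | z ∈ Icc a b ∧ ε < |z - x| ∧ ε < |z - y|} := by
      ext z
      simp only [Set.mem_inter_iff, Set.mem_setOf_eq]
      tauto
    have hdiff : {t : ℝ | t ∈ Icc a b ∧ ε < |t - x|} \ {z : ℝ | ε < |z - y|} = {z : ℝ | z ∈ Icc a b ∧ ε < |z - x| ∧ ¬ ε < |z - y|} := by
      ext z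
      simp only [Set.mem_diff, Set.mem_setOf_eq]
      tauto
    rw [hint, hdiff] at h
    exact h.symm
  calc (∫ y in {y : ℝ | y ∈ Icc a b ∧ ε < |y - x|}, commKernel A x y) ^ 2
      = (∫ y in {y : ℝ | y ∈ Icc a b ∧ ε < |y - x|}, commKernel A x y) * ∫ z in {t : ℝ | t ∈ Icc a b ∧ ε < |t - x|}, commKernel A x z := by rw [sq]
    _ = ∫ y in {y : ℝ | y ∈ Icc a b ∧ ε < |y - x|}, (commKernel A x y * ∫ z in {t : ℝ | t ∈ Icc a b ∧ ε < |t - x|}, commKernel A x z) :=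
        (integral_mul_const _ _).symm
    _ = ∫ y in {y : ℝ | y ∈ Icc a b ∧ ε < |y - x|}, ∫ z in {t : ℝ | t ∈ Icc a b ∧ ε < |t - x|}, commKernel A x y * commKernel A x z :=
        setIntegral_congr_fun (hmY' a b ε x) fun y _ => (integral_const_mul _ _).symm
    _ = ∫ y in {y : ℝ | y ∈ Icc a b ∧ ε < |y - x|}, ((∫ z in {z : ℝ | z ∈ Icc a b ∧ ε < |z - x| ∧ ε < |z - y|}, commKernel A x y * commKernel A x z) + ∫ z in {z : ℝ | z ∈ Icc a b ∧ ε < |z - x| ∧ ¬ ε < |z - y|}, commKernel A x y * commKernel A x z) :=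
        setIntegral_congr_fun (hmY' a b ε x) fun y _ => hsplitz y
    _ = (∫ y in {y : ℝ | y ∈ Icc a b ∧ ε < |y - x|}, ∫ z in {z : ℝ | z ∈ Icc a b ∧ ε < |z - x| ∧ ε < |z - y|}, commKernel A x y * commKernel A x z) + ∫ y in {y : ℝ | y ∈ Icc a b ∧ ε < |y - x|}, ∫ z in {z : ℝ | z ∈ Icc a b ∧ ε < |z - x| ∧ ¬ ε < |z - y|}, commKernel A x y * commKernel A x z :=
        integral_add (hIP' hA hab hε x) (hID' hA hab hε x)

lemma perx_diag (hA : LipschitzWith L A) (hab : a ≤ b) (hε : 0 < ε) {x : ℝ}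
    (hx : x ∈ Icc a b) :
    |∫ y in {y : ℝ | y ∈ Icc a b ∧ ε < |y - x|}, ∫ z in {z : ℝ | z ∈ Icc a b ∧ ε < |z - x| ∧ ¬ ε < |z - y|}, commKernel A x y * commKernel A x z| ≤ 4 * (L:ℝ)^2 := by
  have hKm := measurable_K hA.continuous
  have hmY := hmY' a b ε x
  have hmD := hmD' a b ε x
  have hIQ := hID' hA hab hε x
  -- integrability of the two comparison integrals
  have hB1conv : ∀ y : ℝ, (∫ z in {z : ℝ | z ∈ Icc a b ∧ ε < |z - x| ∧ ¬ ε < |z - y|}, ((y - x) ^ 2)⁻¹)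
      = ∫ z, ind (z ∈ Icc a b ∧ ε < |z - x| ∧ ¬ ε < |z - y|) (((y - x) ^ 2)⁻¹) := fun y => conv1' _ (hmD y) _
  have hvolD : ∀ y : ℝ, volume {z : ℝ | z ∈ Icc a b ∧ ε < |z - x| ∧ ¬ ε < |z - y|} < ⊤ := fun y =>
    lt_of_le_of_lt (measure_mono fun z hz => hz.1) (vol_Icc_lt_top a b)
  have hIB1 : IntegrableOn (fun y => ∫ z in {z : ℝ | z ∈ Icc a b ∧ ε < |z - x| ∧ ¬ ε < |z - y|}, ((y - x) ^ 2)⁻¹) {y : ℝ | y ∈ Icc a b ∧ ε < |y - x|} := by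
    refine integrableOn_of_bound (a := a) (b := b) (M := 2 * ε * (ε ^ 2)⁻¹) hmY
      (fun y hy => hy.1) ?_ (fun y hy => ?_)
    · rw [show (fun y => ∫ z in {z : ℝ | z ∈ Icc a b ∧ ε < |z - x| ∧ ¬ ε < |z - y|}, ((y - x) ^ 2)⁻¹)
        = fun y => ∫ z, ind (z ∈ Icc a b ∧ ε < |z - x| ∧ ¬ ε < |z - y|) (((y - x) ^ 2)⁻¹) from funext hB1conv]
      refine (meas_int (f := fun p : ℝ × ℝ => ind (p.2 ∈ Icc a b ∧ ε < |p.2 - x| ∧ ¬ ε < |p.2 - p.1|) (((p.1 - x) ^ 2)⁻¹)) (measurable_ind ?_ ?_)).aestronglyMeasurable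
      · exact (measurable_snd measurableSet_Icc).inter
          ((msetP (continuous_snd.sub continuous_const) ε).inter
            (msetP' (continuous_snd.sub continuous_fst) ε))
      · exact (((measurable_fst.sub measurable_const).pow_const 2)).inv
    · have h0 : (0:ℝ) ≤ ∫ z in {z : ℝ | z ∈ Icc a b ∧ ε < |z - x| ∧ ¬ ε < |z - y|}, ((y - x) ^ 2)⁻¹ :=
        setIntegral_nonneg (hmD y) (fun z _ => by positivity)
      rw [abs_of_nonneg h0]
      refine le_trans (sD_const_bound hε (by positivity)) ?_
      exact mul_le_mul_of_nonneg_left (inv_sq_le hε hy.2) (by positivity)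
  have hIB2 : IntegrableOn (fun y => ∫ z in {z : ℝ | z ∈ Icc a b ∧ ε < |z - x| ∧ ¬ ε < |z - y|}, ((z - x) ^ 2)⁻¹) {y : ℝ | y ∈ Icc a b ∧ ε < |y - x|} := by
    refine integrableOn_of_bound (a := a) (b := b) (M := (ε ^ 2)⁻¹ * (b - a)) hmY
      (fun y hy => hy.1) ?_ (fun y hy => ?_)
    · rw [show (fun y => ∫ z in {z : ℝ | z ∈ Icc a b ∧ ε < |z - x| ∧ ¬ ε < |z - y|}, ((z - x) ^ 2)⁻¹)
        = fun y => ∫ z, ind (z ∈ Icc a b ∧ ε < |z - x| ∧ ¬ ε < |z - y|) (((z - x) ^ 2)⁻¹) from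
        funext fun y => conv1' _ (hmD y) _]
      refine (meas_int (f := fun p : ℝ × ℝ => ind (p.2 ∈ Icc a b ∧ ε < |p.2 - x| ∧ ¬ ε < |p.2 - p.1|) (((p.2 - x) ^ 2)⁻¹)) (measurable_ind ?_ ?_)).aestronglyMeasurable
      · exact (measurable_snd measurableSet_Icc).inter
          ((msetP (continuous_snd.sub continuous_const) ε).inter
            (msetP' (continuous_snd.sub continuous_fst) ε))
      · exact (((measurable_snd.sub measurable_const).pow_const 2)).inv
    · refine abs_setIntegral_le hab (by positivity) (fun z hz => hz.1) (hmD y)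
        (fun z hz => ?_)
      rw [abs_of_nonneg (by positivity)]
      exact inv_sq_le hε hz.2.1
  -- pointwise bound
  have hpt : ∀ y ∈ {y : ℝ | y ∈ Icc a b ∧ ε < |y - x|}, |∫ z in {z : ℝ | z ∈ Icc a b ∧ ε < |z - x| ∧ ¬ ε < |z - y|}, commKernel A x y * commKernel A x z|
      ≤ (L:ℝ)^2/2 * ((∫ z in {z : ℝ | z ∈ Icc a b ∧ ε < |z - x| ∧ ¬ ε < |z - y|}, ((y - x) ^ 2)⁻¹) + ∫ z in {z : ℝ | z ∈ Icc a b ∧ ε < |z - x| ∧ ¬ ε < |z - y|}, ((z - x) ^ 2)⁻¹) := by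
    intro y hy
    have hQi : IntegrableOn (fun z => commKernel A x y * commKernel A x z) {z : ℝ | z ∈ Icc a b ∧ ε < |z - x| ∧ ¬ ε < |z - y|} :=
      IntegrableOn.mono_set ((hIKz' hA hab hε x).const_mul _) (fun z hz => ⟨hz.1, hz.2.1⟩)
    have h1 : |∫ z in {z : ℝ | z ∈ Icc a b ∧ ε < |z - x| ∧ ¬ ε < |z - y|}, commKernel A x y * commKernel A x z| ≤ ∫ z in {z : ℝ | z ∈ Icc a b ∧ ε < |z - x| ∧ ¬ ε < |z - y|}, |commKernel A x y * commKernel A x z| :=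
      norm_integral_le_integral_norm (μ := volume.restrict {z : ℝ | z ∈ Icc a b ∧ ε < |z - x| ∧ ¬ ε < |z - y|}) (fun z => commKernel A x y * commKernel A x z)
    have hIc : IntegrableOn (fun _z : ℝ => ((y - x) ^ 2)⁻¹) {z : ℝ | z ∈ Icc a b ∧ ε < |z - x| ∧ ¬ ε < |z - y|} :=
      integrableOn_const (hvolD y).ne
    have hIi : IntegrableOn (fun z => ((z - x) ^ 2)⁻¹) {z : ℝ | z ∈ Icc a b ∧ ε < |z - x| ∧ ¬ ε < |z - y|} := by
      refine integrableOn_of_bound (a := a) (b := b) (M := (ε ^ 2)⁻¹) (hmD y)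
        (fun z hz => hz.1) (((measurable_id.sub measurable_const).pow_const 2)).inv.aestronglyMeasurable
        (fun z hz => ?_)
      rw [abs_of_nonneg (by positivity)]
      exact inv_sq_le hε hz.2.1
    have h2 : ∫ z in {z : ℝ | z ∈ Icc a b ∧ ε < |z - x| ∧ ¬ ε < |z - y|}, |commKernel A x y * commKernel A x z|
        ≤ ∫ z in {z : ℝ | z ∈ Icc a b ∧ ε < |z - x| ∧ ¬ ε < |z - y|}, (L:ℝ)^2/2 * (((y - x) ^ 2)⁻¹ + ((z - x) ^ 2)⁻¹) := by
      refine setIntegral_mono_on hQi.abs ((hIc.add hIi).const_mul _) (hmD y)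
        (fun z hz => prod_bound hA hε hy.2 hz.2.1)
    have h3 : ∫ z in {z : ℝ | z ∈ Icc a b ∧ ε < |z - x| ∧ ¬ ε < |z - y|}, (L:ℝ)^2/2 * (((y - x) ^ 2)⁻¹ + ((z - x) ^ 2)⁻¹)
        = (L:ℝ)^2/2 * ((∫ z in {z : ℝ | z ∈ Icc a b ∧ ε < |z - x| ∧ ¬ ε < |z - y|}, ((y - x) ^ 2)⁻¹) + ∫ z in {z : ℝ | z ∈ Icc a b ∧ ε < |z - x| ∧ ¬ ε < |z - y|}, ((z - x) ^ 2)⁻¹) := by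
      rw [integral_const_mul, integral_add hIc hIi]
    exact h1.trans (h2.trans_eq h3)
  have h4 : |∫ y in {y : ℝ | y ∈ Icc a b ∧ ε < |y - x|}, ∫ z in {z : ℝ | z ∈ Icc a b ∧ ε < |z - x| ∧ ¬ ε < |z - y|}, commKernel A x y * commKernel A x z| ≤ ∫ y in {y : ℝ | y ∈ Icc a b ∧ ε < |y - x|}, |∫ z in {z : ℝ | z ∈ Icc a b ∧ ε < |z - x| ∧ ¬ ε < |z - y|}, commKernel A x y * commKernel A x z| :=
    norm_integral_le_integral_norm (μ := volume.restrict {y : ℝ | y ∈ Icc a b ∧ ε < |y - x|})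
      (fun y => ∫ z in {z : ℝ | z ∈ Icc a b ∧ ε < |z - x| ∧ ¬ ε < |z - y|}, commKernel A x y * commKernel A x z)
  have h5 : ∫ y in {y : ℝ | y ∈ Icc a b ∧ ε < |y - x|}, |∫ z in {z : ℝ | z ∈ Icc a b ∧ ε < |z - x| ∧ ¬ ε < |z - y|}, commKernel A x y * commKernel A x z|
      ≤ ∫ y in {y : ℝ | y ∈ Icc a b ∧ ε < |y - x|}, ((L:ℝ)^2/2 * ((∫ z in {z : ℝ | z ∈ Icc a b ∧ ε < |z - x| ∧ ¬ ε < |z - y|}, ((y - x) ^ 2)⁻¹)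
          + ∫ z in {z : ℝ | z ∈ Icc a b ∧ ε < |z - x| ∧ ¬ ε < |z - y|}, ((z - x) ^ 2)⁻¹)) :=
    setIntegral_mono_on hIQ.abs ((hIB1.add hIB2).const_mul _) hmY hpt
  have h6 : ∫ y in {y : ℝ | y ∈ Icc a b ∧ ε < |y - x|}, ((L:ℝ)^2/2 * ((∫ z in {z : ℝ | z ∈ Icc a b ∧ ε < |z - x| ∧ ¬ ε < |z - y|}, ((y - x) ^ 2)⁻¹)
        + ∫ z in {z : ℝ | z ∈ Icc a b ∧ ε < |z - x| ∧ ¬ ε < |z - y|}, ((z - x) ^ 2)⁻¹))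
      = (L:ℝ)^2/2 * ((∫ y in {y : ℝ | y ∈ Icc a b ∧ ε < |y - x|}, ∫ z in {z : ℝ | z ∈ Icc a b ∧ ε < |z - x| ∧ ¬ ε < |z - y|}, ((y - x) ^ 2)⁻¹)
        + ∫ y in {y : ℝ | y ∈ Icc a b ∧ ε < |y - x|}, ∫ z in {z : ℝ | z ∈ Icc a b ∧ ε < |z - x| ∧ ¬ ε < |z - y|}, ((z - x) ^ 2)⁻¹) := by
    rw [integral_const_mul, integral_add hIB1 hIB2]
  have htail := tail_bound hε hab hx
  have hB1le : (∫ y in {y : ℝ | y ∈ Icc a b ∧ ε < |y - x|}, ∫ z in {z : ℝ | z ∈ Icc a b ∧ ε < |z - x| ∧ ¬ ε < |z - y|}, ((y - x) ^ 2)⁻¹) ≤ 4 := by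
    have hb : ∀ y ∈ {y : ℝ | y ∈ Icc a b ∧ ε < |y - x|}, (∫ z in {z : ℝ | z ∈ Icc a b ∧ ε < |z - x| ∧ ¬ ε < |z - y|}, ((y - x) ^ 2)⁻¹) ≤ 2 * ε * ((y - x) ^ 2)⁻¹ :=
      fun y hy => sD_const_bound hε (by positivity)
    have h7 : (∫ y in {y : ℝ | y ∈ Icc a b ∧ ε < |y - x|}, ∫ z in {z : ℝ | z ∈ Icc a b ∧ ε < |z - x| ∧ ¬ ε < |z - y|}, ((y - x) ^ 2)⁻¹)
        ≤ ∫ y in {y : ℝ | y ∈ Icc a b ∧ ε < |y - x|}, 2 * ε * ((y - x) ^ 2)⁻¹ :=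
      setIntegral_mono_on hIB1 (htail.1.const_mul _) hmY hb
    have h8 : (∫ y in {y : ℝ | y ∈ Icc a b ∧ ε < |y - x|}, 2 * ε * ((y - x) ^ 2)⁻¹)
        = 2 * ε * ∫ y in {y : ℝ | y ∈ Icc a b ∧ ε < |y - x|}, ((y - x) ^ 2)⁻¹ := integral_const_mul _ _
    have h9 : 2 * ε * (∫ y in {y : ℝ | y ∈ Icc a b ∧ ε < |y - x|}, ((y - x) ^ 2)⁻¹) ≤ 2 * ε * (2 / ε) :=
      mul_le_mul_of_nonneg_left htail.2 (by positivity)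
    have h10 : 2 * ε * (2 / ε) = 4 := by field_simp; try ring
    linarith
  have hswap : (∫ y in {y : ℝ | y ∈ Icc a b ∧ ε < |y - x|}, ∫ z in {z : ℝ | z ∈ Icc a b ∧ ε < |z - x| ∧ ¬ ε < |z - y|}, ((z - x) ^ 2)⁻¹)
      = ∫ y in {y : ℝ | y ∈ Icc a b ∧ ε < |y - x|}, ∫ z in {z : ℝ | z ∈ Icc a b ∧ ε < |z - x| ∧ ¬ ε < |z - y|}, ((y - x) ^ 2)⁻¹ := by
    have e1 : (∫ y in {y : ℝ | y ∈ Icc a b ∧ ε < |y - x|}, ∫ z in {z : ℝ | z ∈ Icc a b ∧ ε < |z - x| ∧ ¬ ε < |z - y|}, ((z - x) ^ 2)⁻¹)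
        = ∫ y, ∫ z, ind ((y ∈ Icc a b ∧ ε < |y - x|) ∧ (z ∈ Icc a b ∧ ε < |z - x| ∧ ¬ ε < |z - y|)) (((z - x) ^ 2)⁻¹) :=
      conv2'' {y : ℝ | y ∈ Icc a b ∧ ε < |y - x|} (fun y => {z : ℝ | z ∈ Icc a b ∧ ε < |z - x| ∧ ¬ ε < |z - y|}) hmY hmD _
    have e2 : (∫ y in {y : ℝ | y ∈ Icc a b ∧ ε < |y - x|}, ∫ z in {z : ℝ | z ∈ Icc a b ∧ ε < |z - x| ∧ ¬ ε < |z - y|}, ((y - x) ^ 2)⁻¹)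
        = ∫ y, ∫ z, ind ((y ∈ Icc a b ∧ ε < |y - x|) ∧ (z ∈ Icc a b ∧ ε < |z - x| ∧ ¬ ε < |z - y|)) (((y - x) ^ 2)⁻¹) :=
      conv2'' {y : ℝ | y ∈ Icc a b ∧ ε < |y - x|} (fun y => {z : ℝ | z ∈ Icc a b ∧ ε < |z - x| ∧ ¬ ε < |z - y|}) hmY hmD _
    rw [e1, e2]
    have hint2 : Integrable (fun p : ℝ × ℝ =>
        ind ((p.1 ∈ Icc a b ∧ ε < |p.1 - x|) ∧ (p.2 ∈ Icc a b ∧ ε < |p.2 - x|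
          ∧ ¬ ε < |p.2 - p.1|)) (((p.2 - x) ^ 2)⁻¹)) ((volume : Measure ℝ).prod volume) := by
      refine integrable_box2 (a := a) (b := b) (M := (ε ^ 2)⁻¹) ?_ (fun p hp => ?_)
        (fun p => ?_)
      · refine (measurable_ind ?_ ?_).aestronglyMeasurable
        · exact ((measurable_fst measurableSet_Icc).inter
            (msetP (continuous_fst.sub continuous_const) ε)).inter
            ((measurable_snd measurableSet_Icc).inter
              ((msetP (continuous_snd.sub continuous_const) ε).inter
                (msetP' (continuous_snd.sub continuous_fst) ε)))
        · exact (((measurable_snd.sub measurable_const).pow_const 2)).inv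
      · rcases not_mem_prod hp with h | h
        · exact ind_neg (fun hc => h hc.1.1) _
        · exact ind_neg (fun hc => h hc.2.1) _
      · refine abs_ind_le (by positivity) (fun h => ?_)
        rw [abs_of_nonneg (by positivity)]
        exact inv_sq_le hε h.2.2.1
    have hsw := swap2 (fun y z => ind ((y ∈ Icc a b ∧ ε < |y - x|)
        ∧ (z ∈ Icc a b ∧ ε < |z - x| ∧ ¬ ε < |z - y|)) (((z - x) ^ 2)⁻¹)) hint2
    refine hsw.trans ?_
    refine int_congr fun y => int_congr fun z => ?_
    show ind ((z ∈ Icc a b ∧ ε < |z - x|) ∧ (y ∈ Icc a b ∧ ε < |y - x| ∧ ¬ ε < |y - z|))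
        (((y - x) ^ 2)⁻¹)
      = ind ((y ∈ Icc a b ∧ ε < |y - x|) ∧ (z ∈ Icc a b ∧ ε < |z - x| ∧ ¬ ε < |z - y|)) (((y - x) ^ 2)⁻¹)
    refine congrArg (fun c : Prop => ind c (((y - x) ^ 2)⁻¹)) (propext ?_)
    constructor
    · rintro ⟨⟨h1, h2⟩, h3, h4, h5⟩
      exact ⟨⟨h3, h4⟩, h1, h2, fun hc => h5 (by rwa [abs_sub_comm])⟩
    · rintro ⟨⟨h1, h2⟩, h3, h4, h5⟩
      exact ⟨⟨h3, h4⟩, h1, h2, fun hc => h5 (by rwa [abs_sub_comm])⟩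
  have hL2 : (0:ℝ) ≤ (L:ℝ)^2/2 := by positivity
  calc |∫ y in {y : ℝ | y ∈ Icc a b ∧ ε < |y - x|}, ∫ z in {z : ℝ | z ∈ Icc a b ∧ ε < |z - x| ∧ ¬ ε < |z - y|}, commKernel A x y * commKernel A x z|
      ≤ ∫ y in {y : ℝ | y ∈ Icc a b ∧ ε < |y - x|}, |∫ z in {z : ℝ | z ∈ Icc a b ∧ ε < |z - x| ∧ ¬ ε < |z - y|}, commKernel A x y * commKernel A x z| := h4
    _ ≤ (L:ℝ)^2/2 * ((∫ y in {y : ℝ | y ∈ Icc a b ∧ ε < |y - x|}, ∫ z in {z : ℝ | z ∈ Icc a b ∧ ε < |z - x| ∧ ¬ ε < |z - y|}, ((y - x) ^ 2)⁻¹)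
        + ∫ y in {y : ℝ | y ∈ Icc a b ∧ ε < |y - x|}, ∫ z in {z : ℝ | z ∈ Icc a b ∧ ε < |z - x| ∧ ¬ ε < |z - y|}, ((z - x) ^ 2)⁻¹) := h5.trans_eq h6
    _ ≤ (L:ℝ)^2/2 * (4 + 4) := by
        refine mul_le_mul_of_nonneg_left ?_ hL2
        rw [hswap]
        linarith
    _ = 4 * (L:ℝ)^2 := by ring

lemma int_sq' (hA : LipschitzWith L A) (hab : a ≤ b) (hε : 0 < ε) :
    IntegrableOn (fun x => (∫ y in {y : ℝ | y ∈ Icc a b ∧ ε < |y - x|}, commKernel A x y) ^ 2) (Icc a b) := by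
  have hKm := measurable_K hA.continuous
  have hc : ∀ x : ℝ, (∫ y in {y : ℝ | y ∈ Icc a b ∧ ε < |y - x|}, commKernel A x y)
      = ∫ y, ind (y ∈ Icc a b ∧ ε < |y - x|) (commKernel A x y) := fun x => conv1' _ (hmY' a b ε x) _
  have hm : Measurable fun x => ∫ y in {y : ℝ | y ∈ Icc a b ∧ ε < |y - x|}, commKernel A x y := by
    rw [show (fun x => ∫ y in {y : ℝ | y ∈ Icc a b ∧ ε < |y - x|}, commKernel A x y)
      = fun x => ∫ y, ind (y ∈ Icc a b ∧ ε < |y - x|) (commKernel A x y) from funext hc]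
    exact meas_int (measurable_ind ((measurable_snd measurableSet_Icc).inter
      (msetP (continuous_snd.sub continuous_fst) ε)) hKm)
  refine integrableOn_of_bound (a := a) (b := b) (M := ((L:ℝ)/ε * (b - a))^2)
    measurableSet_Icc (fun x hx => hx) (hm.pow_const 2).aestronglyMeasurable
    (fun x hx => ?_)
  have h1 : |∫ y in {y : ℝ | y ∈ Icc a b ∧ ε < |y - x|}, commKernel A x y| ≤ (L:ℝ)/ε * (b - a) :=
    abs_setIntegral_le hab (div_nonneg (NNReal.coe_nonneg L) hε.le) (fun y hy => hy.1) (hmY' a b ε x)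
      (fun y hy => abs_K_le' hA hε hy.2)
  rw [abs_pow]
  exact pow_le_pow_left₀ (abs_nonneg _) h1 2

lemma int_P2' (hA : LipschitzWith L A) (hab : a ≤ b) (hε : 0 < ε) :
    IntegrableOn (fun x => ∫ y in {y : ℝ | y ∈ Icc a b ∧ ε < |y - x|}, ∫ z in {z : ℝ | z ∈ Icc a b ∧ ε < |z - x| ∧ ε < |z - y|}, commKernel A x y * commKernel A x z) (Icc a b) := by
  have hKm := measurable_K hA.continuous
  have hc : ∀ x : ℝ, (∫ y in {y : ℝ | y ∈ Icc a b ∧ ε < |y - x|}, ∫ z in {z : ℝ | z ∈ Icc a b ∧ ε < |z - x| ∧ ε < |z - y|}, commKernel A x y * commKernel A x z)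
      = ∫ y, ∫ z, ind ((y ∈ Icc a b ∧ ε < |y - x|) ∧ (z ∈ Icc a b ∧ ε < |z - x| ∧ ε < |z - y|)) (commKernel A x y * commKernel A x z) := fun x =>
    conv2'' {y : ℝ | y ∈ Icc a b ∧ ε < |y - x|} (fun y => {z : ℝ | z ∈ Icc a b ∧ ε < |z - x| ∧ ε < |z - y|}) (hmY' a b ε x) (hmZ' a b ε x) _
  have hm : Measurable fun x => ∫ y in {y : ℝ | y ∈ Icc a b ∧ ε < |y - x|}, ∫ z in {z : ℝ | z ∈ Icc a b ∧ ε < |z - x| ∧ ε < |z - y|}, commKernel A x y * commKernel A x z := by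
    rw [show (fun x => ∫ y in {y : ℝ | y ∈ Icc a b ∧ ε < |y - x|}, ∫ z in {z : ℝ | z ∈ Icc a b ∧ ε < |z - x| ∧ ε < |z - y|}, commKernel A x y * commKernel A x z)
      = fun x => ∫ y, ∫ z, ind ((y ∈ Icc a b ∧ ε < |y - x|) ∧ (z ∈ Icc a b ∧ ε < |z - x| ∧ ε < |z - y|)) (commKernel A x y * commKernel A x z) from funext hc]
    refine meas_int (f := fun p : ℝ × ℝ => ∫ z, ind ((p.2 ∈ Icc a b ∧ ε < |p.2 - p.1|) ∧ (z ∈ Icc a b ∧ ε < |z - p.1| ∧ ε < |z - p.2|)) (commKernel A p.1 p.2 * commKernel A p.1 z)) (meas_int2 (f := fun q : (ℝ × ℝ) × ℝ => ind ((q.1.2 ∈ Icc a b ∧ ε < |q.1.2 - q.1.1|) ∧ (q.2 ∈ Icc a b ∧ ε < |q.2 - q.1.1| ∧ ε < |q.2 - q.1.2|)) (commKernel A q.1.1 q.1.2 * commKernel A q.1.1 q.2)) (measurable_ind ?_ ?_))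
    · exact (((measurable_snd.comp measurable_fst) measurableSet_Icc).inter
        (msetP ((continuous_snd.comp continuous_fst).sub
          (continuous_fst.comp continuous_fst)) ε)).inter
        ((measurable_snd measurableSet_Icc).inter
          ((msetP (continuous_snd.sub (continuous_fst.comp continuous_fst)) ε).inter
            (msetP (continuous_snd.sub (continuous_snd.comp continuous_fst)) ε)))
    · exact (hKm.comp ((measurable_fst.comp measurable_fst).prodMk
        (measurable_snd.comp measurable_fst))).mul
        (hKm.comp ((measurable_fst.comp measurable_fst).prodMk measurable_snd))
  refine integrableOn_of_bound (a := a) (b := b) (M := ((L:ℝ)/ε)^2 * (b - a) * (b - a))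
    measurableSet_Icc (fun x hx => hx) hm.aestronglyMeasurable (fun x hx => ?_)
  refine abs_setIntegral_le hab (mul_nonneg (by positivity) (sub_nonneg.mpr hab)) (fun y hy => hy.1) (hmY' a b ε x)
    (fun y hy => ?_)
  refine abs_setIntegral_le hab (by positivity) (fun z hz => hz.1) (hmZ' a b ε x y)
    (fun z hz => ?_)
  rw [abs_mul, sq]
  exact mul_le_mul (abs_K_le' hA hε hy.2) (abs_K_le' hA hε hz.2.1) (abs_nonneg _)
    (by positivity)

end PerX

end CommSym

/-- Symmetrization identity for the first commutator:
`∫_I C_{1,ε}(χ_I)² = (1/3)·∭_{S_ε} S(x,y,z) dxdydz + O(|I|)`, with error bounded by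
a constant depending only on the Lipschitz constant of `A` times `|I|`. -/
theorem commutator_symmetrization_identity :
    ∀ L : NNReal, ∃ C : ℝ, 0 < C ∧ ∀ A : ℝ → ℝ, LipschitzWith L A →
      ∀ a b : ℝ, a ≤ b → ∀ ε : ℝ, 0 < ε →
        |(∫ x in Icc a b,
            (∫ y in {y : ℝ | y ∈ Icc a b ∧ ε < |y - x|}, commKernel A x y) ^ 2) -
          (1/3) * ∫ x in Icc a b, ∫ y in {y : ℝ | y ∈ Icc a b ∧ ε < |y - x|},
            ∫ z in {z : ℝ | z ∈ Icc a b ∧ ε < |z - x| ∧ ε < |z - y|},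
              (commKernel A x y * commKernel A x z + commKernel A y x * commKernel A y z +
                commKernel A z y * commKernel A z x)|
          ≤ C * (b - a) := by
  intro L
  refine ⟨4 * (L:ℝ)^2 + 1, by positivity, ?_⟩
  intro A hA a b hab ε hε
  rw [CommSym.sym3 hA hab hε]
  have key : ∀ T J D : ℝ, T = J + D → |D| ≤ 4 * (L:ℝ)^2 * (b - a) →
      |T - 1/3 * (3 * J)| ≤ (4 * (L:ℝ)^2 + 1) * (b - a) := by
    intro T J D h1 h2
    have h3 : T - 1/3 * (3 * J) = D := by rw [h1]; ring
    rw [h3]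
    have hba : 0 ≤ b - a := sub_nonneg.mpr hab
    nlinarith [abs_nonneg D]
  refine key _ _ (∫ x in Icc a b, ∫ y in {y : ℝ | y ∈ Icc a b ∧ ε < |y - x|}, ∫ z in {z : ℝ | z ∈ Icc a b ∧ ε < |z - x| ∧ ¬ ε < |z - y|}, commKernel A x y * commKernel A x z) ?_ ?_
  · have e : (∫ x in Icc a b, (∫ y in {y : ℝ | y ∈ Icc a b ∧ ε < |y - x|}, commKernel A x y) ^ 2)
        = ∫ x in Icc a b, ((∫ y in {y : ℝ | y ∈ Icc a b ∧ ε < |y - x|}, ∫ z in {z : ℝ | z ∈ Icc a b ∧ ε < |z - x| ∧ ε < |z - y|}, commKernel A x y * commKernel A x z)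
            + ∫ y in {y : ℝ | y ∈ Icc a b ∧ ε < |y - x|}, ∫ z in {z : ℝ | z ∈ Icc a b ∧ ε < |z - x| ∧ ¬ ε < |z - y|}, commKernel A x y * commKernel A x z) :=
      setIntegral_congr_fun measurableSet_Icc fun x _ => CommSym.perx_split hA hab hε x
    rw [e]
    refine integral_add (CommSym.int_P2' hA hab hε) ?_
    have e2 : (fun x => ∫ y in {y : ℝ | y ∈ Icc a b ∧ ε < |y - x|}, ∫ z in {z : ℝ | z ∈ Icc a b ∧ ε < |z - x| ∧ ¬ ε < |z - y|}, commKernel A x y * commKernel A x z)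
        = fun x => ((∫ y in {y : ℝ | y ∈ Icc a b ∧ ε < |y - x|}, commKernel A x y) ^ 2
            - ∫ y in {y : ℝ | y ∈ Icc a b ∧ ε < |y - x|}, ∫ z in {z : ℝ | z ∈ Icc a b ∧ ε < |z - x| ∧ ε < |z - y|}, commKernel A x y * commKernel A x z) := by
      funext x
      rw [CommSym.perx_split hA hab hε x]
      ring
    rw [e2]
    exact (CommSym.int_sq' hA hab hε).sub (CommSym.int_P2' hA hab hε)
  · have h := norm_setIntegral_le_of_norm_le_const (μ := volume)
      (f := fun x => ∫ y in {y : ℝ | y ∈ Icc a b ∧ ε < |y - x|}, ∫ z in {z : ℝ | z ∈ Icc a b ∧ ε < |z - x| ∧ ¬ ε < |z - y|}, commKernel A x y * commKernel A x z)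
      (CommSym.vol_Icc_lt_top a b) (C := 4 * (L:ℝ)^2)
      (fun x hx => CommSym.perx_diag hA hab hε hx)
    rw [Real.norm_eq_abs, Real.volume_real_Icc_of_le hab] at h
    exact h
end

section
/- Let μ be a finite positive Borel measure on ℂ with linear growth μ(D(z,r)) ≤ r for all z and r. If the truncated Cauchy transforms satisfy ∫|C_ε(μ)(z)|² dμ(z) ≤ M‖μ‖ for all ε > 0, then ∭_{S_ε} 1/R(z,w,ζ)² dμ³ ≤ 6M‖μ‖ + C‖μ‖ for all ε > 0, where the symmetrization identity ∫|C_ε(μ)|² dμ = (1/6)∭_{S_ε} R⁻² dμ³ + O(‖μ‖) holds with constant depending only on the linear growth constant. -/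
set_option maxHeartbeats 1000000


open Complex MeasureTheory Metric Set

/-- Truncated Cauchy transform `C_ε(μ)(z) = ∫_{|ζ−z|>ε} dμ(ζ)/(ζ−z)`. -/
noncomputable def cauchyTrunc (μ : Measure ℂ) (ε : ℝ) (z : ℂ) : ℂ :=
  ∫ ζ in {ζ : ℂ | ε < dist ζ z}, (ζ - z)⁻¹ ∂μ

/-- Truncated triple Menger curvature integral `∭_{S_ε} 1/R(z,w,ζ)² dμ³`. -/
noncomputable def mengerTriple (μ : Measure ℂ) (ε : ℝ) : ℝ :=
  ∫ z, ∫ w in {w : ℂ | ε < dist w z}, ∫ ζ in {ζ : ℂ | ε < dist ζ z ∧ ε < dist ζ w},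
    mengerCurvature z w ζ ^ 2 ∂μ ∂μ ∂μ

set_option maxHeartbeats 1000000 in
lemma melnikov_sum (a b : ℂ) (ha : a ≠ 0) (hb : b ≠ 0) (hab : a ≠ b) :
    (a * (starRingEnd ℂ) b)⁻¹ + (b * (starRingEnd ℂ) a)⁻¹
    - (a * (starRingEnd ℂ) (b - a))⁻¹ - ((b - a) * (starRingEnd ℂ) a)⁻¹
    + (b * (starRingEnd ℂ) (b - a))⁻¹ + ((b - a) * (starRingEnd ℂ) b)⁻¹
    = ((4 * ((a * (starRingEnd ℂ) b).im) ^ 2 /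
        (normSq a * normSq b * normSq (b - a)) : ℝ) : ℂ) := by
  have h3 : b - a ≠ 0 := sub_ne_zero.mpr hab.symm
  have ca : (starRingEnd ℂ) a ≠ 0 := star_ne_zero.mpr ha
  have cb : (starRingEnd ℂ) b ≠ 0 := star_ne_zero.mpr hb
  have c3 : (starRingEnd ℂ) b - (starRingEnd ℂ) a ≠ 0 := by
    rw [← map_sub]; exact star_ne_zero.mpr h3
  have hIm2 : ((4 * ((a * (starRingEnd ℂ) b).im) ^ 2 : ℝ) : ℂ)
      = -(a * (starRingEnd ℂ) b - (starRingEnd ℂ) a * b) ^ 2 := by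
    have h := Complex.sub_conj (a * (starRingEnd ℂ) b)
    rw [map_mul, Complex.conj_conj] at h
    push_cast
    rw [h]
    push_cast
    linear_combination (4 * (((a * (starRingEnd ℂ) b).im : ℂ))^2) * Complex.I_sq
  have hNa : ((normSq a : ℝ) : ℂ) = a * (starRingEnd ℂ) a := (Complex.mul_conj a).symm
  have hNb : ((normSq b : ℝ) : ℂ) = b * (starRingEnd ℂ) b := (Complex.mul_conj b).symm
  have hNc : ((normSq (b - a) : ℝ) : ℂ) = (b - a) * (starRingEnd ℂ) (b - a) :=
    (Complex.mul_conj _).symm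
  set A' := (starRingEnd ℂ) a with hA'
  set B' := (starRingEnd ℂ) b with hB'
  have e0 : (starRingEnd ℂ) (b - a) = B' - A' := map_sub _ _ _
  set D : ℂ := a * A' * (b * B') * ((b - a) * (B' - A')) with hD
  have hD0 : D ≠ 0 := by
    apply mul_ne_zero (mul_ne_zero (mul_ne_zero ha ca) (mul_ne_zero hb cb))
    exact mul_ne_zero h3 c3
  have hN0 : (normSq a * normSq b * normSq (b - a) : ℝ) ≠ 0 := by
    have := normSq_pos.mpr ha; have := normSq_pos.mpr hb; have := normSq_pos.mpr h3
    positivity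
  have hND : ((normSq a * normSq b * normSq (b - a) : ℝ) : ℂ) = D := by
    rw [ofReal_mul, ofReal_mul, hNa, hNb, hNc, e0]
  apply mul_right_cancel₀ hD0
  have hRHS : ((4 * ((a * B').im) ^ 2 / (normSq a * normSq b * normSq (b - a)) : ℝ) : ℂ) * D
      = -(a * B' - A' * b) ^ 2 := by
    rw [← hND, ← ofReal_mul, div_mul_cancel₀ _ hN0, hIm2]
  rw [e0, hRHS]
  have e1 : (a * B')⁻¹ * D = A' * b * ((b - a) * (B' - A')) := by
    rw [show D = (a * B') * (A' * b * ((b - a) * (B' - A'))) by rw [hD]; ring]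
    exact inv_mul_cancel_left₀ (mul_ne_zero ha cb) _
  have e2 : (b * A')⁻¹ * D = a * B' * ((b - a) * (B' - A')) := by
    rw [show D = (b * A') * (a * B' * ((b - a) * (B' - A'))) by rw [hD]; ring]
    exact inv_mul_cancel_left₀ (mul_ne_zero hb ca) _
  have e3' : (a * (B' - A'))⁻¹ * D = A' * (b * B') * (b - a) := by
    rw [show D = (a * (B' - A')) * (A' * (b * B') * (b - a)) by rw [hD]; ring]
    exact inv_mul_cancel_left₀ (mul_ne_zero ha c3) _
  have e4 : ((b - a) * A')⁻¹ * D = a * (b * B') * (B' - A') := by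
    rw [show D = ((b - a) * A') * (a * (b * B') * (B' - A')) by rw [hD]; ring]
    exact inv_mul_cancel_left₀ (mul_ne_zero h3 ca) _
  have e5 : (b * (B' - A'))⁻¹ * D = a * A' * B' * (b - a) := by
    rw [show D = (b * (B' - A')) * (a * A' * B' * (b - a)) by rw [hD]; ring]
    exact inv_mul_cancel_left₀ (mul_ne_zero hb c3) _
  have e6 : ((b - a) * B')⁻¹ * D = a * A' * b * (B' - A') := by
    rw [show D = ((b - a) * B') * (a * A' * b * (B' - A')) by rw [hD]; ring]
    exact inv_mul_cancel_left₀ (mul_ne_zero h3 cb) _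
  linear_combination e1 + e2 - e3' - e4 + e5 + e6


variable {E : Type*} [NormedAddCommGroup E] [NormedSpace ℝ E]
  [MeasurableSpace E] [BorelSpace E] [SecondCountableTopology E]

/-- bounded measurable triple kernel -/
def Ker3 (μ : Measure ℂ) (K : ℂ → ℂ → ℂ → E) (B : ℝ) : Prop :=
  Measurable (fun p : ℂ × ℂ × ℂ => K p.1 p.2.1 p.2.2) ∧ ∀ z w ζ, ‖K z w ζ‖ ≤ B

lemma integrable_of_bdd {α : Type*} [MeasurableSpace α] {ν : Measure α} [IsFiniteMeasure ν]
    {f : α → E} (hf : AEStronglyMeasurable f ν) {C : ℝ}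
    (h : ∀ x, ‖f x‖ ≤ C) : Integrable f ν :=
  Integrable.mono' (integrable_const C) hf (ae_of_all _ h)

namespace Ker3

variable {μ : Measure ℂ} [IsFiniteMeasure μ] {K K' : ℂ → ℂ → ℂ → E} {B B' : ℝ}

lemma meas1 (hK : Ker3 μ K B) (z w : ℂ) : Measurable (K z w) :=
  hK.1.comp (measurable_const.prodMk (measurable_const.prodMk measurable_id))

lemma meas2 (hK : Ker3 μ K B) (z : ℂ) : Measurable (fun q : ℂ × ℂ => K z q.1 q.2) :=
  hK.1.comp (measurable_const.prodMk measurable_id)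

lemma int1 (hK : Ker3 μ K B) (z w : ℂ) : Integrable (K z w) μ :=
  integrable_of_bdd ((hK.meas1 z w).aestronglyMeasurable) (hK.2 z w)

lemma sm_inner (hK : Ker3 μ K B) (z : ℂ) :
    StronglyMeasurable (fun w => ∫ ζ, K z w ζ ∂μ) :=
  (hK.meas2 z).stronglyMeasurable.integral_prod_right'

lemma norm_inner (hK : Ker3 μ K B) (z w : ℂ) :
    ‖∫ ζ, K z w ζ ∂μ‖ ≤ B * (μ univ).toReal :=
  norm_integral_le_of_norm_le_const (ae_of_all _ (hK.2 z w))

lemma int2 (hK : Ker3 μ K B) (z : ℂ) : Integrable (fun w => ∫ ζ, K z w ζ ∂μ) μ :=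
  integrable_of_bdd (hK.sm_inner z).aestronglyMeasurable (hK.norm_inner z)

lemma sm_prod (hK : Ker3 μ K B) :
    StronglyMeasurable (fun q : ℂ × ℂ => ∫ ζ, K q.1 q.2 ζ ∂μ) := by
  have h : Measurable (fun r : (ℂ × ℂ) × ℂ => K r.1.1 r.1.2 r.2) :=
    hK.1.comp ((measurable_fst.comp measurable_fst).prodMk
      ((measurable_snd.comp measurable_fst).prodMk measurable_snd))
  exact h.stronglyMeasurable.integral_prod_right'

lemma sm_outer (hK : Ker3 μ K B) :
    StronglyMeasurable (fun z => ∫ w, ∫ ζ, K z w ζ ∂μ ∂μ) :=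
  hK.sm_prod.integral_prod_right'

lemma norm_mid (hK : Ker3 μ K B) (z : ℂ) :
    ‖∫ w, ∫ ζ, K z w ζ ∂μ ∂μ‖ ≤ B * (μ univ).toReal * (μ univ).toReal :=
  norm_integral_le_of_norm_le_const (ae_of_all _ (hK.norm_inner z))

lemma int3 (hK : Ker3 μ K B) : Integrable (fun z => ∫ w, ∫ ζ, K z w ζ ∂μ ∂μ) μ :=
  integrable_of_bdd hK.sm_outer.aestronglyMeasurable hK.norm_mid

lemma add (hK : Ker3 μ K B) (hK' : Ker3 μ K' B') :
    Ker3 μ (fun z w ζ => K z w ζ + K' z w ζ) (B + B') :=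
  ⟨hK.1.add hK'.1, fun z w ζ => (norm_add_le _ _).trans (add_le_add (hK.2 z w ζ) (hK'.2 z w ζ))⟩

lemma sub (hK : Ker3 μ K B) (hK' : Ker3 μ K' B') :
    Ker3 μ (fun z w ζ => K z w ζ - K' z w ζ) (B + B') :=
  ⟨hK.1.sub hK'.1, fun z w ζ => (norm_sub_le _ _).trans (add_le_add (hK.2 z w ζ) (hK'.2 z w ζ))⟩

lemma triple_add (hK : Ker3 μ K B) (hK' : Ker3 μ K' B') :
    ∫ z, ∫ w, ∫ ζ, (K z w ζ + K' z w ζ) ∂μ ∂μ ∂μ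
      = (∫ z, ∫ w, ∫ ζ, K z w ζ ∂μ ∂μ ∂μ) + ∫ z, ∫ w, ∫ ζ, K' z w ζ ∂μ ∂μ ∂μ := by
  have h1 : ∀ z w, ∫ ζ, (K z w ζ + K' z w ζ) ∂μ
      = (∫ ζ, K z w ζ ∂μ) + ∫ ζ, K' z w ζ ∂μ := fun z w =>
    integral_add (hK.int1 z w) (hK'.int1 z w)
  have h2 : ∀ z, ∫ w, ∫ ζ, (K z w ζ + K' z w ζ) ∂μ ∂μ
      = (∫ w, ∫ ζ, K z w ζ ∂μ ∂μ) + ∫ w, ∫ ζ, K' z w ζ ∂μ ∂μ := by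
    intro z
    rw [← integral_add (hK.int2 z) (hK'.int2 z)]
    exact integral_congr_ae (ae_of_all _ fun w => h1 z w)
  rw [← integral_add hK.int3 hK'.int3]
  exact integral_congr_ae (ae_of_all _ h2)

lemma int_prod2 (hK : Ker3 μ K B) (z : ℂ) :
    Integrable (Function.uncurry fun w ζ => K z w ζ) (μ.prod μ) :=
  integrable_of_bdd (hK.meas2 z).aestronglyMeasurable (fun q => hK.2 z q.1 q.2)

lemma swap23 (hK : Ker3 μ K B) :
    ∫ z, ∫ w, ∫ ζ, K z w ζ ∂μ ∂μ ∂μ = ∫ z, ∫ w, ∫ ζ, K z ζ w ∂μ ∂μ ∂μ :=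
  integral_congr_ae (ae_of_all _ fun z => integral_integral_swap (hK.int_prod2 z))

lemma swap12 (hK : Ker3 μ K B) :
    ∫ z, ∫ w, ∫ ζ, K z w ζ ∂μ ∂μ ∂μ = ∫ z, ∫ w, ∫ ζ, K w z ζ ∂μ ∂μ ∂μ := by
  have h : Integrable (Function.uncurry fun z w => ∫ ζ, K z w ζ ∂μ) (μ.prod μ) :=
    integrable_of_bdd hK.sm_prod.aestronglyMeasurable (fun q => hK.norm_inner q.1 q.2)
  exact integral_integral_swap h

lemma perm231 (hK : Ker3 μ K B) : Ker3 μ (fun z w ζ => K w ζ z) B :=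
  ⟨hK.1.comp (((measurable_fst.comp measurable_snd).prodMk
      ((measurable_snd.comp measurable_snd).prodMk measurable_fst))), fun z w ζ => hK.2 w ζ z⟩

lemma perm312 (hK : Ker3 μ K B) : Ker3 μ (fun z w ζ => K ζ z w) B :=
  ⟨hK.1.comp (((measurable_snd.comp measurable_snd).prodMk
      (measurable_fst.prodMk (measurable_fst.comp measurable_snd)))), fun z w ζ => hK.2 ζ z w⟩

lemma perm321 (hK : Ker3 μ K B) : Ker3 μ (fun z w ζ => K ζ w z) B :=
  ⟨hK.1.comp (((measurable_snd.comp measurable_snd).prodMk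
      ((measurable_fst.comp measurable_snd).prodMk measurable_fst))), fun z w ζ => hK.2 ζ w z⟩

lemma eq213 (hK : Ker3 μ K B) :
    ∫ z, ∫ w, ∫ ζ, K w z ζ ∂μ ∂μ ∂μ = ∫ z, ∫ w, ∫ ζ, K z w ζ ∂μ ∂μ ∂μ :=
  (hK.swap12).symm

lemma eq132 (hK : Ker3 μ K B) :
    ∫ z, ∫ w, ∫ ζ, K z ζ w ∂μ ∂μ ∂μ = ∫ z, ∫ w, ∫ ζ, K z w ζ ∂μ ∂μ ∂μ :=
  (hK.swap23).symm

lemma eq231 (hK : Ker3 μ K B) :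
    ∫ z, ∫ w, ∫ ζ, K w ζ z ∂μ ∂μ ∂μ = ∫ z, ∫ w, ∫ ζ, K z w ζ ∂μ ∂μ ∂μ := by
  rw [(hK.perm231).swap12]
  exact hK.eq132

lemma eq312 (hK : Ker3 μ K B) :
    ∫ z, ∫ w, ∫ ζ, K ζ z w ∂μ ∂μ ∂μ = ∫ z, ∫ w, ∫ ζ, K z w ζ ∂μ ∂μ ∂μ := by
  rw [(hK.perm312).swap23]
  exact hK.eq213

lemma eq321 (hK : Ker3 μ K B) :
    ∫ z, ∫ w, ∫ ζ, K ζ w z ∂μ ∂μ ∂μ = ∫ z, ∫ w, ∫ ζ, K z w ζ ∂μ ∂μ ∂μ := by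
  rw [(hK.perm321).swap12]
  exact hK.eq312

lemma norm_le {K : ℂ → ℂ → ℂ → ℂ} {e : ℂ → ℂ → ℂ → ℝ} {B Be : ℝ}
    (hK : Ker3 μ K B) (he : Ker3 μ e Be) (hpt : ∀ z w ζ, ‖K z w ζ‖ ≤ e z w ζ) :
    ‖∫ z, ∫ w, ∫ ζ, K z w ζ ∂μ ∂μ ∂μ‖ ≤ ∫ z, ∫ w, ∫ ζ, e z w ζ ∂μ ∂μ ∂μ := by
  have h1 : ∀ z w, ‖∫ ζ, K z w ζ ∂μ‖ ≤ ∫ ζ, e z w ζ ∂μ := fun z w =>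
    (norm_integral_le_integral_norm _).trans
      (integral_mono (hK.int1 z w).norm (he.int1 z w) (hpt z w))
  have h2 : ∀ z, ‖∫ w, ∫ ζ, K z w ζ ∂μ ∂μ‖ ≤ ∫ w, ∫ ζ, e z w ζ ∂μ ∂μ := fun z =>
    (norm_integral_le_integral_norm _).trans
      (integral_mono (hK.int2 z).norm (he.int2 z) (h1 z))
  exact (norm_integral_le_integral_norm _).trans
    (integral_mono hK.int3.norm he.int3 h2)

end Ker3

open Classical in
noncomputable def Fk (ε : ℝ) (z w : ℂ) : ℂ := if ε < dist w z then (w - z)⁻¹ else 0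

noncomputable def gK (ε : ℝ) (z w ζ : ℂ) : ℂ := Fk ε z w * (starRingEnd ℂ) (Fk ε z ζ)

def Scond (ε : ℝ) (z w ζ : ℂ) : Prop := ε < dist w z ∧ ε < dist ζ z ∧ ε < dist ζ w

open Classical in
noncomputable def mK (ε : ℝ) (z w ζ : ℂ) : ℂ :=
  if Scond ε z w ζ then ((w - z) * (starRingEnd ℂ) (ζ - z))⁻¹ else 0

open Classical in
noncomputable def eK (ε : ℝ) (z w ζ : ℂ) : ℝ :=
  if ε < dist w z ∧ ε < dist ζ z ∧ dist ζ w ≤ ε then (dist w z)⁻¹ * (dist ζ z)⁻¹ else 0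

open Classical in
noncomputable def qK (ε : ℝ) (z w ζ : ℂ) : ℝ :=
  if Scond ε z w ζ then mengerCurvature z w ζ ^ 2 else 0

section Kerfacts
variable {μ : Measure ℂ} [IsFiniteMeasure μ] {ε : ℝ}

lemma measurable_Fk1 (ε : ℝ) : Measurable (fun p : ℂ × ℂ × ℂ => Fk ε p.1 p.2.1) := by
  unfold Fk
  refine Measurable.ite ?_
    (((continuous_fst.comp continuous_snd).sub continuous_fst).measurable.inv)
    measurable_const
  exact (isOpen_lt continuous_const ((continuous_fst.comp continuous_snd).dist
    continuous_fst)).measurableSet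

lemma measurable_Fk2 (ε : ℝ) : Measurable (fun p : ℂ × ℂ × ℂ => Fk ε p.1 p.2.2) := by
  unfold Fk
  refine Measurable.ite ?_
    (((continuous_snd.comp continuous_snd).sub continuous_fst).measurable.inv)
    measurable_const
  exact (isOpen_lt continuous_const ((continuous_snd.comp continuous_snd).dist
    continuous_fst)).measurableSet

lemma norm_Fk_le (hε : 0 < ε) (z w : ℂ) : ‖Fk ε z w‖ ≤ ε⁻¹ := by
  unfold Fk
  split_ifs with h
  · rw [norm_inv, ← dist_eq_norm]
    exact inv_anti₀ hε h.le
  · simp [inv_nonneg.mpr hε.le]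

lemma ker_g (hε : 0 < ε) : Ker3 μ (gK ε) (ε⁻¹ * ε⁻¹) := by
  constructor
  · exact (measurable_Fk1 ε).mul
      (Complex.continuous_conj.measurable.comp (measurable_Fk2 ε))
  · intro z w ζ
    rw [gK, norm_mul]
    have h1 : ‖Fk ε z w‖ ≤ ε⁻¹ := norm_Fk_le hε z w
    have h2 : ‖(starRingEnd ℂ) (Fk ε z ζ)‖ ≤ ε⁻¹ := by
      rw [RCLike.norm_conj]; exact norm_Fk_le hε z ζ
    exact mul_le_mul h1 h2 (norm_nonneg _) (inv_nonneg.mpr hε.le)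

lemma measurableSet_Scond (ε : ℝ) :
    MeasurableSet {p : ℂ × ℂ × ℂ | Scond ε p.1 p.2.1 p.2.2} := by
  have h1 : MeasurableSet {p : ℂ × ℂ × ℂ | ε < dist p.2.1 p.1} :=
    (isOpen_lt continuous_const ((continuous_fst.comp continuous_snd).dist
      continuous_fst)).measurableSet
  have h2 : MeasurableSet {p : ℂ × ℂ × ℂ | ε < dist p.2.2 p.1} :=
    (isOpen_lt continuous_const ((continuous_snd.comp continuous_snd).dist
      continuous_fst)).measurableSet
  have h3 : MeasurableSet {p : ℂ × ℂ × ℂ | ε < dist p.2.2 p.2.1} :=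
    (isOpen_lt continuous_const ((continuous_snd.comp continuous_snd).dist
      (continuous_fst.comp continuous_snd))).measurableSet
  exact (h1.inter (h2.inter h3))

lemma ker_m (hε : 0 < ε) : Ker3 μ (mK ε) (ε⁻¹ * ε⁻¹) := by
  constructor
  · unfold mK
    refine Measurable.ite (measurableSet_Scond ε) ?_ measurable_const
    exact (((continuous_fst.comp continuous_snd).sub continuous_fst).measurable.mul
      (Complex.continuous_conj.measurable.comp
        (((continuous_snd.comp continuous_snd).sub continuous_fst).measurable))).inv
  · intro z w ζ
    rw [mK]
    split_ifs with h
    · rw [norm_inv, norm_mul, RCLike.norm_conj, mul_inv, ← dist_eq_norm, ← dist_eq_norm]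
      exact mul_le_mul (inv_anti₀ hε h.1.le) (inv_anti₀ hε h.2.1.le)
        (inv_nonneg.mpr (dist_nonneg)) (inv_nonneg.mpr hε.le)
    · simp [mul_nonneg (inv_nonneg.mpr hε.le) (inv_nonneg.mpr hε.le)]

lemma ker_e (hε : 0 < ε) : Ker3 μ (eK ε) (ε⁻¹ * ε⁻¹) := by
  constructor
  · unfold eK
    have h1 : MeasurableSet {p : ℂ × ℂ × ℂ | ε < dist p.2.1 p.1 ∧ ε < dist p.2.2 p.1
        ∧ dist p.2.2 p.2.1 ≤ ε} := by
      refine MeasurableSet.inter ?_ (MeasurableSet.inter ?_ ?_)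
      · exact (isOpen_lt continuous_const ((continuous_fst.comp continuous_snd).dist
          continuous_fst)).measurableSet
      · exact (isOpen_lt continuous_const ((continuous_snd.comp continuous_snd).dist
          continuous_fst)).measurableSet
      · exact (isClosed_le ((continuous_snd.comp continuous_snd).dist
          (continuous_fst.comp continuous_snd)) continuous_const).measurableSet
    refine Measurable.ite h1 ?_ measurable_const
    exact (((continuous_fst.comp continuous_snd).dist continuous_fst).measurable.inv.mul
      (((continuous_snd.comp continuous_snd).dist continuous_fst).measurable.inv))
  · intro z w ζ
    rw [eK]
    have h0 : (0:ℝ) ≤ ε⁻¹ * ε⁻¹ := mul_nonneg (inv_nonneg.mpr hε.le) (inv_nonneg.mpr hε.le)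
    split_ifs with h
    · rw [Real.norm_eq_abs, _root_.abs_of_nonneg (mul_nonneg (inv_nonneg.mpr dist_nonneg)
        (inv_nonneg.mpr dist_nonneg))]
      exact mul_le_mul (inv_anti₀ hε h.1.le) (inv_anti₀ hε h.2.1.le)
        (inv_nonneg.mpr dist_nonneg) (inv_nonneg.mpr hε.le)
    · simpa using h0

lemma eK_nonneg (ε : ℝ) (z w ζ : ℂ) : 0 ≤ eK ε z w ζ := by
  rw [eK]
  split_ifs with h
  · exact mul_nonneg (inv_nonneg.mpr dist_nonneg) (inv_nonneg.mpr dist_nonneg)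
  · exact le_rfl

lemma gm_pointwise (hε : 0 < ε) (z w ζ : ℂ) :
    ‖gK ε z w ζ - mK ε z w ζ‖ ≤ eK ε z w ζ := by
  rw [gK, mK, eK, Fk, Fk]
  by_cases h1 : ε < dist w z
  · by_cases h2 : ε < dist ζ z
    · by_cases h3 : ε < dist ζ w
      · have hs : Scond ε z w ζ := ⟨h1, h2, h3⟩
        have he' : ¬(ε < dist w z ∧ ε < dist ζ z ∧ dist ζ w ≤ ε) :=
          fun hc => (not_le.mpr h3) hc.2.2
        rw [if_pos h1, if_pos h2, if_pos hs, if_neg he', mul_inv, ← map_inv₀, sub_self,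
          norm_zero]
      · have hs : ¬ Scond ε z w ζ := fun hs => h3 hs.2.2
        rw [if_pos h1, if_pos h2, if_neg hs, if_pos ⟨h1, h2, not_lt.mp h3⟩, sub_zero,
          norm_mul, RCLike.norm_conj, norm_inv, norm_inv, ← dist_eq_norm, ← dist_eq_norm]
    · have hs : ¬ Scond ε z w ζ := fun hs => h2 hs.2.1
      have he' : ¬(ε < dist w z ∧ ε < dist ζ z ∧ dist ζ w ≤ ε) := fun hc => h2 hc.2.1
      rw [if_neg h2, if_neg hs, if_neg he', map_zero, mul_zero, sub_zero, norm_zero]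
  · have hs : ¬ Scond ε z w ζ := fun hs => h1 hs.1
    have he' : ¬(ε < dist w z ∧ ε < dist ζ z ∧ dist ζ w ≤ ε) := fun hc => h1 hc.1
    rw [if_neg h1, if_neg hs, if_neg he', zero_mul, sub_zero, norm_zero]

end Kerfacts
section Pointwise
variable {ε : ℝ}

lemma Scond_wzation (z w ζ : ℂ) : Scond ε w z ζ ↔ Scond ε z w ζ := by
  unfold Scond
  rw [dist_comm z w]
  tauto

lemma Scond_zζw (z w ζ : ℂ) : Scond ε z ζ w ↔ Scond ε z w ζ := by
  unfold Scond
  rw [dist_comm w ζ]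
  tauto

lemma Scond_wζz (z w ζ : ℂ) : Scond ε w ζ z ↔ Scond ε z w ζ := by
  unfold Scond
  rw [dist_comm ζ w, dist_comm z w, dist_comm z ζ]
  tauto

lemma Scond_ζzw (z w ζ : ℂ) : Scond ε ζ z w ↔ Scond ε z w ζ := by
  unfold Scond
  rw [dist_comm z ζ, dist_comm w ζ]
  tauto

lemma Scond_ζwz (z w ζ : ℂ) : Scond ε ζ w z ↔ Scond ε z w ζ := by
  unfold Scond
  rw [dist_comm w ζ, dist_comm z ζ, dist_comm z w]
  tauto

lemma mc_sq_eq (z w ζ : ℂ) :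
    mengerCurvature z w ζ ^ 2
      = 4 * (((w - z) * (starRingEnd ℂ) (ζ - z)).im) ^ 2 /
        (normSq (w - z) * normSq (ζ - z) * normSq ((ζ - z) - (w - z))) := by
  unfold mengerCurvature
  rw [div_pow]
  congr 1
  · rw [show 4 * (|((w - z) * (starRingEnd ℂ) (ζ - z)).im| / 2)
        = 2 * |((w - z) * (starRingEnd ℂ) (ζ - z)).im| by ring, mul_pow]
    rw [_root_.sq_abs]
    ring
  · rw [mul_pow, mul_pow]
    rw [Complex.dist_eq, Complex.dist_eq, Complex.dist_eq, Complex.sq_norm,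
      Complex.sq_norm, Complex.sq_norm,
      show z - w = -(w - z) by ring, normSq_neg,
      show w - ζ = -((ζ - z) - (w - z)) by ring, normSq_neg]
    ring

lemma sum6_eq (hε : 0 < ε) (z w ζ : ℂ) :
    mK ε z w ζ + mK ε z ζ w + mK ε w z ζ + mK ε w ζ z + mK ε ζ z w + mK ε ζ w z
      = ((qK ε z w ζ : ℝ) : ℂ) := by
  by_cases hs : Scond ε z w ζ
  · obtain ⟨h1, h2, h3⟩ := hs
    have hs : Scond ε z w ζ := ⟨h1, h2, h3⟩
    rw [mK, mK, mK, mK, mK, mK, qK, if_pos hs, if_pos hs,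
      if_pos ((Scond_zζw z w ζ).mpr hs), if_pos ((Scond_wzation z w ζ).mpr hs),
      if_pos ((Scond_wζz z w ζ).mpr hs), if_pos ((Scond_ζzw z w ζ).mpr hs),
      if_pos ((Scond_ζwz z w ζ).mpr hs)]
    have ha : w - z ≠ 0 := sub_ne_zero.mpr (dist_pos.mp (hε.trans h1))
    have hb : ζ - z ≠ 0 := sub_ne_zero.mpr (dist_pos.mp (hε.trans h2))
    have hab : w - z ≠ ζ - z := fun h => (dist_pos.mp (hε.trans h3))
      (by linear_combination h.symm)
    have key := melnikov_sum (w - z) (ζ - z) ha hb hab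
    have E3 : ((z - w) * (starRingEnd ℂ) (ζ - w))⁻¹
        = -((w - z) * (starRingEnd ℂ) ((ζ - z) - (w - z)))⁻¹ := by
      rw [show z - w = -(w - z) by ring, show ζ - w = (ζ - z) - (w - z) by ring,
        neg_mul, inv_neg]
    have E4 : ((ζ - w) * (starRingEnd ℂ) (z - w))⁻¹
        = -(((ζ - z) - (w - z)) * (starRingEnd ℂ) (w - z))⁻¹ := by
      rw [show z - w = -(w - z) by ring, show ζ - w = (ζ - z) - (w - z) by ring,
        map_neg, mul_neg, inv_neg]
    have E5 : ((z - ζ) * (starRingEnd ℂ) (w - ζ))⁻¹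
        = ((ζ - z) * (starRingEnd ℂ) ((ζ - z) - (w - z)))⁻¹ := by
      rw [show z - ζ = -(ζ - z) by ring, show w - ζ = -((ζ - z) - (w - z)) by ring,
        map_neg, neg_mul, mul_neg, neg_neg]
    have E6 : ((w - ζ) * (starRingEnd ℂ) (z - ζ))⁻¹
        = (((ζ - z) - (w - z)) * (starRingEnd ℂ) (ζ - z))⁻¹ := by
      rw [show z - ζ = -(ζ - z) by ring, show w - ζ = -((ζ - z) - (w - z)) by ring,
        map_neg, neg_mul, mul_neg, neg_neg]
    rw [E3, E4, E5, E6, mc_sq_eq z w ζ]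
    push_cast
    push_cast at key
    linear_combination key
  · rw [mK, mK, mK, mK, mK, mK, qK, if_neg hs, if_neg hs,
      if_neg (fun h => hs ((Scond_zζw z w ζ).mp h)),
      if_neg (fun h => hs ((Scond_wzation z w ζ).mp h)),
      if_neg (fun h => hs ((Scond_wζz z w ζ).mp h)),
      if_neg (fun h => hs ((Scond_ζzw z w ζ).mp h)),
      if_neg (fun h => hs ((Scond_ζwz z w ζ).mp h))]
    simp

end Pointwise
section ErrorEst
variable {μ : Measure ℂ} [IsFiniteMeasure μ] {ε : ℝ}

lemma ball_toReal (hgrow : ∀ (z : ℂ) (r : ℝ), 0 < r → μ (closedBall z r) ≤ ENNReal.ofReal r)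
    (x : ℂ) {r : ℝ} (hr : 0 < r) : (μ (closedBall x r)).toReal ≤ r :=
  ENNReal.toReal_le_of_le_ofReal hr.le (hgrow x r hr)

lemma inner_le_1 (hε : 0 < ε)
    (hgrow : ∀ (z : ℂ) (r : ℝ), 0 < r → μ (closedBall z r) ≤ ENNReal.ofReal r)
    (z w : ℂ) : ∫ ζ, eK ε z w ζ ∂μ ≤ ε⁻¹ := by
  have hpt : ∀ ζ, eK ε z w ζ ≤ (closedBall w ε).indicator (fun _ => ε⁻¹ * ε⁻¹) ζ := by
    intro ζ
    rw [eK]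
    split_ifs with h
    · rw [indicator_of_mem (by exact mem_closedBall.mpr h.2.2)]
      exact mul_le_mul (inv_anti₀ hε h.1.le) (inv_anti₀ hε h.2.1.le)
        (inv_nonneg.mpr dist_nonneg) (inv_nonneg.mpr hε.le)
    · exact indicator_nonneg (fun _ _ => by positivity) ζ
  calc ∫ ζ, eK ε z w ζ ∂μ
      ≤ ∫ ζ, (closedBall w ε).indicator (fun _ => ε⁻¹ * ε⁻¹) ζ ∂μ := by
        refine integral_mono ((ker_e hε).int1 z w) ?_ hpt
        exact (integrable_const _).indicator measurableSet_closedBall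
    _ = (μ (closedBall w ε)).toReal • (ε⁻¹ * ε⁻¹) := by
        rw [integral_indicator_const _ measurableSet_closedBall]
        rfl
    _ ≤ ε * (ε⁻¹ * ε⁻¹) := by
        rw [smul_eq_mul]
        exact mul_le_mul_of_nonneg_right (ball_toReal hgrow w hε) (by positivity)
    _ = ε⁻¹ := by field_simp
  
lemma inner_le_2 (hε : 0 < ε)
    (hgrow : ∀ (z : ℂ) (r : ℝ), 0 < r → μ (closedBall z r) ≤ ENNReal.ofReal r)
    (z w : ℂ) (hd : 2 * ε < dist w z) :
    ∫ ζ, eK ε z w ζ ∂μ ≤ 2 * ε * ((dist w z) ^ 2)⁻¹ := by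
  have hd0 : 0 < dist w z := lt_trans (by positivity) hd
  have hpt : ∀ ζ, eK ε z w ζ
      ≤ (closedBall w ε).indicator (fun _ => (dist w z)⁻¹ * (2 * (dist w z)⁻¹)) ζ := by
    intro ζ
    rw [eK]
    split_ifs with h
    · rw [indicator_of_mem (by exact mem_closedBall.mpr h.2.2)]
      refine mul_le_mul le_rfl ?_ (inv_nonneg.mpr dist_nonneg) (inv_nonneg.mpr dist_nonneg)
      have htri : dist w z ≤ dist ζ w + dist ζ z := by
        calc dist w z ≤ dist w ζ + dist ζ z := dist_triangle w ζ z
          _ = dist ζ w + dist ζ z := by rw [dist_comm w ζ]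
      have h2 : dist w z / 2 ≤ dist ζ z := by
        have : ε < dist w z / 2 := by linarith
        linarith [h.2.2, htri]
      calc (dist ζ z)⁻¹ ≤ (dist w z / 2)⁻¹ :=
            inv_anti₀ (by positivity) h2
        _ = 2 * (dist w z)⁻¹ := by field_simp
    · exact indicator_nonneg (fun _ _ => by positivity) ζ
  calc ∫ ζ, eK ε z w ζ ∂μ
      ≤ ∫ ζ, (closedBall w ε).indicator (fun _ => (dist w z)⁻¹ * (2 * (dist w z)⁻¹)) ζ ∂μ := by
        refine integral_mono ((ker_e hε).int1 z w) ?_ hpt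
        exact (integrable_const _).indicator measurableSet_closedBall
    _ = (μ (closedBall w ε)).toReal • ((dist w z)⁻¹ * (2 * (dist w z)⁻¹)) := by
        rw [integral_indicator_const _ measurableSet_closedBall]
        rfl
    _ ≤ ε * ((dist w z)⁻¹ * (2 * (dist w z)⁻¹)) := by
        rw [smul_eq_mul]
        exact mul_le_mul_of_nonneg_right (ball_toReal hgrow w hε) (by positivity)
    _ = 2 * ε * ((dist w z) ^ 2)⁻¹ := by
        field_simp

open Classical in
noncomputable def hfun (ε : ℝ) (z w : ℂ) : ℝ :=
  if 2 * ε < dist w z then ((dist w z) ^ 2)⁻¹ else 0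

lemma measurable_hfun (ε : ℝ) (z : ℂ) : Measurable (hfun ε z) := by
  unfold hfun
  refine Measurable.ite ?_ (((continuous_id.dist continuous_const).pow 2).measurable.inv)
    measurable_const
  exact (isOpen_lt continuous_const (continuous_id.dist continuous_const)).measurableSet

lemma dyadic_bound (hε : 0 < ε)
    (hgrow : ∀ (z : ℂ) (r : ℝ), 0 < r → μ (closedBall z r) ≤ ENNReal.ofReal r)
    (z : ℂ) : ∫ w, hfun ε z w ∂μ ≤ 2 * ε⁻¹ := by
  have hnn : ∀ w, 0 ≤ hfun ε z w := by
    intro w; unfold hfun; split_ifs <;> positivity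
  rw [integral_eq_lintegral_of_nonneg_ae (ae_of_all _ hnn)
    (measurable_hfun ε z).aestronglyMeasurable]
  have key : ∫⁻ w, ENNReal.ofReal (hfun ε z w) ∂μ ≤ ENNReal.ofReal (2 * ε⁻¹) := by
    set T : ℕ → ℂ → ENNReal := fun k w =>
      (closedBall z (2 ^ (k + 2) * ε)).indicator
        (fun _ => ENNReal.ofReal (((2 ^ (k + 1) * ε) ^ 2)⁻¹)) w with hT
    have hpt : ∀ w, ENNReal.ofReal (hfun ε z w) ≤ ∑' k, T k w := by
      intro w
      unfold hfun
      split_ifs with h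
      · set d := dist w z with hd
        have hd0 : 0 < d := lt_trans (by positivity) h
        have hex : ∃ k : ℕ, d ≤ 2 ^ (k + 2) * ε := by
          obtain ⟨n, hn⟩ := pow_unbounded_of_one_lt (d / ε) one_lt_two
          rw [div_lt_iff₀ hε] at hn
          have h2n : (2:ℝ) ^ n ≤ 2 ^ (n + 2) :=
            pow_le_pow_right₀ (by norm_num) (by omega)
          exact ⟨n, by nlinarith⟩
        set k₀ := Nat.find hex with hk₀
        have hupper : d ≤ 2 ^ (k₀ + 2) * ε := Nat.find_spec hex
        have hlower : 2 ^ (k₀ + 1) * ε < d := by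
          rcases Nat.eq_zero_or_pos k₀ with h0 | hpos
          · rw [h0]; norm_num; linarith
          · obtain ⟨m, hm⟩ := Nat.exists_eq_succ_of_ne_zero hpos.ne'
            have := Nat.find_min hex (m := m) (by omega)
            push_neg at this
            calc 2 ^ (k₀ + 1) * ε = 2 ^ (m + 2) * ε := by rw [hm]
              _ < d := this
        have hle : ENNReal.ofReal ((d ^ 2)⁻¹)
            ≤ ENNReal.ofReal (((2 ^ (k₀ + 1) * ε) ^ 2)⁻¹) := by
          apply ENNReal.ofReal_le_ofReal
          apply inv_anti₀ (by positivity)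
          exact pow_le_pow_left₀ (by positivity) hlower.le 2
        refine le_trans hle (le_trans ?_ (ENNReal.le_tsum k₀))
        rw [hT]
        simp only
        rw [indicator_of_mem (mem_closedBall.mpr hupper)]
      · rw [ENNReal.ofReal_zero]
        exact zero_le
    refine le_trans (lintegral_mono hpt) ?_
    rw [lintegral_tsum (fun k => (measurable_const.indicator
      measurableSet_closedBall).aemeasurable)]
    have hterm : ∀ k : ℕ, ∫⁻ w, T k w ∂μ ≤ ENNReal.ofReal ((2⁻¹) ^ k * ε⁻¹) := by
      intro k
      rw [hT]
      simp only
      rw [lintegral_indicator_const measurableSet_closedBall]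
      calc ENNReal.ofReal (((2 ^ (k + 1) * ε) ^ 2)⁻¹) * μ (closedBall z (2 ^ (k + 2) * ε))
          ≤ ENNReal.ofReal (((2 ^ (k + 1) * ε) ^ 2)⁻¹) * ENNReal.ofReal (2 ^ (k + 2) * ε) :=
            mul_le_mul_right (hgrow z _ (by positivity)) _
        _ = ENNReal.ofReal (((2 ^ (k + 1) * ε) ^ 2)⁻¹ * (2 ^ (k + 2) * ε)) :=
            (ENNReal.ofReal_mul (by positivity)).symm
        _ = ENNReal.ofReal ((2⁻¹) ^ k * ε⁻¹) := by
            congr 1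
            rw [inv_pow, inv_mul_eq_div, div_eq_iff (by positivity)]
            field_simp
            ring
    refine le_trans (ENNReal.tsum_le_tsum hterm) ?_
    have : ∀ k : ℕ, ENNReal.ofReal ((2⁻¹) ^ k * ε⁻¹)
        = (2⁻¹ : ENNReal) ^ k * ENNReal.ofReal ε⁻¹ := by
      intro k
      rw [ENNReal.ofReal_mul (by positivity), ENNReal.ofReal_pow (by norm_num)]
      congr 2
      rw [ENNReal.ofReal_inv_of_pos (by norm_num)]
      norm_num
    simp_rw [this]
    rw [ENNReal.tsum_mul_right, ENNReal.tsum_geometric, ENNReal.one_sub_inv_two, inv_inv,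
      ENNReal.ofReal_mul (by norm_num)]
    apply mul_le_mul_left
    rw [ENNReal.ofReal_ofNat]
  calc (∫⁻ w, ENNReal.ofReal (hfun ε z w) ∂μ).toReal
      ≤ (ENNReal.ofReal (2 * ε⁻¹)).toReal := ENNReal.toReal_mono ENNReal.ofReal_ne_top key
    _ = 2 * ε⁻¹ := ENNReal.toReal_ofReal (by positivity)

lemma mid_le (hε : 0 < ε)
    (hgrow : ∀ (z : ℂ) (r : ℝ), 0 < r → μ (closedBall z r) ≤ ENNReal.ofReal r)
    (z : ℂ) : ∫ w, ∫ ζ, eK ε z w ζ ∂μ ∂μ ≤ 6 := by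
  have hΦint1 : Integrable ((closedBall z (2 * ε)).indicator (fun _ => ε⁻¹)) μ :=
    (integrable_const _).indicator measurableSet_closedBall
  have hfunbdd : ∀ w, ‖hfun ε z w‖ ≤ ((2 * ε) ^ 2)⁻¹ := by
    intro w
    unfold hfun
    split_ifs with h
    · rw [Real.norm_eq_abs, _root_.abs_of_nonneg (by positivity)]
      apply inv_anti₀ (by positivity)
      exact pow_le_pow_left₀ (by positivity) h.le 2
    · simp; positivity
  have hΦint2 : Integrable (fun w => 2 * ε * hfun ε z w) μ :=
    (integrable_of_bdd (ν := μ) (measurable_hfun ε z).aestronglyMeasurable hfunbdd).const_mul _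
  have hmono : ∀ w, ∫ ζ, eK ε z w ζ ∂μ
      ≤ (closedBall z (2 * ε)).indicator (fun _ => ε⁻¹) w + 2 * ε * hfun ε z w := by
    intro w
    by_cases h : 2 * ε < dist w z
    · have h1 : (closedBall z (2 * ε)).indicator (fun _ => ε⁻¹) w = 0 := by
        rw [indicator_of_notMem]
        rw [mem_closedBall, not_le]
        exact h
      rw [h1, zero_add, hfun, if_pos h]
      exact inner_le_2 hε hgrow z w h
    · have h1 : (closedBall z (2 * ε)).indicator (fun _ => ε⁻¹) w = ε⁻¹ := by
        rw [indicator_of_mem]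
        rw [mem_closedBall]
        exact not_lt.mp h
      rw [h1, hfun, if_neg h, mul_zero, add_zero]
      exact inner_le_1 hε hgrow z w
  calc ∫ w, ∫ ζ, eK ε z w ζ ∂μ ∂μ
      ≤ ∫ w, ((closedBall z (2 * ε)).indicator (fun _ => ε⁻¹) w + 2 * ε * hfun ε z w) ∂μ :=
        integral_mono ((ker_e hε).int2 z) (hΦint1.add hΦint2) hmono
    _ = (μ (closedBall z (2 * ε))).toReal • ε⁻¹ + 2 * ε * ∫ w, hfun ε z w ∂μ := by
        rw [integral_add hΦint1 hΦint2, integral_indicator_const _ measurableSet_closedBall,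
          integral_const_mul]
        rfl
    _ ≤ (2 * ε) * ε⁻¹ + 2 * ε * (2 * ε⁻¹) := by
        apply add_le_add
        · rw [smul_eq_mul]
          exact mul_le_mul_of_nonneg_right (ball_toReal hgrow z (by positivity))
            (by positivity)
        · exact mul_le_mul_of_nonneg_left (dyadic_bound hε hgrow z) (by positivity)
    _ = 6 := by field_simp; ring
 
lemma error_bound (hε : 0 < ε)
    (hgrow : ∀ (z : ℂ) (r : ℝ), 0 < r → μ (closedBall z r) ≤ ENNReal.ofReal r) :
    ∫ z, ∫ w, ∫ ζ, eK ε z w ζ ∂μ ∂μ ∂μ ≤ 6 * (μ univ).toReal := by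
  calc ∫ z, ∫ w, ∫ ζ, eK ε z w ζ ∂μ ∂μ ∂μ
      ≤ ∫ _z, (6:ℝ) ∂μ := integral_mono (ker_e hε).int3 (integrable_const _)
        (fun z => mid_le hε hgrow z)
    _ = 6 * (μ univ).toReal := by rw [integral_const, smul_eq_mul, mul_comm]; rfl

end ErrorEst
namespace Ker3
variable {E : Type*} [NormedAddCommGroup E] [NormedSpace ℝ E]
  [MeasurableSpace E] [BorelSpace E] [SecondCountableTopology E]
variable {μ : Measure ℂ} [IsFiniteMeasure μ] {K K' : ℂ → ℂ → ℂ → E} {B B' : ℝ}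

lemma perm132 (hK : Ker3 μ K B) : Ker3 μ (fun z w ζ => K z ζ w) B :=
  ⟨hK.1.comp ((measurable_fst.prodMk
      ((measurable_snd.comp measurable_snd).prodMk (measurable_fst.comp measurable_snd)))),
    fun z w ζ => hK.2 z ζ w⟩

lemma perm213 (hK : Ker3 μ K B) : Ker3 μ (fun z w ζ => K w z ζ) B :=
  ⟨hK.1.comp (((measurable_fst.comp measurable_snd).prodMk
      (measurable_fst.prodMk (measurable_snd.comp measurable_snd)))),
    fun z w ζ => hK.2 w z ζ⟩

lemma triple_sub (hK : Ker3 μ K B) (hK' : Ker3 μ K' B') :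
    ∫ z, ∫ w, ∫ ζ, (K z w ζ - K' z w ζ) ∂μ ∂μ ∂μ
      = (∫ z, ∫ w, ∫ ζ, K z w ζ ∂μ ∂μ ∂μ) - ∫ z, ∫ w, ∫ ζ, K' z w ζ ∂μ ∂μ ∂μ := by
  have h1 : ∀ z w, ∫ ζ, (K z w ζ - K' z w ζ) ∂μ
      = (∫ ζ, K z w ζ ∂μ) - ∫ ζ, K' z w ζ ∂μ := fun z w =>
    integral_sub (hK.int1 z w) (hK'.int1 z w)
  have h2 : ∀ z, ∫ w, ∫ ζ, (K z w ζ - K' z w ζ) ∂μ ∂μ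
      = (∫ w, ∫ ζ, K z w ζ ∂μ ∂μ) - ∫ w, ∫ ζ, K' z w ζ ∂μ ∂μ := by
    intro z
    rw [← integral_sub (hK.int2 z) (hK'.int2 z)]
    exact integral_congr_ae (ae_of_all _ fun w => h1 z w)
  rw [← integral_sub hK.int3 hK'.int3]
  exact integral_congr_ae (ae_of_all _ h2)

end Ker3

section Assembly
variable {μ : Measure ℂ} [IsFiniteMeasure μ] {ε : ℝ}

lemma cauchy_eq (z : ℂ) : cauchyTrunc μ ε z = ∫ w, Fk ε z w ∂μ := by
  unfold cauchyTrunc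
  have hs : MeasurableSet {ζ : ℂ | ε < dist ζ z} :=
    (isOpen_lt continuous_const (continuous_id.dist continuous_const)).measurableSet
  rw [← integral_indicator hs]
  refine integral_congr_ae (ae_of_all _ fun ζ => ?_)
  rw [Set.indicator_apply, Fk]
  rfl

lemma normsq_eq (hε : 0 < ε) (z : ℂ) :
    (‖cauchyTrunc μ ε z‖ ^ 2 : ℝ) = (∫ w, ∫ ζ, gK ε z w ζ ∂μ ∂μ).re := by
  have h1 : cauchyTrunc μ ε z * (starRingEnd ℂ) (cauchyTrunc μ ε z)
      = ∫ w, ∫ ζ, gK ε z w ζ ∂μ ∂μ := by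
    rw [cauchy_eq, ← integral_conj, ← integral_mul_const]
    refine integral_congr_ae (ae_of_all _ fun w => ?_)
    dsimp only
    rw [← integral_const_mul]
    rfl
  have h2 : (cauchyTrunc μ ε z * (starRingEnd ℂ) (cauchyTrunc μ ε z)).re
      = ‖cauchyTrunc μ ε z‖ ^ 2 := by
    rw [Complex.mul_conj]
    simp [Complex.normSq_eq_norm_sq]
    norm_cast
  rw [← h2, h1]

lemma IC_eq (hε : 0 < ε) :
    ∫ z, ‖cauchyTrunc μ ε z‖ ^ 2 ∂μ = (∫ z, ∫ w, ∫ ζ, gK ε z w ζ ∂μ ∂μ ∂μ).re := by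
  have h1 : ∫ z, ‖cauchyTrunc μ ε z‖ ^ 2 ∂μ
      = ∫ z, Complex.reCLM (∫ w, ∫ ζ, gK ε z w ζ ∂μ ∂μ) ∂μ :=
    integral_congr_ae (ae_of_all _ fun z => normsq_eq hε z)
  rw [h1, ContinuousLinearMap.integral_comp_comm _ (ker_g (μ := μ) hε).int3]
  rfl

lemma MT_eq : mengerTriple μ ε = ∫ z, ∫ w, ∫ ζ, qK ε z w ζ ∂μ ∂μ ∂μ := by
  unfold mengerTriple
  refine integral_congr_ae (ae_of_all _ fun z => ?_)
  dsimp only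
  have hBmeas : ∀ w : ℂ, MeasurableSet {ζ : ℂ | ε < dist ζ z ∧ ε < dist ζ w} := by
    intro w
    exact ((isOpen_lt continuous_const (continuous_id.dist continuous_const)).inter
      (isOpen_lt continuous_const (continuous_id.dist continuous_const))).measurableSet
  have hAmeas : MeasurableSet {w : ℂ | ε < dist w z} :=
    (isOpen_lt continuous_const (continuous_id.dist continuous_const)).measurableSet
  have hinner : ∀ w : ℂ, ∫ ζ in {ζ : ℂ | ε < dist ζ z ∧ ε < dist ζ w},
      mengerCurvature z w ζ ^ 2 ∂μ
      = ∫ ζ, (if ε < dist ζ z ∧ ε < dist ζ w then mengerCurvature z w ζ ^ 2 else 0) ∂μ := by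
    intro w
    rw [← integral_indicator (hBmeas w)]
    refine integral_congr_ae (ae_of_all _ fun ζ => ?_)
    rw [Set.indicator_apply]
    rfl
  rw [← integral_indicator hAmeas]
  refine integral_congr_ae (ae_of_all _ fun w => ?_)
  rw [Set.indicator_apply]
  by_cases hw : w ∈ {w : ℂ | ε < dist w z}
  · rw [if_pos hw, hinner w]
    refine integral_congr_ae (ae_of_all _ fun ζ => ?_)
    dsimp only
    rw [qK]
    by_cases hζ : ε < dist ζ z ∧ ε < dist ζ w
    · rw [if_pos hζ, if_pos ⟨hw, hζ⟩]
    · rw [if_neg hζ, if_neg (fun hc => hζ ⟨hc.2.1, hc.2.2⟩)]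
  · rw [if_neg hw]
    have : ∀ ζ : ℂ, qK ε z w ζ = 0 := by
      intro ζ
      rw [qK, if_neg (fun hc => hw hc.1)]
    simp only [this, integral_zero]

lemma Tsum_eq (hε : 0 < ε) :
    ∫ z, ∫ w, ∫ ζ, ((qK ε z w ζ : ℝ) : ℂ) ∂μ ∂μ ∂μ
      = 6 * ∫ z, ∫ w, ∫ ζ, mK ε z w ζ ∂μ ∂μ ∂μ := by
  have hm := ker_m (μ := μ) hε
  have h1 : ∫ z, ∫ w, ∫ ζ, ((qK ε z w ζ : ℝ) : ℂ) ∂μ ∂μ ∂μ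
      = ∫ z, ∫ w, ∫ ζ, (mK ε z w ζ + mK ε z ζ w + mK ε w z ζ + mK ε w ζ z
          + mK ε ζ z w + mK ε ζ w z) ∂μ ∂μ ∂μ := by
    refine integral_congr_ae (ae_of_all _ fun z => ?_)
    refine integral_congr_ae (ae_of_all _ fun w => ?_)
    refine integral_congr_ae (ae_of_all _ fun ζ => ?_)
    dsimp only
    exact (sum6_eq hε z w ζ).symm
  rw [h1]
  have h2 := hm.perm132
  have h3 := hm.perm213
  have h4 := hm.perm231
  have h5 := hm.perm312
  have h6 := hm.perm321
  rw [Ker3.triple_add ((((hm.add h2).add h3).add h4).add h5) h6,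
    Ker3.triple_add (((hm.add h2).add h3).add h4) h5,
    Ker3.triple_add ((hm.add h2).add h3) h4,
    Ker3.triple_add (hm.add h2) h3,
    Ker3.triple_add hm h2,
    hm.eq132, hm.eq213, hm.eq231, hm.eq312, hm.eq321]
  ring

lemma main_est (hε : 0 < ε)
    (hgrow : ∀ (z : ℂ) (r : ℝ), 0 < r → μ (closedBall z r) ≤ ENNReal.ofReal r) :
    |(∫ z, ‖cauchyTrunc μ ε z‖ ^ 2 ∂μ) - (1/6) * mengerTriple μ ε|
      ≤ 6 * (μ univ).toReal := by
  have hg := ker_g (μ := μ) hε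
  have hm := ker_m (μ := μ) hε
  have he := ker_e (μ := μ) hε
  set Tg := ∫ z, ∫ w, ∫ ζ, gK ε z w ζ ∂μ ∂μ ∂μ with hTg
  set Tm := ∫ z, ∫ w, ∫ ζ, mK ε z w ζ ∂μ ∂μ ∂μ with hTm
  set Te := ∫ z, ∫ w, ∫ ζ, eK ε z w ζ ∂μ ∂μ ∂μ with hTe
  have hd : ∫ z, ∫ w, ∫ ζ, (gK ε z w ζ - mK ε z w ζ) ∂μ ∂μ ∂μ = Tg - Tm :=
    Ker3.triple_sub hg hm
  have hnorm : ‖Tg - Tm‖ ≤ Te := by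
    rw [← hd]
    exact Ker3.norm_le (hg.sub hm) he (fun z w ζ => gm_pointwise hε z w ζ)
  have hTe6 : Te ≤ 6 * (μ univ).toReal := error_bound hε hgrow
  have hMT : (mengerTriple μ ε : ℂ) = 6 * Tm := by
    rw [MT_eq]
    rw [← Tsum_eq hε]
    have : ∀ x : ℂ, ∀ f : ℂ → ℝ, (∫ a, ((f a : ℝ) : ℂ) ∂μ) = ((∫ a, f a ∂μ : ℝ) : ℂ) :=
      fun x f => integral_ofReal
    rw [show ∫ z, ∫ w, ∫ ζ, ((qK ε z w ζ : ℝ) : ℂ) ∂μ ∂μ ∂μ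
        = ((∫ z, ∫ w, ∫ ζ, qK ε z w ζ ∂μ ∂μ ∂μ : ℝ) : ℂ) from ?_]
    · refine Eq.trans ?_ integral_ofReal
      refine integral_congr_ae (ae_of_all _ fun z => ?_)
      refine Eq.trans ?_ integral_ofReal
      refine integral_congr_ae (ae_of_all _ fun w => ?_)
      exact integral_ofReal
  have hIC : ∫ z, ‖cauchyTrunc μ ε z‖ ^ 2 ∂μ = Tg.re := IC_eq hε
  have hre : (∫ z, ‖cauchyTrunc μ ε z‖ ^ 2 ∂μ) - (1/6) * mengerTriple μ ε
      = ((Tg - Tm) : ℂ).re := by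
    rw [hIC]
    have h6 : mengerTriple μ ε = (6 * Tm).re := by
      rw [← hMT]; simp
    rw [h6]
    simp [Complex.sub_re, Complex.mul_re]
    try ring
  rw [hre]
  calc |((Tg - Tm) : ℂ).re| ≤ ‖Tg - Tm‖ := Complex.abs_re_le_norm _
    _ ≤ Te := hnorm
    _ ≤ 6 * (μ univ).toReal := hTe6

end Assembly

/-- Symmetrization identity for measures with linear growth:
`∫|C_ε(μ)|² dμ = (1/6)∭_{S_ε} R⁻² dμ³ + O(‖μ‖)`; consequently, if
`∫|C_ε(μ)|² dμ ≤ M‖μ‖` for all `ε > 0`, then the Menger curvature triple integrals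
are bounded by `6M‖μ‖ + C‖μ‖`. -/
theorem symmetrization_measures :
    ∃ C : ℝ, 0 < C ∧ ∀ μ : Measure ℂ, IsFiniteMeasure μ →
      (∀ (z : ℂ) (r : ℝ), 0 < r → μ (closedBall z r) ≤ ENNReal.ofReal r) →
      (∀ ε : ℝ, 0 < ε →
        |(∫ z, ‖cauchyTrunc μ ε z‖ ^ 2 ∂μ) - (1/6) * mengerTriple μ ε| ≤
          C * (μ univ).toReal) ∧
      ∀ M : ℝ, (∀ ε : ℝ, 0 < ε → ∫ z, ‖cauchyTrunc μ ε z‖ ^ 2 ∂μ ≤ M * (μ univ).toReal) →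
        ∀ ε : ℝ, 0 < ε →
          mengerTriple μ ε ≤ 6 * M * (μ univ).toReal + 6 * C * (μ univ).toReal := by
  refine ⟨6, by norm_num, fun μ hfin hgrow => ?_⟩
  have hmain : ∀ ε : ℝ, 0 < ε →
      |(∫ z, ‖cauchyTrunc μ ε z‖ ^ 2 ∂μ) - (1/6) * mengerTriple μ ε| ≤
        6 * (μ univ).toReal := fun ε hε => main_est hε hgrow
  refine ⟨hmain, fun M hM ε hε => ?_⟩
  have h1 := hmain ε hε
  have h2 := hM ε hε
  have h3 := abs_le.mp h1
  nlinarith [h3.1, h3.2]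
end
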